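/- arXiv:2603.17600 — 8 statements merged into one kernel-verified Lean document; each statement's English description precedes it below -/
import Mathlib

section
/- If f belongs to the class S*_S of starlike functions with respect to symmetric points, then |Γ₂| − |Γ₁| ≤ 1/2, where Γ₁ = −a₂/2 and Γ₂ = −a₃/2 + 3a₂²/4 are the first two inverse logarithmic coefficients of f. -/
open Complex Metric Set Filter

private lemma mobius_normSq (a w : ℂ) :
    Complex.normSq (1 - (starRingEnd ℂ) a * w) - Complex.normSq (w - a)
      = (1 - Complex.normSq a) * (1 - Complex.normSq w) := by
  simp only [Complex.normSq_apply, Complex.sub_re, Complex.sub_im, Complex.mul_re,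
    Complex.mul_im, Complex.conj_re, Complex.conj_im, Complex.one_re, Complex.one_im]
  ring

private lemma derivTransfer {u v : ℂ → ℂ} (h : Set.EqOn u v (ball (0:ℂ) 1)) :
    Set.EqOn (deriv u) (deriv v) (ball (0:ℂ) 1) := fun _ hz =>
  ((h.eventuallyEq_of_mem (isOpen_ball.mem_nhds hz))).deriv_eq

-- Schwarz-Pick style bound on the first two coefficients of a self-map of the disk fixing 0
private lemma schwarz_two (ω : ℂ → ℂ) (hd : DifferentiableOn ℂ ω (ball (0:ℂ) 1))
    (h0 : ω 0 = 0) (hm : Set.MapsTo ω (ball (0:ℂ) 1) (ball (0:ℂ) 1)) :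
    ‖dslope ω 0 0‖ ≤ 1 ∧
    ‖deriv (dslope ω 0) 0‖ ≤ 1 - (‖dslope ω 0 0‖)^2 := by
  have h01 : (0:ℂ) ∈ ball (0:ℂ) 1 := by simp
  have hm' : Set.MapsTo ω (ball (0:ℂ) 1) (ball (ω 0) 1) := by rwa [h0]
  have φle : ∀ z ∈ ball (0:ℂ) 1, ‖dslope ω 0 z‖ ≤ 1 := by
    intro z hz
    simpa using Complex.norm_dslope_le_div_of_mapsTo_ball hd (hm'.mono_right ball_subset_closedBall) hz
  have hb₁ : ‖dslope ω 0 0‖ ≤ 1 := φle 0 h01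
  refine ⟨hb₁, ?_⟩
  set φ := dslope ω 0 with hφ
  have hφd : DifferentiableOn ℂ φ (ball (0:ℂ) 1) :=
    (differentiableOn_dslope (isOpen_ball.mem_nhds h01)).2 hd
  set b₁ := φ 0 with hb1def
  rcases lt_or_ge (‖b₁‖) 1 with hlt | hge
  · -- Schwarz–Pick via Möbius transform
    set ψ : ℂ → ℂ := fun z => (φ z - b₁) / (1 - (starRingEnd ℂ) b₁ * φ z) with hψdef
    have hden : ∀ z ∈ ball (0:ℂ) 1, (1 - (starRingEnd ℂ) b₁ * φ z) ≠ 0 := by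
      intro z hz h
      have h1 : ‖(starRingEnd ℂ) b₁ * φ z‖ < 1 := by
        rw [norm_mul, Complex.norm_conj]
        calc ‖b₁‖ * ‖φ z‖ ≤ ‖b₁‖ * 1 :=
              mul_le_mul_of_nonneg_left (φle z hz) (norm_nonneg _)
          _ < 1 := by simpa using hlt
      have : (starRingEnd ℂ) b₁ * φ z = 1 := by
        have := sub_eq_zero.mp h; exact this.symm
      rw [this] at h1; simp at h1
    have hφ0diff : DifferentiableAt ℂ φ 0 := hφd.differentiableAt (isOpen_ball.mem_nhds h01)
    have hψd : DifferentiableOn ℂ ψ (ball (0:ℂ) 1) :=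
      (hφd.sub_const b₁).div ((differentiableOn_const 1).sub (hφd.const_mul _)) hden
    have hψ0 : ψ 0 = 0 := by simp [hψdef, hb1def]
    have hψle : ∀ z ∈ ball (0:ℂ) 1, ‖ψ z‖ ≤ 1 := by
      intro z hz
      have key := mobius_normSq b₁ (φ z)
      have h1 : Complex.normSq b₁ ≤ 1 := by
        rw [← Complex.sq_norm]; nlinarith [norm_nonneg b₁]
      have h2 : Complex.normSq (φ z) ≤ 1 := by
        have hle : ‖φ z‖ ≤ 1 := φle z hz
        rw [← Complex.sq_norm]; nlinarith [norm_nonneg (φ z)]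
      have h3 : Complex.normSq (φ z - b₁) ≤ Complex.normSq (1 - (starRingEnd ℂ) b₁ * φ z) := by
        nlinarith
      have h4 : ‖φ z - b₁‖ ≤ ‖1 - (starRingEnd ℂ) b₁ * φ z‖ := by
        rw [Complex.norm_def, Complex.norm_def]; exact Real.sqrt_le_sqrt h3
      have h5 : 0 < ‖1 - (starRingEnd ℂ) b₁ * φ z‖ :=
        norm_pos_iff.mpr (hden z hz)
      show ‖_‖ ≤ 1
      rw [hψdef]
      simp only [norm_div]
      rw [div_le_one h5]
      exact h4
    have hderiv_bound : ‖deriv ψ 0‖ ≤ 1 := by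
      refine le_of_forall_pos_le_add fun ε hε => ?_
      have maps : Set.MapsTo ψ (ball (0:ℂ) 1) (ball (ψ 0) (1+ε)) := by
        intro z hz
        rw [hψ0, mem_ball, dist_zero_right]
        have := hψle z hz; linarith
      have := Complex.norm_dslope_le_div_of_mapsTo_ball hψd (maps.mono_right ball_subset_closedBall) h01
      rw [dslope_same] at this
      calc ‖deriv ψ 0‖ = ‖deriv ψ 0‖ := rfl
        _ ≤ (1+ε)/1 := this
        _ = 1 + ε := by ring
    have hnumdiff : DifferentiableAt ℂ (fun z => φ z - b₁) 0 := hφ0diff.sub_const b₁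
    have hdendiff : DifferentiableAt ℂ (fun z => 1 - (starRingEnd ℂ) b₁ * φ z) 0 :=
      (differentiableAt_const 1).sub (hφ0diff.const_mul _)
    have hd0 : (1 : ℂ) - (starRingEnd ℂ) b₁ * φ 0 = ((1 - (‖b₁‖)^2 : ℝ) : ℂ) := by
      rw [← hb1def, mul_comm, Complex.mul_conj, ← Complex.sq_norm]
      push_cast; ring
    have hd0ne : (1 : ℂ) - (starRingEnd ℂ) b₁ * φ 0 ≠ 0 := hden 0 h01
    have hψderiv : deriv ψ 0 = deriv φ 0 / (1 - (starRingEnd ℂ) b₁ * φ 0) := by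
      rw [hψdef, deriv_fun_div hnumdiff hdendiff hd0ne]
      rw [deriv_sub_const, deriv_const_sub, deriv_const_mul _ hφ0diff]
      rw [show φ 0 - b₁ = 0 from by rw [hb1def, sub_self], zero_mul, sub_zero, sq,
        mul_div_mul_right _ _ hd0ne]
    have hpos : (0:ℝ) < 1 - (‖b₁‖)^2 := by nlinarith [norm_nonneg b₁]
    have : ‖deriv ψ 0‖ = ‖deriv φ 0‖ / (1 - (‖b₁‖)^2) := by
      rw [hψderiv, norm_div, hd0]
      congr 1
      rw [Complex.norm_real, Real.norm_eq_abs, abs_of_pos hpos]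
    rw [this, div_le_one hpos] at hderiv_bound
    linarith

  · -- max modulus: φ is constant
    have heq : ‖b₁‖ = 1 := le_antisymm hb₁ hge
    have hmax : IsMaxOn (norm ∘ φ) (ball (0:ℂ) 1) 0 := by
      intro z hz
      simp only [Function.comp]
      calc ‖φ z‖ ≤ 1 := φle z hz
        _ = ‖φ 0‖ := heq.symm
    have hconst := Complex.eqOn_of_isPreconnected_of_isMaxOn_norm
      (convex_ball (0:ℂ) 1).isPreconnected isOpen_ball hφd h01 hmax
    have : deriv φ 0 = 0 := by
      have : φ =ᶠ[nhds (0:ℂ)] (fun _ => φ 0) :=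
        hconst.eventuallyEq_of_mem (isOpen_ball.mem_nhds h01)
      rw [this.deriv_eq, deriv_const]
    rw [this]
    simp [heq]

private lemma carath (p : ℂ → ℂ) (hp : AnalyticOnNhd ℂ p (ball (0:ℂ) 1))
    (hp0 : p 0 = 1) (hre : ∀ z ∈ ball (0:ℂ) 1, 0 < (p z).re) :
    ‖deriv p 0‖ ≤ 2 ∧
    ‖deriv (deriv p) 0 / 4 - (deriv p 0)^2 / 4‖
      ≤ 1 - (‖deriv p 0 / 2‖)^2 := by
  have h01 : (0:ℂ) ∈ ball (0:ℂ) 1 := by simp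
  have hne : ∀ z ∈ ball (0:ℂ) 1, p z + 1 ≠ 0 := by
    intro z hz h
    have h2 := hre z hz
    have h3 : (p z + 1).re = (p z).re + 1 := by simp
    rw [h] at h3; simp at h3; linarith
  set ω : ℂ → ℂ := fun z => (p z - 1) / (p z + 1) with hωdef
  have ωA : AnalyticOnNhd ℂ ω (ball (0:ℂ) 1) :=
    (hp.sub analyticOnNhd_const).div (hp.add analyticOnNhd_const) hne
  have ω0 : ω 0 = 0 := by simp [hωdef, hp0]
  have maps : Set.MapsTo ω (ball (0:ℂ) 1) (ball (0:ℂ) 1) := by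
    intro z hz
    rw [mem_ball, dist_zero_right]
    have hlt : Complex.normSq (p z - 1) < Complex.normSq (p z + 1) := by
      have := hre z hz
      simp only [Complex.normSq_apply, Complex.sub_re, Complex.sub_im, Complex.add_re,
        Complex.add_im, Complex.one_re, Complex.one_im]
      nlinarith
    have habs : ‖p z - 1‖ < ‖p z + 1‖ := by
      rw [Complex.norm_def, Complex.norm_def]
      exact Real.sqrt_lt_sqrt (Complex.normSq_nonneg _) hlt
    show ‖_‖ < 1
    rw [hωdef]
    simp only [norm_div]
    rw [div_lt_one (norm_pos_iff.mpr (hne z hz))]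
    exact habs
  -- first derivative identity
  have pd : ∀ z ∈ ball (0:ℂ) 1, DifferentiableAt ℂ p z :=
    fun z hz => (hp z hz).differentiableAt
  have ωd : ∀ z ∈ ball (0:ℂ) 1, DifferentiableAt ℂ ω z :=
    fun z hz => (ωA z hz).differentiableAt
  have pd' : ∀ z ∈ ball (0:ℂ) 1, DifferentiableAt ℂ (deriv p) z :=
    fun z hz => (hp.deriv z hz).differentiableAt
  have ωd' : ∀ z ∈ ball (0:ℂ) 1, DifferentiableAt ℂ (deriv ω) z :=
    fun z hz => (ωA.deriv z hz).differentiableAt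
  have hId : Set.EqOn (fun z => ω z * (p z + 1)) (fun z => p z - 1) (ball (0:ℂ) 1) :=
    fun z hz => div_mul_cancel₀ _ (hne z hz)
  have H1 : ∀ z ∈ ball (0:ℂ) 1,
      deriv ω z * (p z + 1) + ω z * deriv p z = deriv p z := by
    intro z hz
    have := derivTransfer hId hz
    rwa [deriv_fun_mul (ωd z hz) ((pd z hz).add_const 1), deriv_add_const,
      deriv_sub_const] at this
  have H2 : deriv (deriv ω) 0 * 2 + 2 * (deriv ω 0 * deriv p 0) = deriv (deriv p) 0 := by
    have E2 := derivTransfer (fun z hz => H1 z hz) h01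
    rw [deriv_fun_add ((ωd' 0 h01).fun_mul ((pd 0 h01).add_const 1))
        ((ωd 0 h01).fun_mul (pd' 0 h01)),
      deriv_fun_mul (ωd' 0 h01) ((pd 0 h01).add_const 1), deriv_add_const,
      deriv_fun_mul (ωd 0 h01) (pd' 0 h01), ω0, hp0] at E2
    rw [← E2]; ring
  have Hb1 : deriv ω 0 = deriv p 0 / 2 := by
    have := H1 0 h01
    rw [ω0, hp0] at this
    simp at this
    field_simp
    linear_combination this
  -- the Schwarz function coefficients
  set φ : ℂ → ℂ := dslope ω 0 with hφdef
  have φdOn : DifferentiableOn ℂ φ (ball (0:ℂ) 1) :=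
    (differentiableOn_dslope (isOpen_ball.mem_nhds h01)).2 ωA.differentiableOn
  have φA : AnalyticOnNhd ℂ φ (ball (0:ℂ) 1) := φdOn.analyticOnNhd isOpen_ball
  have φd : ∀ z ∈ ball (0:ℂ) 1, DifferentiableAt ℂ φ z :=
    fun z hz => (φA z hz).differentiableAt
  have φd' : ∀ z ∈ ball (0:ℂ) 1, DifferentiableAt ℂ (deriv φ) z :=
    fun z hz => (φA.deriv z hz).differentiableAt
  have zφ : Set.EqOn (fun z => z * φ z) ω (ball (0:ℂ) 1) := by
    intro z hz
    rcases eq_or_ne z 0 with rfl | hz0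
    · simp [hφdef, ω0]
    · rw [hφdef]
      simp only
      rw [dslope_of_ne _ hz0, slope_def_field, ω0]
      field_simp
      ring
  have H3 : ∀ z ∈ ball (0:ℂ) 1, φ z + z * deriv φ z = deriv ω z := by
    intro z hz
    have := derivTransfer zφ hz
    rwa [deriv_fun_mul differentiableAt_fun_id (φd z hz), deriv_id'', one_mul] at this
  have H4 : 2 * deriv φ 0 = deriv (deriv ω) 0 := by
    have E4 := derivTransfer (fun z hz => H3 z hz) h01
    rw [deriv_fun_add (φd 0 h01) (differentiableAt_fun_id.fun_mul (φd' 0 h01)),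
      deriv_fun_mul differentiableAt_fun_id (φd' 0 h01), deriv_id'', one_mul] at E4
    rw [← E4]; ring
  have hφ0 : φ 0 = deriv p 0 / 2 := by rw [hφdef, dslope_same, Hb1]
  -- Schwarz bounds
  obtain ⟨S1, S2⟩ := schwarz_two ω ωA.differentiableOn ω0 maps
  rw [← hφdef] at S1 S2
  constructor
  · rw [hφ0] at S1
    rw [norm_div] at S1
    simp only [Complex.norm_two] at S1
    calc ‖deriv p 0‖ = ‖deriv p 0‖ / 2 * 2 := by ring
      _ ≤ 1 * 2 := by nlinarith
      _ = 2 := by ring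
  · have hb2 : deriv φ 0 = deriv (deriv p) 0 / 4 - (deriv p 0)^2 / 4 := by
      have := H2
      rw [Hb1] at this
      field_simp at this ⊢
      linear_combination 2 * H4 + this
    rw [← hb2, ← hφ0]
    exact S2


/-- If `f` belongs to the class `S*_S` of starlike functions with respect to symmetric
points, then `|Γ₂| - |Γ₁| ≤ 1/2`, where `Γ₁ = -a₂/2` and `Γ₂ = -a₃/2 + 3a₂²/4` are the
first two inverse logarithmic coefficients of `f`. -/
theorem abs_Gamma2_sub_abs_Gamma1_le_of_starlike_symmetric
    (f : ℂ → ℂ)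
    (hf : DifferentiableOn ℂ f (ball (0 : ℂ) 1))
    (hf0 : f 0 = 0) (hf1 : deriv f 0 = 1)
    (hinj : Set.InjOn f (ball (0 : ℂ) 1))
    (hstar : ∀ z ∈ ball (0 : ℂ) 1, z ≠ 0 →
      f z ≠ f (-z) ∧ 0 < (z * deriv f z / (f z - f (-z))).re)
    (a₂ a₃ Γ₁ Γ₂ : ℂ)
    (ha₂ : a₂ = iteratedDeriv 2 f 0 / 2)
    (ha₃ : a₃ = iteratedDeriv 3 f 0 / 6)
    (hΓ₁ : Γ₁ = -a₂ / 2)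
    (hΓ₂ : Γ₂ = -a₃ / 2 + 3 * a₂ ^ 2 / 4) :
    ‖Γ₂‖ - ‖Γ₁‖ ≤ 1 / 2 := by
  have h01 : (0:ℂ) ∈ ball (0:ℂ) 1 := by simp
  have hfA : AnalyticOnNhd ℂ f (ball (0:ℂ) 1) := hf.analyticOnNhd isOpen_ball
  have negmem : ∀ z ∈ ball (0:ℂ) 1, -z ∈ ball (0:ℂ) 1 := by
    intro z hz; simpa [mem_ball] using hz
  have hfnA : AnalyticOnNhd ℂ (fun z => f (-z)) (ball (0:ℂ) 1) := by
    have : DifferentiableOn ℂ (fun z => f (-z)) (ball (0:ℂ) 1) :=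
      DifferentiableOn.comp hf (differentiable_neg.differentiableOn) negmem
    exact this.analyticOnNhd isOpen_ball
  set g : ℂ → ℂ := fun z => (f z - f (-z)) / 2 with hgdef
  have gA : AnalyticOnNhd ℂ g (ball (0:ℂ) 1) :=
    (hfA.sub hfnA).div analyticOnNhd_const (fun z _ => two_ne_zero)
  have g0 : g 0 = 0 := by simp [hgdef]
  have fd : ∀ z ∈ ball (0:ℂ) 1, DifferentiableAt ℂ f z :=
    fun z hz => (hfA z hz).differentiableAt
  have fd1 : ∀ z ∈ ball (0:ℂ) 1, DifferentiableAt ℂ (deriv f) z :=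
    fun z hz => (hfA.deriv z hz).differentiableAt
  have fd2 : ∀ z ∈ ball (0:ℂ) 1, DifferentiableAt ℂ (deriv (deriv f)) z :=
    fun z hz => ((hfA.deriv).deriv z hz).differentiableAt
  -- first derivative of g
  have gd1 : Set.EqOn (deriv g) (fun z => (deriv f z + deriv f (-z))/2) (ball (0:ℂ) 1) := by
    intro z hz
    have hdn : DifferentiableAt ℂ (fun w => f (-w)) z :=
      (fd (-z) (negmem z hz)).comp z differentiable_neg.differentiableAt
    rw [hgdef]
    simp only
    rw [deriv_div_const, deriv_fun_sub (fd z hz) hdn, deriv_comp_neg]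
    ring
  have gd2 : Set.EqOn (deriv (deriv g))
      (fun z => (deriv (deriv f) z - deriv (deriv f) (-z))/2) (ball (0:ℂ) 1) := by
    intro z hz
    have hdn : DifferentiableAt ℂ (fun w => deriv f (-w)) z :=
      (fd1 (-z) (negmem z hz)).comp z differentiable_neg.differentiableAt
    rw [derivTransfer gd1 hz, deriv_div_const, deriv_fun_add (fd1 z hz) hdn, deriv_comp_neg]
    ring
  have gd3 : deriv (deriv (deriv g)) 0 = deriv (deriv (deriv f)) 0 := by
    have hdn : DifferentiableAt ℂ (fun w => deriv (deriv f) (-w)) 0 :=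
      (fd2 (-0) (negmem 0 h01)).comp 0 differentiable_neg.differentiableAt
    rw [derivTransfer gd2 h01, deriv_div_const, deriv_fun_sub (fd2 0 h01) hdn, deriv_comp_neg]
    simp
  have gd1_0 : deriv g 0 = 1 := by
    have := gd1 h01; rw [this]; simp [hf1]
  have gd2_0 : deriv (deriv g) 0 = 0 := by
    have := gd2 h01; rw [this]; simp
  -- h = dslope g 0
  set h : ℂ → ℂ := dslope g 0 with hhdef
  have hA : AnalyticOnNhd ℂ h (ball (0:ℂ) 1) :=
    ((differentiableOn_dslope (isOpen_ball.mem_nhds h01)).2 gA.differentiableOn).analyticOnNhd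
      isOpen_ball
  have hd : ∀ z ∈ ball (0:ℂ) 1, DifferentiableAt ℂ h z :=
    fun z hz => (hA z hz).differentiableAt
  have hd1 : ∀ z ∈ ball (0:ℂ) 1, DifferentiableAt ℂ (deriv h) z :=
    fun z hz => (hA.deriv z hz).differentiableAt
  have hd2 : ∀ z ∈ ball (0:ℂ) 1, DifferentiableAt ℂ (deriv (deriv h)) z :=
    fun z hz => ((hA.deriv).deriv z hz).differentiableAt
  have h0 : h 0 = 1 := by rw [hhdef, dslope_same, gd1_0]
  have zh : Set.EqOn (fun z => z * h z) g (ball (0:ℂ) 1) := by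
    intro z hz
    rcases eq_or_ne z 0 with rfl | hz0
    · simp [g0]
    · rw [hhdef]
      simp only
      rw [dslope_of_ne _ hz0, slope_def_field, g0]
      field_simp
      ring
  have K1 : ∀ z ∈ ball (0:ℂ) 1, h z + z * deriv h z = deriv g z := by
    intro z hz
    have := derivTransfer zh hz
    rwa [deriv_fun_mul differentiableAt_fun_id (hd z hz), deriv_id'', one_mul] at this
  have K2 : ∀ z ∈ ball (0:ℂ) 1,
      2 * deriv h z + z * deriv (deriv h) z = deriv (deriv g) z := by
    intro z hz
    have E := derivTransfer (fun z hz => K1 z hz) hz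
    rw [deriv_fun_add (hd z hz) (differentiableAt_fun_id.fun_mul (hd1 z hz)),
      deriv_fun_mul differentiableAt_fun_id (hd1 z hz), deriv_id'', one_mul] at E
    rw [← E]; ring
  have hd1_0 : deriv h 0 = 0 := by
    have := K2 0 h01
    rw [gd2_0] at this
    simp at this
    simpa using this
  have hd2_0 : 3 * deriv (deriv h) 0 = deriv (deriv (deriv f)) 0 := by
    have E := derivTransfer (fun z hz => K2 z hz) h01
    rw [deriv_fun_add ((differentiableAt_const 2).fun_mul (hd1 0 h01))
        (differentiableAt_fun_id.fun_mul (hd2 0 h01)),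
      deriv_const_mul _ (hd1 0 h01),
      deriv_fun_mul differentiableAt_fun_id (hd2 0 h01), deriv_id'', one_mul,
      derivTransfer gd2 h01] at E
    have E2 : 2 * deriv (deriv h) 0 + deriv (deriv h) 0 =
        deriv (fun z => (deriv (deriv f) z - deriv (deriv f) (-z)) / 2) 0 := by
      rw [← E]; ring
    have hdn : DifferentiableAt ℂ (fun w => deriv (deriv f) (-w)) 0 :=
      (fd2 (-0) (negmem 0 h01)).comp 0 differentiable_neg.differentiableAt
    rw [deriv_div_const, deriv_fun_sub (fd2 0 h01) hdn, deriv_comp_neg] at E2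
    simp only [neg_zero] at E2
    linear_combination E2
  have hne : ∀ z ∈ ball (0:ℂ) 1, h z ≠ 0 := by
    intro z hz hzero
    rcases eq_or_ne z 0 with rfl | hz0
    · rw [h0] at hzero; exact one_ne_zero hzero
    · have hgz : g z ≠ 0 := by
        rw [hgdef]
        exact div_ne_zero (sub_ne_zero.mpr (hstar z hz hz0).1) two_ne_zero
      have := zh hz
      simp only [hzero, mul_zero] at this
      exact hgz this.symm
  -- p = f'/h
  set p : ℂ → ℂ := fun z => deriv f z / h z with hpdef
  have pA : AnalyticOnNhd ℂ p (ball (0:ℂ) 1) := hfA.deriv.div hA hne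
  have pdd : ∀ z ∈ ball (0:ℂ) 1, DifferentiableAt ℂ p z :=
    fun z hz => (pA z hz).differentiableAt
  have pdd1 : ∀ z ∈ ball (0:ℂ) 1, DifferentiableAt ℂ (deriv p) z :=
    fun z hz => (pA.deriv z hz).differentiableAt
  have p0 : p 0 = 1 := by rw [hpdef]; simp [hf1, h0]
  have ph : Set.EqOn (fun z => p z * h z) (deriv f) (ball (0:ℂ) 1) := by
    intro z hz
    exact div_mul_cancel₀ _ (hne z hz)
  have P1 : ∀ z ∈ ball (0:ℂ) 1,
      deriv p z * h z + p z * deriv h z = deriv (deriv f) z := by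
    intro z hz
    have := derivTransfer ph hz
    rwa [deriv_fun_mul (pdd z hz) (hd z hz)] at this
  have P1_0 : deriv p 0 = deriv (deriv f) 0 := by
    have := P1 0 h01
    rw [h0, hd1_0, p0] at this
    simpa using this
  have P2_0 : deriv (deriv p) 0 = 2 * deriv (deriv (deriv f)) 0 / 3 := by
    have E := derivTransfer (fun z hz => P1 z hz) h01
    rw [deriv_fun_add ((pdd1 0 h01).fun_mul (hd 0 h01)) ((pdd 0 h01).fun_mul (hd1 0 h01)),
      deriv_fun_mul (pdd1 0 h01) (hd 0 h01),
      deriv_fun_mul (pdd 0 h01) (hd1 0 h01), h0, hd1_0, p0] at E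
    have e3 := hd2_0
    field_simp
    linear_combination 3 * E - e3
  -- positivity of Re p
  have pre : ∀ z ∈ ball (0:ℂ) 1, 0 < (p z).re := by
    intro z hz
    rcases eq_or_ne z 0 with rfl | hz0
    · rw [p0]; simp
    · have hsub : f z - f (-z) ≠ 0 := sub_ne_zero.mpr (hstar z hz hz0).1
      have hhz : h z = (f z - f (-z)) / (2 * z) := by
        have h1 := zh hz
        simp only at h1
        rw [eq_div_iff (by simp [hz0] : (2:ℂ) * z ≠ 0)]
        rw [hgdef] at h1
        simp only at h1
        field_simp at h1 ⊢
        linear_combination h1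
      have hpz : p z = 2 * (z * deriv f z / (f z - f (-z))) := by
        rw [hpdef]
        simp only
        rw [hhz]
        field_simp
      rw [hpz]
      have : ((2:ℂ) * (z * deriv f z / (f z - f (-z)))).re
          = 2 * (z * deriv f z / (f z - f (-z))).re := by
        simp [Complex.mul_re]
      rw [this]
      linarith [(hstar z hz hz0).2]
  -- apply caratheodory bound
  obtain ⟨C1, C2⟩ := carath p pA p0 pre
  -- convert to a₂, a₃
  have hit2 : iteratedDeriv 2 f 0 = deriv (deriv f) 0 := by
    rw [show (2:ℕ) = 1+1 from rfl, iteratedDeriv_succ, iteratedDeriv_one]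
  have hit3 : iteratedDeriv 3 f 0 = deriv (deriv (deriv f)) 0 := by
    rw [show (3:ℕ) = 2+1 from rfl, iteratedDeriv_succ, show (2:ℕ) = 1+1 from rfl,
      iteratedDeriv_succ, iteratedDeriv_one]
  have ea2 : deriv p 0 = 2 * a₂ := by
    rw [P1_0, ha₂, hit2]; ring
  have ea3 : deriv (deriv p) 0 = 4 * a₃ := by
    rw [P2_0, ha₃, hit3]; ring
  have C1' : ‖a₂‖ ≤ 1 := by
    rw [ea2] at C1
    rw [norm_mul] at C1
    simp only [Complex.norm_two] at C1
    linarith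
  have C2' : ‖a₃ - a₂^2‖ ≤ 1 - (‖a₂‖)^2 := by
    rw [ea2, ea3] at C2
    have e1 : (4:ℂ) * a₃ / 4 - (2*a₂)^2/4 = a₃ - a₂^2 := by ring
    have e2 : (2:ℂ) * a₂ / 2 = a₂ := by ring
    rw [e1, e2] at C2
    exact C2
  -- final numeric estimate
  have hG1 : ‖Γ₁‖ = ‖a₂‖ / 2 := by
    rw [hΓ₁]
    rw [norm_div, norm_neg]
    simp [Complex.norm_two]
  have hG2 : ‖Γ₂‖ ≤ ‖a₃ - a₂^2‖ / 2 + (‖a₂‖)^2 / 4 := by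
    have : Γ₂ = -(a₃ - a₂^2)/2 + a₂^2/4 := by rw [hΓ₂]; ring
    rw [this]
    calc ‖-(a₃ - a₂^2)/2 + a₂^2/4‖
        ≤ ‖-(a₃ - a₂^2)/2‖ + ‖a₂^2/4‖ := norm_add_le _ _
      _ = ‖a₃ - a₂^2‖ / 2 + (‖a₂‖)^2 / 4 := by
          rw [norm_div, norm_div, norm_neg, norm_pow]
          norm_num
  have ht : 0 ≤ ‖a₂‖ := norm_nonneg _
  rw [hG1]
  nlinarith [hG2, C2', ht]
end

section
/- If f belongs to the class K_S of convex functions with respect to symmetric points, then |Γ₂| − |Γ₁| ≤ 1/6, where Γ₁ = −a₂/2 and Γ₂ = −a₃/2 + 3a₂²/4 are the first two inverse logarithmic coefficients of f. -/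
open Complex Metric Set

lemma iteratedDeriv_two' (g : ℂ → ℂ) (x : ℂ) : iteratedDeriv 2 g x = deriv (deriv g) x := by
  rw [show (2:ℕ) = 1+1 from rfl, iteratedDeriv_succ, iteratedDeriv_one]

lemma iteratedDeriv_three' (g : ℂ → ℂ) (x : ℂ) :
    iteratedDeriv 3 g x = deriv (deriv (deriv g)) x := by
  rw [show (3:ℕ) = 2+1 from rfl, iteratedDeriv_succ]
  congr 1
  funext y
  exact iteratedDeriv_two' g y

lemma hasDerivAt_comb {G1 G2 : ℂ → ℂ} {z d1 d1n d2 : ℂ} (α β : ℂ)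
    (h1 : HasDerivAt G1 d1 z) (h1n : HasDerivAt G1 d1n (-z)) (h2 : HasDerivAt G2 d2 z) :
    HasDerivAt (fun w => α * G1 w + β * G1 (-w) + 2*w*G2 w)
      (α*d1 - β*d1n + (2*G2 z + 2*z*d2)) z := by
  have hneg : HasDerivAt (fun w : ℂ => G1 (-w)) (-d1n) z := by
    simpa [Function.comp_def] using h1n.comp z (hasDerivAt_neg z)
  have hprod : HasDerivAt (fun w : ℂ => 2*w*G2 w) (2*G2 z + 2*z*d2) z := by
    have := ((hasDerivAt_id z).const_mul (2:ℂ)).mul h2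
    simp only [id_eq] at this
    refine HasDerivAt.congr_deriv this ?_
    ring
  have := ((h1.const_mul α).add (hneg.const_mul β)).add hprod
  refine HasDerivAt.congr_deriv this ?_
  ring


lemma schwarz_pick_zero (g : ℂ → ℂ) (hd : DifferentiableOn ℂ g (ball 0 1))
    (hle : ∀ z ∈ ball (0:ℂ) 1, ‖g z‖ ≤ 1) :
    ‖deriv g 0‖ ≤ 1 - ‖g 0‖ ^ 2 := by
  have hb0 : (0:ℂ) ∈ ball (0:ℂ) 1 := mem_ball_self one_pos
  by_cases hex : ∃ z ∈ ball (0:ℂ) 1, ‖g z‖ = 1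
  · obtain ⟨z, hz, h1⟩ := hex
    have hmax : IsMaxOn (norm ∘ g) (ball 0 1) z := by
      intro w hw
      simp only [Function.comp_apply, h1]
      exact hle w hw
    have heq := Complex.eqOn_of_isPreconnected_of_isMaxOn_norm
      (convex_ball (0:ℂ) 1).isPreconnected isOpen_ball hd hz hmax
    have hconst : deriv g 0 = 0 := by
      have hev : g =ᶠ[nhds 0] fun _ => g z :=
        Filter.eventuallyEq_of_mem (isOpen_ball.mem_nhds hb0) fun w hw => heq hw
      rw [hev.deriv_eq, deriv_const]
    have hg0 : ‖g 0‖ = 1 := by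
      have := heq hb0
      simp only [Function.const_apply] at this
      rw [this, h1]
    simp [hconst, hg0]
  · push_neg at hex
    have hlt : ∀ z ∈ ball (0:ℂ) 1, ‖g z‖ < 1 :=
      fun z hz => lt_of_le_of_ne (hle z hz) (hex z hz)
    set a := g 0 with ha
    have ha1 : ‖a‖ < 1 := hlt 0 hb0
    have hden : ∀ w : ℂ, ‖w‖ < 1 → (1:ℂ) - (starRingEnd ℂ) a * w ≠ 0 := by
      intro w hw h0
      have h1 : (starRingEnd ℂ) a * w = 1 := by
        have := sub_eq_zero.mp h0; exact this.symm
      have h2 : ‖a‖ * ‖w‖ = 1 := by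
        have := congrArg (‖·‖) h1
        rwa [norm_mul, Complex.norm_conj, norm_one] at this
      nlinarith [norm_nonneg a, norm_nonneg w]
    have key : ∀ w : ℂ, ‖w‖ < 1 →
        ‖(w - a) / (1 - (starRingEnd ℂ) a * w)‖ < 1 := by
      intro w hw
      have hd0 := hden w hw
      rw [norm_div, div_lt_one (norm_pos_iff.mpr hd0)]
      have e1 : Complex.normSq (1 - (starRingEnd ℂ) a * w) - Complex.normSq (w - a)
          = (1 - Complex.normSq a) * (1 - Complex.normSq w) := by
        simp only [Complex.normSq_apply, Complex.sub_re, Complex.sub_im, Complex.mul_re,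
          Complex.mul_im, Complex.one_re, Complex.one_im, Complex.conj_re, Complex.conj_im]
        ring
      have hna : Complex.normSq a < 1 := by
        rw [← Complex.sq_norm]; nlinarith [norm_nonneg a]
      have hnw : Complex.normSq w < 1 := by
        rw [← Complex.sq_norm]; nlinarith [norm_nonneg w]
      have h2 : Complex.normSq (w - a) < Complex.normSq (1 - (starRingEnd ℂ) a * w) := by
        nlinarith
      rw [Complex.norm_def, Complex.norm_def]
      exact Real.sqrt_lt_sqrt (Complex.normSq_nonneg _) h2
    have hψd : DifferentiableOn ℂ
        (fun z => (g z - a) / (1 - (starRingEnd ℂ) a * g z)) (ball 0 1) :=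
      DifferentiableOn.div (hd.sub (differentiableOn_const a))
        ((differentiableOn_const 1).sub ((differentiableOn_const _).mul hd))
        (fun z hz => hden (g z) (hlt z hz))
    have hψ0 : (g 0 - a) / (1 - (starRingEnd ℂ) a * g 0) = 0 := by
      rw [← ha, sub_self, zero_div]
    have hψm : MapsTo (fun z => (g z - a) / (1 - (starRingEnd ℂ) a * g z)) (ball (0:ℂ) 1)
        (ball ((fun z => (g z - a) / (1 - (starRingEnd ℂ) a * g z)) 0) 1) := by
      intro z hz
      simp only [hψ0, mem_ball_zero_iff]
      exact key (g z) (hlt z hz)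
    have hS := Complex.norm_deriv_le_div_of_mapsTo_ball hψd (hψm.mono_right ball_subset_closedBall) one_pos
    have hga : DifferentiableAt ℂ g 0 := hd.differentiableAt (isOpen_ball.mem_nhds hb0)
    have hN : HasDerivAt (fun z => g z - a) (deriv g 0) 0 := hga.hasDerivAt.sub_const a
    have hD : HasDerivAt (fun z => (1:ℂ) - (starRingEnd ℂ) a * g z)
        (-((starRingEnd ℂ) a * deriv g 0)) 0 :=
      (hga.hasDerivAt.const_mul ((starRingEnd ℂ) a)).const_sub 1
    have hD0 : (1:ℂ) - (starRingEnd ℂ) a * g 0 ≠ 0 := by rw [← ha]; exact hden a ha1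
    have hdiv : HasDerivAt (fun z => (g z - a) / (1 - (starRingEnd ℂ) a * g z)) _ 0 :=
      hN.div hD hD0
    have hval : deriv (fun z => (g z - a) / (1 - (starRingEnd ℂ) a * g z)) 0
        = deriv g 0 / (1 - (starRingEnd ℂ) a * a) := by
      rw [hdiv.deriv, ← ha]
      have hD1 : (1:ℂ) - (starRingEnd ℂ) a * a ≠ 0 := hden a ha1
      field_simp
      ring
    have hconj : (1:ℂ) - (starRingEnd ℂ) a * a = ((1 - ‖a‖ ^ 2 : ℝ) : ℂ) := by
      rw [Complex.conj_mul']
      push_cast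
      rfl
    have hpos : (0:ℝ) < 1 - ‖a‖ ^ 2 := by nlinarith [norm_nonneg a]
    rw [hval, hconj] at hS
    rw [norm_div, Complex.norm_real, Real.norm_eq_abs, abs_of_pos hpos] at hS
    have := (div_le_one hpos).mp (by simpa using hS)
    simpa [ha] using this

lemma key_coeff_bound (f : ℂ → ℂ)
    (hf : DifferentiableOn ℂ f (ball (0 : ℂ) 1))
    (hf1 : deriv f 0 = 1)
    (hconv : ∀ z ∈ ball (0 : ℂ) 1,
      deriv f z + deriv f (-z) ≠ 0 ∧
      0 < ((deriv f z + z * deriv (deriv f) z) / (deriv f z + deriv f (-z))).re) :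
    ‖deriv (deriv (deriv f)) 0 / 2 - deriv (deriv f) 0 ^ 2‖
      ≤ 1 - ‖deriv (deriv f) 0‖ ^ 2 := by
  have hb0 : (0:ℂ) ∈ ball (0:ℂ) 1 := mem_ball_self one_pos
  set F1 := deriv f with hF1def
  set F2 := deriv F1 with hF2def
  set F3 := deriv F2 with hF3def
  have hfa : AnalyticOnNhd ℂ f (ball 0 1) := (analyticOnNhd_iff_differentiableOn isOpen_ball).2 hf
  have h1a : AnalyticOnNhd ℂ F1 (ball 0 1) := hfa.deriv
  have h2a : AnalyticOnNhd ℂ F2 (ball 0 1) := h1a.deriv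
  have h3a : AnalyticOnNhd ℂ F3 (ball 0 1) := h2a.deriv
  have hneg : ∀ z ∈ ball (0:ℂ) 1, -z ∈ ball (0:ℂ) 1 := by
    intro z hz
    simpa [mem_ball_zero_iff] using hz
  have hF1d : ∀ z ∈ ball (0:ℂ) 1, HasDerivAt F1 (F2 z) z :=
    fun z hz => (h1a z hz).differentiableAt.hasDerivAt
  have hF2d : ∀ z ∈ ball (0:ℂ) 1, HasDerivAt F2 (F3 z) z :=
    fun z hz => (h2a z hz).differentiableAt.hasDerivAt
  have hF3d : ∀ z ∈ ball (0:ℂ) 1, HasDerivAt F3 (deriv F3 z) z :=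
    fun z hz => (h3a z hz).differentiableAt.hasDerivAt
  set A : ℂ → ℂ := fun z => 1 * F1 z + (-1) * F1 (-z) + 2*z*F2 z with hAdef
  set B : ℂ → ℂ := fun z => 3 * F1 z + 1 * F1 (-z) + 2*z*F2 z with hBdef
  set A' : ℂ → ℂ := fun z => 3 * F2 z + 1 * F2 (-z) + 2*z*F3 z with hA'def
  set B' : ℂ → ℂ := fun z => 5 * F2 z + (-1) * F2 (-z) + 2*z*F3 z with hB'def
  have hAd : ∀ z ∈ ball (0:ℂ) 1, HasDerivAt A
      (1*F2 z - (-1)*F2 (-z) + (2*F2 z + 2*z*F3 z)) z :=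
    fun z hz => hasDerivAt_comb 1 (-1) (hF1d z hz) (hF1d (-z) (hneg z hz)) (hF2d z hz)
  have hBd : ∀ z ∈ ball (0:ℂ) 1, HasDerivAt B
      (3*F2 z - 1*F2 (-z) + (2*F2 z + 2*z*F3 z)) z :=
    fun z hz => hasDerivAt_comb 3 1 (hF1d z hz) (hF1d (-z) (hneg z hz)) (hF2d z hz)
  have hA'd : ∀ z ∈ ball (0:ℂ) 1, HasDerivAt A'
      (3*F3 z - 1*F3 (-z) + (2*F3 z + 2*z*deriv F3 z)) z :=
    fun z hz => hasDerivAt_comb 3 1 (hF2d z hz) (hF2d (-z) (hneg z hz)) (hF3d z hz)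
  have hB'd : ∀ z ∈ ball (0:ℂ) 1, HasDerivAt B'
      (5*F3 z - (-1)*F3 (-z) + (2*F3 z + 2*z*deriv F3 z)) z :=
    fun z hz => hasDerivAt_comb 5 (-1) (hF2d z hz) (hF2d (-z) (hneg z hz)) (hF3d z hz)
  have hdA : ∀ z ∈ ball (0:ℂ) 1, deriv A z = A' z := by
    intro z hz
    rw [(hAd z hz).deriv, hA'def]
    ring
  have hdB : ∀ z ∈ ball (0:ℂ) 1, deriv B z = B' z := by
    intro z hz
    rw [(hBd z hz).deriv, hB'def]
    ring
  have hA0 : A 0 = 0 := by simp [hAdef]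
  have hB0 : B 0 = 4 := by
    simp only [hBdef, neg_zero, mul_zero, zero_mul, add_zero, one_mul]
    rw [hf1]
    norm_num
  have derivA0 : deriv A 0 = 4 * F2 0 := by
    rw [hdA 0 hb0, hA'def]
    simp only [neg_zero, mul_zero, zero_mul, add_zero]
    ring
  have derivB0 : deriv B 0 = 4 * F2 0 := by
    rw [hdB 0 hb0, hB'def]
    simp only [neg_zero, mul_zero, zero_mul, add_zero]
    ring
  have ddA0 : deriv (deriv A) 0 = 4 * F3 0 := by
    have hev : deriv A =ᶠ[nhds 0] A' :=
      Filter.eventuallyEq_of_mem (isOpen_ball.mem_nhds hb0) hdA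
    rw [hev.deriv_eq, (hA'd 0 hb0).deriv]
    simp only [neg_zero, mul_zero, zero_mul, add_zero]
    ring
  have ddB0 : deriv (deriv B) 0 = 8 * F3 0 := by
    have hev : deriv B =ᶠ[nhds 0] B' :=
      Filter.eventuallyEq_of_mem (isOpen_ball.mem_nhds hb0) hdB
    rw [hev.deriv_eq, (hB'd 0 hb0).deriv]
    simp only [neg_zero, mul_zero, zero_mul, add_zero]
    ring
  -- |A| < |B| on the ball
  have key1 : ∀ z ∈ ball (0:ℂ) 1, ‖A z‖ < ‖B z‖ := by
    intro z hz
    obtain ⟨hd0, hre⟩ := hconv z hz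
    set d := F1 z + F1 (-z) with hddef
    set w := (F1 z + z * F2 z) / d with hwdef
    have hhw : F1 z + z * F2 z = w * d := (div_mul_cancel₀ _ hd0).symm
    have hAz : A z = (2*w - 1) * d := by
      rw [hAdef]
      simp only []
      rw [hddef] at *
      linear_combination 2 * hhw
    have hBz : B z = (2*w + 1) * d := by
      rw [hBdef]
      simp only []
      linear_combination 2 * hhw
    have habs : ‖2*w - 1‖ < ‖2*w + 1‖ := by
      have h2 : Complex.normSq (2*w - 1) < Complex.normSq (2*w + 1) := by
        simp only [Complex.normSq_apply, Complex.add_re, Complex.add_im, Complex.sub_re,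
          Complex.sub_im, Complex.mul_re, Complex.mul_im, Complex.one_re, Complex.one_im,
          Complex.re_ofNat, Complex.im_ofNat]
        nlinarith [hre]
      rw [Complex.norm_def, Complex.norm_def]
      exact Real.sqrt_lt_sqrt (Complex.normSq_nonneg _) h2
    rw [hAz, hBz, norm_mul, norm_mul]
    exact mul_lt_mul_of_pos_right habs (norm_pos_iff.mpr hd0)
  have hBne : ∀ z ∈ ball (0:ℂ) 1, B z ≠ 0 := by
    intro z hz h0
    have := key1 z hz
    rw [h0, norm_zero] at this
    exact absurd this (not_lt.mpr (norm_nonneg _))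
  set ω : ℂ → ℂ := fun z => A z / B z with hωdef
  have hAdiff : DifferentiableOn ℂ A (ball 0 1) :=
    fun z hz => ((hAd z hz).differentiableAt).differentiableWithinAt
  have hBdiff : DifferentiableOn ℂ B (ball 0 1) :=
    fun z hz => ((hBd z hz).differentiableAt).differentiableWithinAt
  have hωdiff : DifferentiableOn ℂ ω (ball 0 1) := hAdiff.div hBdiff hBne
  have hω0 : ω 0 = 0 := by
    rw [hωdef]
    simp only []
    rw [hA0, zero_div]
  have hωmaps : MapsTo ω (ball (0:ℂ) 1) (ball (ω 0) 1) := by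
    intro z hz
    rw [hω0, mem_ball_zero_iff, hωdef]
    simp only []
    rw [norm_div, div_lt_one (norm_pos_iff.mpr (hBne z hz))]
    exact key1 z hz
  have hωana : AnalyticOnNhd ℂ ω (ball 0 1) :=
    (analyticOnNhd_iff_differentiableOn isOpen_ball).2 hωdiff
  have hω'ana : AnalyticOnNhd ℂ (deriv ω) (ball 0 1) := hωana.deriv
  set b1 := deriv ω 0 with hb1def
  set w2 := deriv (deriv ω) 0 with hw2def
  -- first coefficient
  have hAeqω : Set.EqOn A (fun z => ω z * B z) (ball 0 1) :=
    fun z hz => (div_mul_cancel₀ (A z) (hBne z hz)).symm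
  have hev1 : A =ᶠ[nhds 0] fun z => ω z * B z :=
    Filter.eventuallyEq_of_mem (isOpen_ball.mem_nhds hb0) hAeqω
  have hωat : DifferentiableAt ℂ ω 0 := hωdiff.differentiableAt (isOpen_ball.mem_nhds hb0)
  have hBat : DifferentiableAt ℂ B 0 := (hBd 0 hb0).differentiableAt
  have e1 : deriv A 0 = b1 * B 0 + ω 0 * deriv B 0 := by
    rw [hev1.deriv_eq]
    exact deriv_mul hωat hBat
  have hb1 : b1 = F2 0 := by
    rw [derivA0, hB0, hω0, derivB0] at e1
    linear_combination (-(1:ℂ)/4) * e1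
  -- second coefficient
  have hev2 : deriv A =ᶠ[nhds 0] fun z => deriv ω z * B z + ω z * deriv B z := by
    refine hev1.deriv.trans ?_
    refine Filter.eventuallyEq_of_mem (isOpen_ball.mem_nhds hb0) fun z hz => ?_
    exact deriv_mul (hωdiff.differentiableAt (isOpen_ball.mem_nhds hz))
      ((hBd z hz).differentiableAt)
  have hω'at : HasDerivAt (deriv ω) w2 0 := (hω'ana 0 hb0).differentiableAt.hasDerivAt
  have hBana : AnalyticOnNhd ℂ B (ball 0 1) :=
    (analyticOnNhd_iff_differentiableOn isOpen_ball).2 hBdiff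
  have hB'at : HasDerivAt (deriv B) (deriv (deriv B) 0) 0 :=
    ((hBana.deriv) 0 hb0).differentiableAt.hasDerivAt
  have hRHS : HasDerivAt (fun z => deriv ω z * B z + ω z * deriv B z)
      (w2 * B 0 + deriv ω 0 * deriv B 0 + (deriv ω 0 * deriv B 0 + ω 0 * deriv (deriv B) 0)) 0 :=
    (hω'at.mul (hBd 0 hb0).differentiableAt.hasDerivAt).add (hωat.hasDerivAt.mul hB'at)
  have e2 : deriv (deriv A) 0
      = w2 * B 0 + deriv ω 0 * deriv B 0 + (deriv ω 0 * deriv B 0 + ω 0 * deriv (deriv B) 0) := by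
    rw [hev2.deriv_eq]
    exact hRHS.deriv
  have hw2 : w2 = F3 0 - 2 * F2 0 ^ 2 := by
    rw [ddA0, hB0, hω0, derivB0, ddB0, ← hb1def, hb1] at e2
    linear_combination (-(1:ℂ)/4) * e2
  -- power series of ω
  obtain ⟨q, hq⟩ := hωana 0 hb0
  have hderivg : deriv (dslope ω 0) 0 = q.coeff 2 := by
    rw [hq.has_fpower_series_dslope_fslope.deriv]
    exact FormalMultilinearSeries.coeff_fslope
  have hcoeff2 : q.coeff 2 = w2 / 2 := by
    obtain ⟨r, hrq⟩ := hq
    have hfs := hrq.factorial_smul (1:ℂ) 2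
    rw [← iteratedDeriv_eq_iteratedFDeriv] at hfs
    have hit : iteratedDeriv 2 ω 0 = w2 := by
      rw [show (2:ℕ) = 1+1 from rfl, iteratedDeriv_succ, iteratedDeriv_one, hw2def]
    rw [hit] at hfs
    have h2 : (2:ℂ) * q.coeff 2 = w2 := by
      rw [← hfs, show Nat.factorial 2 = 2 from rfl, nsmul_eq_mul, Nat.cast_ofNat]
      rfl
    linear_combination ((1:ℂ)/2) * h2
  -- Schwarz--Pick
  have hgd : DifferentiableOn ℂ (dslope ω 0) (ball 0 1) :=
    (Complex.differentiableOn_dslope (isOpen_ball.mem_nhds hb0)).2 hωdiff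
  have hgle : ∀ z ∈ ball (0:ℂ) 1, ‖(dslope ω 0) z‖ ≤ 1 := by
    intro z hz
    have := Complex.norm_dslope_le_div_of_mapsTo_ball hωdiff (hωmaps.mono_right ball_subset_closedBall) hz
    simpa using this
  have hSP := schwarz_pick_zero _ hgd hgle
  rw [dslope_same, hderivg, hcoeff2, hw2, ← hb1def, hb1] at hSP
  have hfinal : (F3 0 - 2 * F2 0 ^ 2) / 2 = F3 0 / 2 - F2 0 ^ 2 := by ring
  rwa [hfinal] at hSP


/-- If `f` belongs to the class `K_S` of convex functions with respect to symmetric points,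
then `|Γ₂| - |Γ₁| ≤ 1/6`, where `Γ₁ = -a₂/2` and `Γ₂ = -a₃/2 + 3a₂²/4` are the first two
inverse logarithmic coefficients of `f`. -/
theorem abs_Gamma2_sub_abs_Gamma1_le_of_convex_symmetric
    (f : ℂ → ℂ)
    (hf : DifferentiableOn ℂ f (ball (0 : ℂ) 1))
    (hf0 : f 0 = 0) (hf1 : deriv f 0 = 1)
    (hinj : Set.InjOn f (ball (0 : ℂ) 1))
    (hconv : ∀ z ∈ ball (0 : ℂ) 1,
      deriv f z + deriv f (-z) ≠ 0 ∧
      0 < ((deriv f z + z * deriv (deriv f) z) / (deriv f z + deriv f (-z))).re)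
    (a₂ a₃ Γ₁ Γ₂ : ℂ)
    (ha₂ : a₂ = iteratedDeriv 2 f 0 / 2)
    (ha₃ : a₃ = iteratedDeriv 3 f 0 / 6)
    (hΓ₁ : Γ₁ = -a₂ / 2)
    (hΓ₂ : Γ₂ = -a₃ / 2 + 3 * a₂ ^ 2 / 4) :
    ‖Γ₂‖ - ‖Γ₁‖ ≤ 1 / 6 := by
  have hkey := key_coeff_bound f hf hf1 hconv
  set x2 := deriv (deriv f) 0 with hx2
  set x3 := deriv (deriv (deriv f)) 0 with hx3
  have ha2' : a₂ = x2 / 2 := by rw [ha₂, iteratedDeriv_two']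
  have ha3' : a₃ = x3 / 6 := by rw [ha₃, iteratedDeriv_three']
  have hG2 : Γ₂ = -(x3 / 2 - x2 ^ 2) / 6 + x2 ^ 2 / 48 := by
    rw [hΓ₂, ha2', ha3']
    ring
  have h1 : ‖Γ₂‖ ≤ ‖x3 / 2 - x2 ^ 2‖ / 6 + ‖x2‖ ^ 2 / 48 := by
    rw [hG2]
    refine le_trans (norm_add_le _ _) ?_
    rw [norm_div, norm_div, norm_neg, norm_pow]
    simp
  have ht0 : 0 ≤ ‖x3 / 2 - x2 ^ 2‖ := norm_nonneg _
  have hG1 : 0 ≤ ‖Γ₁‖ := norm_nonneg _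
  nlinarith [hkey, h1, ht0, hG1]
end

section
/- If f belongs to the class S*_☾ of starlike functions associated with the lune, then |Γ₂| − |Γ₁| ≤ 1/4, where Γ₁ = −a₂/2 and Γ₂ = −a₃/2 + 3a₂²/4 are the first two inverse logarithmic coefficients of f. -/
open Complex Metric Real Nat

lemma cauchy_coeff_bound' {u : ℂ → ℂ} (hud : DifferentiableOn ℂ u (ball (0:ℂ) 1))
    (hub : ∀ z ∈ ball (0:ℂ) 1, ‖u z‖ ≤ 1) (n : ℕ) :
    ‖iteratedDeriv n u 0‖ ≤ (n ! : ℝ) := by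
  have key : ∀ r : ℝ, 0 < r → r < 1 →
      ‖iteratedDeriv n u 0‖ * r ^ n ≤ (n ! : ℝ) := by
    intro r hr0 hr1
    set R : NNReal := ⟨r, hr0.le⟩ with hRdef
    have hRr : (R : ℝ) = r := rfl
    have hR0 : (0:NNReal) < R := by exact_mod_cast hr0
    have hsub : closedBall (0:ℂ) R ⊆ ball (0:ℂ) 1 := closedBall_subset_ball (by rw [hRr]; exact hr1)
    have hps : HasFPowerSeriesOnBall u (cauchyPowerSeries u 0 R) 0 R :=
      (hud.mono hsub).hasFPowerSeriesOnBall hR0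
    have hiter : iteratedDeriv n u 0
        = (n ! : ℂ) * (cauchyPowerSeries u 0 R n fun _ => (1:ℂ)) := by
      rw [iteratedDeriv_eq_iteratedFDeriv, ← hps.factorial_smul (1:ℂ) n, nsmul_eq_mul]
    have hmem : ∀ θ : ℝ, circleMap 0 r θ ∈ ball (0:ℂ) 1 := by
      intro θ
      rw [mem_ball_zero_iff]
      simpa [norm_circleMap_zero, abs_of_pos hr0] using hr1
    have hc : Continuous fun θ : ℝ => u (circleMap 0 r θ) :=
      hud.continuousOn.comp_continuous (continuous_circleMap 0 r) hmem
    have hint : (∫ θ in (0:ℝ)..(2*π), ‖u (circleMap 0 (R:ℝ) θ)‖) ≤ 2 * π := by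
      have h1 : (∫ θ in (0:ℝ)..(2*π), ‖u (circleMap 0 r θ)‖) ≤ ∫ _ in (0:ℝ)..(2*π), (1:ℝ) := by
        refine intervalIntegral.integral_mono_on Real.two_pi_pos.le
          (hc.norm.intervalIntegrable _ _) intervalIntegrable_const ?_
        intro θ _
        exact hub _ (hmem θ)
      simpa [hRr] using h1
    have hnorm : ‖(cauchyPowerSeries u 0 R n fun _ => (1:ℂ))‖ ≤ r⁻¹ ^ n := by
      calc ‖(cauchyPowerSeries u 0 R n fun _ => (1:ℂ))‖
          ≤ ‖cauchyPowerSeries u 0 (R:ℝ) n‖ * ∏ _i : Fin n, ‖(1:ℂ)‖ :=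
            (cauchyPowerSeries u 0 (R:ℝ) n).le_opNorm _
        _ = ‖cauchyPowerSeries u 0 (R:ℝ) n‖ := by simp
        _ ≤ ((2 * π)⁻¹ * ∫ θ in (0:ℝ)..(2*π), ‖u (circleMap 0 (R:ℝ) θ)‖) * |(R:ℝ)|⁻¹ ^ n :=
            norm_cauchyPowerSeries_le u 0 (R:ℝ) n
        _ ≤ ((2 * π)⁻¹ * (2 * π)) * |(R:ℝ)|⁻¹ ^ n := by
            apply mul_le_mul_of_nonneg_right
            · exact mul_le_mul_of_nonneg_left hint (by positivity)
            · positivity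
        _ = r⁻¹ ^ n := by
            rw [inv_mul_cancel₀ Real.two_pi_pos.ne', one_mul, hRr, abs_of_pos hr0]
    have habs : ‖iteratedDeriv n u 0‖ ≤ (n ! : ℝ) * r⁻¹ ^ n := by
      rw [hiter, norm_mul]
      simp only [Complex.norm_natCast]
      exact mul_le_mul_of_nonneg_left hnorm (by positivity)
    calc ‖iteratedDeriv n u 0‖ * r ^ n ≤ ((n ! : ℝ) * r⁻¹ ^ n) * r ^ n :=
          mul_le_mul_of_nonneg_right habs (by positivity)
      _ = (n ! : ℝ) := by rw [mul_assoc, ← mul_pow, inv_mul_cancel₀ hr0.ne', one_pow, mul_one]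
  have ht : Filter.Tendsto (fun r : ℝ => ‖iteratedDeriv n u 0‖ * r ^ n)
      (nhdsWithin 1 (Set.Iio 1)) (nhds (‖iteratedDeriv n u 0‖)) := by
    refine Filter.Tendsto.mono_left ?_ nhdsWithin_le_nhds
    simpa using (continuous_const.fun_mul (continuous_pow n)).tendsto (1:ℝ)
  refine le_of_tendsto ht ?_
  filter_upwards [Ioo_mem_nhdsLT (show (0:ℝ) < 1 by norm_num)] with r hr
  exact key r hr.1 hr.2

lemma deriv_congr_ball {u v : ℂ → ℂ} (h : ∀ z ∈ ball (0:ℂ) 1, u z = v z) {z : ℂ}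
    (hz : z ∈ ball (0:ℂ) 1) : deriv u z = deriv v z :=
  Filter.EventuallyEq.deriv_eq (Filter.eventuallyEq_of_mem (isOpen_ball.mem_nhds hz) h)

/-- If `f` belongs to the class `S*_☾` of starlike functions associated with the lune, then
`|Γ₂| - |Γ₁| ≤ 1/4`, where `Γ₁ = -a₂/2` and `Γ₂ = -a₃/2 + 3a₂²/4` are the first two inverse
logarithmic coefficients of `f`. -/
theorem abs_Gamma2_sub_abs_Gamma1_le_of_starlike_lune
    (f : ℂ → ℂ)
    (hf : DifferentiableOn ℂ f (ball (0 : ℂ) 1))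
    (hf0 : f 0 = 0) (hf1 : deriv f 0 = 1)
    (hinj : Set.InjOn f (ball (0 : ℂ) 1))
    (hlune : ∀ z ∈ ball (0 : ℂ) 1, z ≠ 0 →
      f z ≠ 0 ∧
      ‖(z * deriv f z / f z) ^ 2 - 1‖ ≤ 2 * ‖z * deriv f z / f z‖)
    (a₂ a₃ Γ₁ Γ₂ : ℂ)
    (ha₂ : a₂ = iteratedDeriv 2 f 0 / 2)
    (ha₃ : a₃ = iteratedDeriv 3 f 0 / 6)
    (hΓ₁ : Γ₁ = -a₂ / 2)
    (hΓ₂ : Γ₂ = -a₃ / 2 + 3 * a₂ ^ 2 / 4) :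
    ‖Γ₂‖ - ‖Γ₁‖ ≤ 1 / 4 := by
  have h0B : (0:ℂ) ∈ ball (0:ℂ) 1 := mem_ball_self one_pos
  have hfa : AnalyticOnNhd ℂ f (ball 0 1) := hf.analyticOnNhd isOpen_ball
  set F : ℂ → ℂ := dslope f 0 with hFdef
  have hfF : ∀ z, f z = z * F z := by
    intro z
    rw [hFdef]
    have h := sub_smul_dslope f 0 z
    rw [sub_zero, hf0, sub_zero, smul_eq_mul] at h
    exact h.symm
  have hFd : DifferentiableOn ℂ F (ball 0 1) := by
    intro z hz
    rcases eq_or_ne z 0 with rfl | hne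
    · obtain ⟨p, hp⟩ := hfa 0 h0B
      exact (hp.has_fpower_series_dslope_fslope.analyticAt).differentiableAt.differentiableWithinAt
    · exact ((differentiableAt_dslope_of_ne hne).2
        (hfa z hz).differentiableAt).differentiableWithinAt
  have hFa : AnalyticOnNhd ℂ F (ball 0 1) := hFd.analyticOnNhd isOpen_ball
  have hF0 : F 0 = 1 := by rw [hFdef]; exact (dslope_same f 0).trans hf1
  have hFne : ∀ z ∈ ball (0:ℂ) 1, F z ≠ 0 := by
    intro z hz
    rcases eq_or_ne z 0 with rfl | hne
    · rw [hF0]; exact one_ne_zero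
    · intro h
      exact (hlune z hz hne).1 (by rw [hfF z, h, mul_zero])
  have hf'a : AnalyticOnNhd ℂ (deriv f) (ball 0 1) := hfa.deriv
  set g : ℂ → ℂ := fun z => deriv f z / F z with hgdef
  have hga : AnalyticOnNhd ℂ g (ball 0 1) := hf'a.div hFa hFne
  have hg0 : g 0 = 1 := by simp [hgdef, hf1, hF0]
  have hgF : ∀ z ∈ ball (0:ℂ) 1, g z * F z = deriv f z := fun z hz =>
    div_mul_cancel₀ _ (hFne z hz)
  have hg_eq : ∀ z ∈ ball (0:ℂ) 1, z ≠ 0 → z * deriv f z / f z = g z := by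
    intro z hz hne
    rw [hfF z, hgdef]
    exact mul_div_mul_left _ _ hne
  have hgne : ∀ z ∈ ball (0:ℂ) 1, g z ≠ 0 := by
    intro z hz
    rcases eq_or_ne z 0 with rfl | hne
    · rw [hg0]; exact one_ne_zero
    · intro h
      have h2 := (hlune z hz hne).2
      rw [hg_eq z hz hne, h] at h2
      norm_num at h2
  set ω : ℂ → ℂ := fun z => (g z * g z - 1) / (2 * g z) with hωdef
  have h2gne : ∀ z ∈ ball (0:ℂ) 1, 2 * g z ≠ 0 := fun z hz =>
    mul_ne_zero two_ne_zero (hgne z hz)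
  have hωa : AnalyticOnNhd ℂ ω (ball 0 1) :=
    ((hga.mul hga).sub analyticOnNhd_const).div (analyticOnNhd_const.mul hga) h2gne
  have hω0 : ω 0 = 0 := by simp [hωdef, hg0]
  have hωg : ∀ z ∈ ball (0:ℂ) 1, ω z * (2 * g z) = g z * g z - 1 := fun z hz =>
    div_mul_cancel₀ _ (h2gne z hz)
  have hωle : ∀ z ∈ ball (0:ℂ) 1, ‖ω z‖ ≤ 1 := by
    intro z hz
    rcases eq_or_ne z 0 with rfl | hne
    · rw [hω0]; simp
    · have h2 := (hlune z hz hne).2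
      rw [hg_eq z hz hne] at h2
      have hpos : 0 < ‖2 * g z‖ := norm_pos_iff.mpr (h2gne z hz)
      simp only [hωdef]
      rw [norm_div, div_le_one₀ hpos, norm_mul, Complex.norm_two]
      calc ‖g z * g z - 1‖ = ‖g z ^ 2 - 1‖ := by rw [sq]
        _ ≤ 2 * ‖g z‖ := h2
  have hωd : DifferentiableOn ℂ ω (ball 0 1) := hωa.differentiableOn
  have hw1 : ‖deriv ω 0‖ ≤ 1 := by
    have h := cauchy_coeff_bound' hωd hωle 1
    simpa [iteratedDeriv_one] using h
  have hw2 : ‖deriv (deriv ω) 0‖ ≤ 2 := by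
    have h := cauchy_coeff_bound' hωd hωle 2
    have h2 : iteratedDeriv 2 ω = deriv (deriv ω) := by
      rw [iteratedDeriv_succ, iteratedDeriv_one]
    rw [h2] at h
    norm_num [Nat.factorial] at h
    exact h
  -- analyticity of derivatives
  have hF1a : AnalyticOnNhd ℂ (deriv F) (ball 0 1) := hFa.deriv
  have hF2a : AnalyticOnNhd ℂ (deriv (deriv F)) (ball 0 1) := hF1a.deriv
  have hg1a : AnalyticOnNhd ℂ (deriv g) (ball 0 1) := hga.deriv
  have hg2a : AnalyticOnNhd ℂ (deriv (deriv g)) (ball 0 1) := hg1a.deriv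
  have hω1a : AnalyticOnNhd ℂ (deriv ω) (ball 0 1) := hωa.deriv
  -- derivatives of f in terms of F
  have hA1 : ∀ z ∈ ball (0:ℂ) 1, deriv f z = F z + z * deriv F z := by
    intro z hz
    have hfe : f = fun w => w * F w := funext hfF
    rw [hfe, deriv_fun_mul differentiableAt_fun_id (hFa z hz).differentiableAt, deriv_id'']
    ring
  have hA2 : ∀ z ∈ ball (0:ℂ) 1, deriv (deriv f) z = 2 * deriv F z + z * deriv (deriv F) z := by
    intro z hz
    have e : deriv (deriv f) z = deriv (fun w => F w + w * deriv F w) z :=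
      deriv_congr_ball hA1 hz
    rw [e, deriv_fun_add (hFa z hz).differentiableAt
        (differentiableAt_fun_id.fun_mul (hF1a z hz).differentiableAt),
      deriv_fun_mul differentiableAt_fun_id (hF1a z hz).differentiableAt, deriv_id'']
    ring
  have hiter2 : iteratedDeriv 2 f = deriv (deriv f) := by
    rw [iteratedDeriv_succ, iteratedDeriv_one]
  have hiter3 : iteratedDeriv 3 f = deriv (deriv (deriv f)) := by
    rw [iteratedDeriv_succ, hiter2]
  have hA2' : iteratedDeriv 2 f 0 = 2 * deriv F 0 := by
    rw [hiter2]
    simpa using hA2 0 h0B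
  have hA3 : iteratedDeriv 3 f 0 = 3 * deriv (deriv F) 0 := by
    rw [hiter3]
    have e : deriv (deriv (deriv f)) 0
        = deriv (fun w => 2 * deriv F w + w * deriv (deriv F) w) 0 :=
      deriv_congr_ball hA2 h0B
    rw [e, deriv_fun_add ((hF1a 0 h0B).differentiableAt.const_mul 2)
        (differentiableAt_fun_id.fun_mul (hF2a 0 h0B).differentiableAt),
      deriv_const_mul 2 (hF1a 0 h0B).differentiableAt,
      deriv_fun_mul differentiableAt_fun_id (hF2a 0 h0B).differentiableAt, deriv_id'']
    ring
  -- derivatives of f in terms of g and F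
  have hB1 : ∀ z ∈ ball (0:ℂ) 1, deriv (deriv f) z = deriv g z * F z + g z * deriv F z := by
    intro z hz
    have e : deriv (deriv f) z = deriv (fun w => g w * F w) z :=
      deriv_congr_ball (fun w hw => (hgF w hw).symm) hz
    rw [e, deriv_fun_mul (hga z hz).differentiableAt (hFa z hz).differentiableAt]
  have hB1' : iteratedDeriv 2 f 0 = deriv g 0 + deriv F 0 := by
    rw [hiter2]
    have h := hB1 0 h0B
    rw [hF0, hg0] at h
    simpa using h
  have hB2' : iteratedDeriv 3 f 0
      = deriv (deriv g) 0 + 2 * (deriv g 0 * deriv F 0) + deriv (deriv F) 0 := by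
    rw [hiter3]
    have e : deriv (deriv (deriv f)) 0
        = deriv (fun w => deriv g w * F w + g w * deriv F w) 0 :=
      deriv_congr_ball hB1 h0B
    rw [e, deriv_fun_add ((hg1a 0 h0B).differentiableAt.fun_mul (hFa 0 h0B).differentiableAt)
        ((hga 0 h0B).differentiableAt.fun_mul (hF1a 0 h0B).differentiableAt),
      deriv_fun_mul (hg1a 0 h0B).differentiableAt (hFa 0 h0B).differentiableAt,
      deriv_fun_mul (hga 0 h0B).differentiableAt (hF1a 0 h0B).differentiableAt,
      hF0, hg0]
    ring
  -- derivatives of ω in terms of g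
  have hC1 : ∀ z ∈ ball (0:ℂ) 1,
      deriv ω z * (2 * g z) + ω z * (2 * deriv g z) = deriv g z * g z + g z * deriv g z := by
    intro z hz
    have e : deriv (fun w => ω w * (2 * g w)) z = deriv (fun w => g w * g w - 1) z :=
      deriv_congr_ball hωg hz
    rw [deriv_fun_mul (hωa z hz).differentiableAt ((hga z hz).differentiableAt.const_mul 2),
      deriv_const_mul 2 (hga z hz).differentiableAt] at e
    rw [deriv_fun_sub ((hga z hz).differentiableAt.fun_mul (hga z hz).differentiableAt)
        (differentiableAt_const 1),
      deriv_fun_mul (hga z hz).differentiableAt (hga z hz).differentiableAt, deriv_const] at e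
    rw [sub_zero] at e
    exact e
  have hC1' : deriv ω 0 = deriv g 0 := by
    have h := hC1 0 h0B
    rw [hω0, hg0] at h
    linear_combination h / 2
  have hC2 : deriv (deriv ω) 0 * 2 + 4 * (deriv ω 0 * deriv g 0)
      = 2 * (deriv g 0 * deriv g 0) + 2 * deriv (deriv g) 0 := by
    have e : deriv (fun w => deriv ω w * (2 * g w) + ω w * (2 * deriv g w)) 0
        = deriv (fun w => deriv g w * g w + g w * deriv g w) 0 :=
      deriv_congr_ball hC1 h0B
    rw [deriv_fun_add ((hω1a 0 h0B).differentiableAt.fun_mul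
          ((hga 0 h0B).differentiableAt.const_mul 2))
        ((hωa 0 h0B).differentiableAt.fun_mul ((hg1a 0 h0B).differentiableAt.const_mul 2)),
      deriv_fun_mul (hω1a 0 h0B).differentiableAt ((hga 0 h0B).differentiableAt.const_mul 2),
      deriv_fun_mul (hωa 0 h0B).differentiableAt ((hg1a 0 h0B).differentiableAt.const_mul 2),
      deriv_const_mul 2 (hga 0 h0B).differentiableAt,
      deriv_const_mul 2 (hg1a 0 h0B).differentiableAt] at e
    rw [deriv_fun_add ((hg1a 0 h0B).differentiableAt.fun_mul (hga 0 h0B).differentiableAt)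
        ((hga 0 h0B).differentiableAt.fun_mul (hg1a 0 h0B).differentiableAt),
      deriv_fun_mul (hg1a 0 h0B).differentiableAt (hga 0 h0B).differentiableAt,
      deriv_fun_mul (hga 0 h0B).differentiableAt (hg1a 0 h0B).differentiableAt] at e
    rw [hω0, hg0] at e
    linear_combination e
  -- algebra
  have ha2x : a₂ = deriv F 0 := by
    rw [ha₂, hA2']; ring
  have hy1 : deriv g 0 = a₂ := by
    have h := hB1'
    rw [hA2'] at h
    rw [ha2x]
    linear_combination -h
  have hx2 : deriv (deriv F) 0 = 2 * a₃ := by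
    rw [ha₃, hA3]; ring
  have hy2 : deriv (deriv g) 0 = 4 * a₃ - 2 * a₂ ^ 2 := by
    have h := hB2'
    rw [hA3, hy1, ← ha2x, hx2] at h
    linear_combination -h
  have hu1 : deriv ω 0 = a₂ := hC1'.trans hy1
  have hu2 : deriv (deriv ω) 0 = 4 * a₃ - 3 * a₂ ^ 2 := by
    have h := hC2
    rw [hu1, hy1, hy2] at h
    linear_combination h / 2
  have habs1 : ‖a₂‖ ≤ 1 := by rw [← hu1]; exact hw1
  have habs2 : ‖4 * a₃ - 3 * a₂ ^ 2‖ ≤ 2 := by rw [← hu2]; exact hw2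
  have hΓ₂eq : Γ₂ = 3 * a₂ ^ 2 / 8 - (4 * a₃ - 3 * a₂ ^ 2) / 8 := by rw [hΓ₂]; ring
  have hΓ₁abs : ‖Γ₁‖ = ‖a₂‖ / 2 := by
    rw [hΓ₁, norm_div, Complex.norm_two]
    congr 1
    exact norm_neg a₂
  have hΓ₂abs : ‖Γ₂‖ ≤ 3 * ‖a₂‖ ^ 2 / 8 + 1 / 4 := by
    rw [hΓ₂eq]
    calc ‖3 * a₂ ^ 2 / 8 - (4 * a₃ - 3 * a₂ ^ 2) / 8‖
        ≤ ‖3 * a₂ ^ 2 / 8‖ + ‖(4 * a₃ - 3 * a₂ ^ 2) / 8‖ := by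
          exact norm_sub_le _ _
      _ ≤ 3 * ‖a₂‖ ^ 2 / 8 + 1 / 4 := by
          rw [norm_div, norm_div, norm_mul, norm_pow, Complex.norm_ofNat, Complex.norm_ofNat]
          nlinarith [habs2]
  nlinarith [hΓ₂abs, hΓ₁abs, habs1, norm_nonneg a₂,
    mul_nonneg (sub_nonneg.2 habs1) (norm_nonneg a₂)]
end

section
/- If f belongs to the class S*_☾ of starlike functions associated with the lune, then |Γ₂| − |Γ₁| ≥ −1/√10, where Γ₁ = −a₂/2 and Γ₂ = −a₃/2 + 3a₂²/4 are the first two inverse logarithmic coefficients of f. -/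
open Complex Metric

open Set Function


lemma aux_iteratedDeriv_eq {h : ℂ → ℂ} {Q : FormalMultilinearSeries ℂ ℂ ℂ}
    (hQ : HasFPowerSeriesAt h Q 0) (n : ℕ) :
    iteratedDeriv n h 0 = (n.factorial : ℂ) * Q.coeff n := by
  obtain ⟨r, hr⟩ := hQ
  have := hr.factorial_smul (1 : ℂ) n
  rw [iteratedDeriv_eq_iteratedFDeriv]
  rw [← this, nsmul_eq_mul]
  rfl

lemma aux_deriv_dslope {h : ℂ → ℂ} (hh : AnalyticAt ℂ h 0) :
    deriv (dslope h 0) 0 = iteratedDeriv 2 h 0 / 2 := by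
  obtain ⟨Q, hQ⟩ := hh
  have h1 : HasFPowerSeriesAt (dslope h 0) Q.fslope 0 :=
    hQ.has_fpower_series_dslope_fslope
  rw [h1.deriv]
  show Q.fslope.coeff 1 = _
  rw [FormalMultilinearSeries.coeff_fslope, aux_iteratedDeriv_eq hQ 2]
  simp [Nat.factorial]

lemma aux_iteratedDeriv2_dslope {h : ℂ → ℂ} (hh : AnalyticAt ℂ h 0) :
    iteratedDeriv 2 (dslope h 0) 0 = iteratedDeriv 3 h 0 / 3 := by
  obtain ⟨Q, hQ⟩ := hh
  have h1 : HasFPowerSeriesAt (dslope h 0) Q.fslope 0 :=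
    hQ.has_fpower_series_dslope_fslope
  rw [aux_iteratedDeriv_eq h1 2]
  have h2 : Q.fslope.coeff 2 = Q.coeff 3 := FormalMultilinearSeries.coeff_fslope ..
  rw [h2, aux_iteratedDeriv_eq hQ 3]
  simp [Nat.factorial]; ring


lemma aux_schwarz_pick {w : ℂ → ℂ} (hd : DifferentiableOn ℂ w (ball (0:ℂ) 1))
    (hm : MapsTo w (ball (0:ℂ) 1) (ball (0:ℂ) 1)) (h0 : w 0 = 0) :
    ‖deriv (dslope w 0) 0‖ ≤ 1 - ‖deriv w 0‖ ^ 2 := by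
  set ψ := dslope w 0 with hψ
  have hball : (ball (0:ℂ) 1) ∈ nhds (0:ℂ) := ball_mem_nhds _ one_pos
  have hψd : DifferentiableOn ℂ ψ (ball (0:ℂ) 1) :=
    (differentiableOn_dslope hball).mpr hd
  have hm' : MapsTo w (ball (0:ℂ) 1) (ball (w 0) 1) := by rwa [h0]
  have hψle : ∀ z ∈ ball (0:ℂ) 1, ‖ψ z‖ ≤ 1 := by
    intro z hz
    have := Complex.norm_dslope_le_div_of_mapsTo_ball hd (hm'.mono_right ball_subset_closedBall) hz
    simpa using this
  have ha0 : ψ 0 = deriv w 0 := dslope_same w 0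
  set a := deriv w 0 with haa
  have h0mem : (0:ℂ) ∈ ball (0:ℂ) 1 := mem_ball_self one_pos
  have hale : ‖a‖ ≤ 1 := by rw [← ha0]; exact hψle 0 h0mem
  by_cases hone : ‖a‖ = 1
  · -- ψ is constant, so deriv ψ 0 = 0
    have hmax : IsMaxOn (norm ∘ ψ) (ball (0:ℂ) 1) 0 := by
      intro z hz
      simp only [comp_apply, mem_setOf_eq]
      show ‖ψ z‖ ≤ ‖ψ 0‖
      rw [ha0]
      calc ‖ψ z‖ ≤ 1 := hψle z hz
        _ = ‖a‖ := hone.symm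
        _ = ‖a‖ := rfl
    have hcon := Complex.eqOn_of_isPreconnected_of_isMaxOn_norm
      (convex_ball (0:ℂ) 1).isPreconnected isOpen_ball hψd h0mem hmax
    have hev : ψ =ᶠ[nhds 0] const ℂ (ψ 0) :=
      Filter.eventuallyEq_of_mem (isOpen_ball.mem_nhds h0mem) hcon
    have : deriv ψ 0 = 0 := by rw [hev.deriv_eq]; exact deriv_const 0 (ψ 0)
    rw [this]
    simp [hone]
  · have halt : ‖a‖ < 1 := lt_of_le_of_ne hale hone
    have hψlt : ∀ z ∈ ball (0:ℂ) 1, ‖ψ z‖ < 1 := by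
      intro z hz
      rcases lt_or_eq_of_le (hψle z hz) with h | h
      · exact h
      · exfalso
        have hmax : IsMaxOn (norm ∘ ψ) (ball (0:ℂ) 1) z := by
          intro y hy
          simp only [comp_apply, mem_setOf_eq]
          show ‖ψ y‖ ≤ ‖ψ z‖
          calc ‖ψ y‖ ≤ 1 := hψle y hy
            _ = ‖ψ z‖ := h.symm ▸ rfl
        have hcon := Complex.eqOn_of_isPreconnected_of_isMaxOn_norm
          (convex_ball (0:ℂ) 1).isPreconnected isOpen_ball hψd hz hmax
        have h1 : ψ 0 = ψ z := hcon h0mem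
        apply hone
        calc ‖a‖ = ‖ψ 0‖ := by rw [ha0]
          _ = ‖ψ z‖ := by rw [h1]
          _ = 1 := h
    -- Möbius transform
    set φ := fun z => (ψ z - a) / (1 - (starRingEnd ℂ) a * ψ z) with hφ
    have hden : ∀ z ∈ ball (0:ℂ) 1, 1 - (starRingEnd ℂ) a * ψ z ≠ 0 := by
      intro z hz
      have : ‖(starRingEnd ℂ) a * ψ z‖ < 1 := by
        rw [norm_mul, Complex.norm_conj]
        calc ‖a‖ * ‖ψ z‖ ≤ ‖a‖ * 1 :=
              mul_le_mul_of_nonneg_left (hψle z hz) (norm_nonneg _)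
          _ < 1 := by simpa using halt
      intro h
      rw [sub_eq_zero] at h
      rw [← h] at this
      simp at this
    have hφd : DifferentiableOn ℂ φ (ball (0:ℂ) 1) := by
      apply DifferentiableOn.div
      · exact hψd.sub_const a
      · exact (differentiableOn_const _).sub ((differentiableOn_const _).mul hψd)
      · exact hden
    have hφ0 : φ 0 = 0 := by
      simp only [hφ, ha0]
      rw [sub_self, zero_div]
    -- key normSq identity
    have hkey : ∀ u v : ℂ, Complex.normSq (1 - (starRingEnd ℂ) u * v) - Complex.normSq (v - u)
        = (1 - Complex.normSq u) * (1 - Complex.normSq v) := by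
      intro u v
      simp only [Complex.normSq_apply, Complex.sub_re, Complex.sub_im, Complex.mul_re,
        Complex.mul_im, Complex.one_re, Complex.one_im, Complex.conj_re, Complex.conj_im]
      ring
    have hφm : MapsTo φ (ball (0:ℂ) 1) (ball (0:ℂ) 1) := by
      intro z hz
      have hw := hψlt z hz
      have hnum : Complex.normSq (ψ z - a) < Complex.normSq (1 - (starRingEnd ℂ) a * ψ z) := by
        have h1 : (0:ℝ) < (1 - Complex.normSq a) * (1 - Complex.normSq (ψ z)) := by
          apply mul_pos
          · rw [← Complex.sq_norm]; nlinarith [norm_nonneg a]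
          · rw [← Complex.sq_norm]; nlinarith [norm_nonneg (ψ z)]
        nlinarith [hkey a (ψ z)]
      have habs : ‖ψ z - a‖ < ‖1 - (starRingEnd ℂ) a * ψ z‖ := by
        rw [Complex.norm_def, Complex.norm_def]
        exact Real.sqrt_lt_sqrt (Complex.normSq_nonneg _) hnum
      have hdpos : 0 < ‖1 - (starRingEnd ℂ) a * ψ z‖ :=
        lt_of_le_of_lt (norm_nonneg _) habs
      simp only [mem_ball, dist_zero_right]
      show ‖(ψ z - a) / (1 - (starRingEnd ℂ) a * ψ z)‖ < 1
      rw [norm_div]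
      exact (div_lt_one hdpos).mpr habs
    have hφm' : MapsTo φ (ball (0:ℂ) 1) (ball (φ 0) 1) := by rwa [hφ0]
    have hSch := Complex.norm_dslope_le_div_of_mapsTo_ball hφd (hφm'.mono_right ball_subset_closedBall) h0mem
    rw [dslope_same] at hSch
    -- compute deriv φ 0
    have hψ0d : HasDerivAt ψ (deriv ψ 0) 0 :=
      (hψd.differentiableAt (isOpen_ball.mem_nhds h0mem)).hasDerivAt
    set dψ := deriv ψ 0 with hdψ
    have hu : HasDerivAt (fun z => ψ z - a) dψ 0 := hψ0d.sub_const a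
    have hv : HasDerivAt (fun z => 1 - (starRingEnd ℂ) a * ψ z)
        (-((starRingEnd ℂ) a * dψ)) 0 := by
      simpa using ((hψ0d.const_mul ((starRingEnd ℂ) a)).const_sub 1)
    have hv0 : 1 - (starRingEnd ℂ) a * ψ 0 ≠ 0 := hden 0 h0mem
    have hdiv := hu.div hv hv0
    have hv0' : 1 - (starRingEnd ℂ) a * a ≠ 0 := by rwa [ha0] at hv0
    have hφder : deriv φ 0 = dψ / (1 - (starRingEnd ℂ) a * a) := by
      rw [show deriv φ 0 = _ from hdiv.deriv, ha0]
      field_simp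
      ring
    rw [hφder] at hSch
    have hconj : (starRingEnd ℂ) a * a = (Complex.normSq a : ℂ) := by
      rw [mul_comm]; exact Complex.mul_conj a
    rw [hconj] at hSch
    have h1 : (1 : ℂ) - (Complex.normSq a : ℂ) = ((1 - Complex.normSq a : ℝ) : ℂ) := by
      push_cast; ring
    have hpos : (0:ℝ) < 1 - Complex.normSq a := by
      rw [← Complex.sq_norm]; nlinarith [norm_nonneg a]
    rw [norm_div] at hSch
    norm_num at hSch
    have h2 : ‖1 - (Complex.normSq a : ℂ)‖ = 1 - Complex.normSq a := by
      rw [h1, Complex.norm_of_nonneg hpos.le]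
    rw [h2, div_le_one hpos] at hSch
    have h3 : ‖a‖ ^ 2 = Complex.normSq a := Complex.sq_norm a
    show ‖dψ‖ ≤ _
    linarith

lemma aux_omega_derivs {f : ℂ → ℂ}
    (hf : DifferentiableOn ℂ f (ball (0:ℂ) 1))
    (hf1 : deriv f 0 = 1)
    (hgne : ∀ z ∈ ball (0:ℂ) 1, dslope f 0 z ≠ 0) :
    deriv (fun z => ((deriv f z / dslope f 0 z) ^ 2 - 1) /
        (2 * (deriv f z / dslope f 0 z))) 0 = iteratedDeriv 2 f 0 / 2 ∧
    iteratedDeriv 2 (fun z => ((deriv f z / dslope f 0 z) ^ 2 - 1) /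
        (2 * (deriv f z / dslope f 0 z))) 0
      = 2 * iteratedDeriv 3 f 0 / 3 - 3 * (iteratedDeriv 2 f 0) ^ 2 / 4 := by
  have hopen : IsOpen (ball (0:ℂ) 1) := isOpen_ball
  have hball : ball (0:ℂ) 1 ∈ nhds (0:ℂ) := ball_mem_nhds _ one_pos
  have h0mem : (0:ℂ) ∈ ball (0:ℂ) 1 := mem_ball_self one_pos
  set g := dslope f 0 with hgdef
  set p := fun z => deriv f z / g z with hpdef
  set ω := fun z => (p z ^ 2 - 1) / (2 * p z) with hωdef
  show deriv ω 0 = _ ∧ iteratedDeriv 2 ω 0 = _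
  have hgd : DifferentiableOn ℂ g (ball (0:ℂ) 1) := (differentiableOn_dslope hball).mpr hf
  have hga : AnalyticOnNhd ℂ g (ball (0:ℂ) 1) := hgd.analyticOnNhd hopen
  have hfa : AnalyticOnNhd ℂ f (ball (0:ℂ) 1) := hf.analyticOnNhd hopen
  have hf'a : AnalyticOnNhd ℂ (deriv f) (ball (0:ℂ) 1) := hfa.deriv
  have hf''a : AnalyticOnNhd ℂ (deriv (deriv f)) (ball (0:ℂ) 1) := hf'a.deriv
  have hg'a : AnalyticOnNhd ℂ (deriv g) (ball (0:ℂ) 1) := hga.deriv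
  have hpa : AnalyticOnNhd ℂ p (ball (0:ℂ) 1) := hf'a.div hga hgne
  have hp'a : AnalyticOnNhd ℂ (deriv p) (ball (0:ℂ) 1) := hpa.deriv
  have hg0 : g 0 = 1 := by rw [hgdef, dslope_same]; exact hf1
  have hp0 : p 0 = 1 := by rw [hpdef]; simp [hg0, hf1]
  set A2 := iteratedDeriv 2 f 0 with hA2def
  set A3 := iteratedDeriv 3 f 0 with hA3def
  have hDg : deriv g 0 = A2 / 2 := aux_deriv_dslope (hfa 0 h0mem)
  have hIt2 : ∀ h : ℂ → ℂ, iteratedDeriv 2 h 0 = deriv (deriv h) 0 := by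
    intro h
    rw [show (2:ℕ) = 1 + 1 from rfl, iteratedDeriv_succ, iteratedDeriv_one]
  have hIt3 : ∀ h : ℂ → ℂ, iteratedDeriv 3 h 0 = deriv (deriv (deriv h)) 0 := by
    intro h
    rw [show (3:ℕ) = 2 + 1 from rfl, iteratedDeriv_succ]
    have : iteratedDeriv 2 h = deriv (deriv h) := by
      rw [show (2:ℕ) = 1 + 1 from rfl, iteratedDeriv_succ, iteratedDeriv_one]
    rw [this]
  have hA2 : deriv (deriv f) 0 = A2 := (hIt2 f).symm
  have hA3 : deriv (deriv (deriv f)) 0 = A3 := (hIt3 f).symm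
  have hDg2 : deriv (deriv g) 0 = A3 / 3 := by
    rw [← hIt2 g]; exact aux_iteratedDeriv2_dslope (hfa 0 h0mem)
  -- derivative of p
  have hpder : ∀ z ∈ ball (0:ℂ) 1, HasDerivAt p
      ((deriv (deriv f) z * g z - deriv f z * deriv g z) / g z ^ 2) z := by
    intro z hz
    have h1 : HasDerivAt (deriv f) (deriv (deriv f) z) z :=
      ((hf'a z hz).differentiableAt).hasDerivAt
    have h2 : HasDerivAt g (deriv g z) z := ((hga z hz).differentiableAt).hasDerivAt
    exact h1.div h2 (hgne z hz)
  have hdp0 : deriv p 0 = A2 / 2 := by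
    rw [(hpder 0 h0mem).deriv, hA2, hDg, hg0, hf1]
    norm_num
    ring
  -- second derivative of p at 0
  have hevp : deriv p =ᶠ[nhds 0]
      fun z => (deriv (deriv f) z * g z - deriv f z * deriv g z) / g z ^ 2 := by
    filter_upwards [hball] with z hz
    exact (hpder z hz).deriv
  have hF1 : HasDerivAt (deriv f) (deriv (deriv f) 0) 0 :=
    ((hf'a 0 h0mem).differentiableAt).hasDerivAt
  have hF2 : HasDerivAt (fun z => deriv (deriv f) z) (deriv (deriv (deriv f)) 0) 0 :=
    ((hf''a 0 h0mem).differentiableAt).hasDerivAt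
  have hG : HasDerivAt g (deriv g 0) 0 := ((hga 0 h0mem).differentiableAt).hasDerivAt
  have hDG : HasDerivAt (fun z => deriv g z) (deriv (deriv g) 0) 0 :=
    ((hg'a 0 h0mem).differentiableAt).hasDerivAt
  have hgsq : g 0 ^ 2 ≠ 0 := by rw [hg0]; norm_num
  have hEp := ((hF2.mul hG).sub (hF1.mul hDG)).div (hG.pow 2) hgsq
  have hP2 : deriv (deriv p) 0 = 2 * A3 / 3 - A2 ^ 2 / 2 := by
    rw [hevp.deriv_eq, show deriv (fun z => (deriv (deriv f) z * g z - deriv f z * deriv g z) / g z ^ 2) 0 = _ from hEp.deriv]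
    simp only [Pi.pow_apply, Pi.mul_apply, Pi.sub_apply]
    rw [hA2, hA3, hDg, hDg2, hg0, hf1]
    push_cast
    field_simp
    ring
  -- derivative of ω
  have hpne : ∀ᶠ z in nhds (0:ℂ), p z ≠ 0 :=
    (hpa 0 h0mem).continuousAt.eventually_ne (by rw [hp0]; exact one_ne_zero)
  have hp0d : HasDerivAt p (deriv p 0) 0 := ((hpa 0 h0mem).differentiableAt).hasDerivAt
  have h2p0 : (2:ℂ) * p 0 ≠ 0 := by rw [hp0]; norm_num
  have hd1 : deriv ω 0 = A2 / 2 := by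
    have hu := (hp0d.pow 2).sub_const 1
    have hv := hp0d.const_mul (2:ℂ)
    have hω0d := hu.div hv h2p0
    rw [show deriv ω 0 = _ from hω0d.deriv]
    simp only [Pi.pow_apply]
    rw [hp0, hdp0]
    push_cast
    norm_num
    ring
  refine ⟨hd1, ?_⟩
  -- second derivative of ω
  have hevω : deriv ω =ᶠ[nhds 0]
      fun z => deriv p z * (p z ^ 2 + 1) / (2 * p z ^ 2) := by
    filter_upwards [hball, hpne] with z hz hpz
    have hpzd : HasDerivAt p (deriv p z) z := ((hpa z hz).differentiableAt).hasDerivAt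
    have hu := (hpzd.pow 2).sub_const 1
    have hv := hpzd.const_mul (2:ℂ)
    have h2pz : (2:ℂ) * p z ≠ 0 := by simp [hpz]
    have hωzd := hu.div hv h2pz
    rw [show deriv ω z = _ from hωzd.deriv]
    simp only [Pi.pow_apply]
    push_cast
    field_simp
    ring
  have hdp : HasDerivAt (fun z => deriv p z) (deriv (deriv p) 0) 0 :=
    ((hp'a 0 h0mem).differentiableAt).hasDerivAt
  have hnum := hdp.mul ((hp0d.pow 2).add_const 1)
  have hden := (hp0d.pow 2).const_mul (2:ℂ)
  have h2p0sq : (2:ℂ) * p 0 ^ 2 ≠ 0 := by rw [hp0]; norm_num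
  have hE := hnum.div hden h2p0sq
  rw [hIt2 ω, hevω.deriv_eq, show deriv (fun z => deriv p z * (p z ^ 2 + 1) / (2 * p z ^ 2)) 0 = _ from hE.deriv]
  simp only [Pi.pow_apply, Pi.mul_apply]
  rw [hp0, hdp0, hP2]
  push_cast
  field_simp
  ring

lemma aux_lt_one {w : ℂ → ℂ} (hd : DifferentiableOn ℂ w (ball (0:ℂ) 1))
    (hle : ∀ z ∈ ball (0:ℂ) 1, ‖w z‖ ≤ 1) (h0 : w 0 = 0) :
    ∀ z ∈ ball (0:ℂ) 1, ‖w z‖ < 1 := by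
  intro z hz
  rcases lt_or_eq_of_le (hle z hz) with h | h
  · exact h
  · exfalso
    have hmax : IsMaxOn (norm ∘ w) (ball (0:ℂ) 1) z := by
      intro y hy
      simp only [comp_apply, mem_setOf_eq]
      show ‖w y‖ ≤ ‖w z‖
      calc ‖w y‖ ≤ 1 := hle y hy
        _ = ‖w z‖ := h.symm ▸ rfl
    have hcon := Complex.eqOn_of_isPreconnected_of_isMaxOn_norm
      (convex_ball (0:ℂ) 1).isPreconnected isOpen_ball hd hz hmax
    have h1 : w 0 = w z := hcon (mem_ball_self one_pos)
    rw [h0] at h1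
    rw [← h1] at h
    simp at h

/-- If `f` belongs to the class `S*_☾` of starlike functions associated with the lune, then
`|Γ₂| - |Γ₁| ≥ -1/√10`, where `Γ₁ = -a₂/2` and `Γ₂ = -a₃/2 + 3a₂²/4` are the first two inverse
logarithmic coefficients of `f`. -/
theorem abs_Gamma2_sub_abs_Gamma1_ge_of_starlike_lune
    (f : ℂ → ℂ)
    (hf : DifferentiableOn ℂ f (ball (0 : ℂ) 1))
    (hf0 : f 0 = 0) (hf1 : deriv f 0 = 1)
    (hinj : Set.InjOn f (ball (0 : ℂ) 1))
    (hlune : ∀ z ∈ ball (0 : ℂ) 1, z ≠ 0 →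
      f z ≠ 0 ∧
      ‖(z * deriv f z / f z) ^ 2 - 1‖ ≤ 2 * ‖z * deriv f z / f z‖)
    (a₂ a₃ Γ₁ Γ₂ : ℂ)
    (ha₂ : a₂ = iteratedDeriv 2 f 0 / 2)
    (ha₃ : a₃ = iteratedDeriv 3 f 0 / 6)
    (hΓ₁ : Γ₁ = -a₂ / 2)
    (hΓ₂ : Γ₂ = -a₃ / 2 + 3 * a₂ ^ 2 / 4) :
    ‖Γ₂‖ - ‖Γ₁‖ ≥ -(1 / Real.sqrt 10) := by
  have hopen : IsOpen (ball (0:ℂ) 1) := isOpen_ball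
  have hball : ball (0:ℂ) 1 ∈ nhds (0:ℂ) := ball_mem_nhds _ one_pos
  have h0mem : (0:ℂ) ∈ ball (0:ℂ) 1 := mem_ball_self one_pos
  -- g = dslope f 0 does not vanish on the ball
  have hgne : ∀ z ∈ ball (0:ℂ) 1, dslope f 0 z ≠ 0 := by
    intro z hz
    by_cases hz0 : z = 0
    · subst hz0
      rw [dslope_same, hf1]
      exact one_ne_zero
    · rw [dslope_of_ne f hz0, slope_def_field, hf0, sub_zero, sub_zero]
      exact div_ne_zero (hlune z hz hz0).1 hz0
  have hgval : ∀ z ∈ ball (0:ℂ) 1, z ≠ 0 → dslope f 0 z = f z / z := by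
    intro z hz hz0
    rw [dslope_of_ne f hz0, slope_def_field, hf0, sub_zero, sub_zero]
  set g := dslope f 0 with hgdef
  set p := fun z => deriv f z / g z with hpdef
  set ω := fun z => (p z ^ 2 - 1) / (2 * p z) with hωdef
  have hg0 : g 0 = 1 := by rw [hgdef, dslope_same]; exact hf1
  have hp0 : p 0 = 1 := by rw [hpdef]; simp [hg0, hf1]
  -- lune condition for p on the whole ball
  have hplune : ∀ z ∈ ball (0:ℂ) 1,
      ‖p z ^ 2 - 1‖ ≤ 2 * ‖p z‖ := by
    intro z hz
    by_cases hz0 : z = 0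
    · subst hz0; rw [hp0]; simp
    · have hpz : p z = z * deriv f z / f z := by
        rw [hpdef]
        simp only
        rw [hgval z hz hz0, div_div_eq_mul_div, mul_comm]
      rw [hpz]
      exact (hlune z hz hz0).2
  have hpne : ∀ z ∈ ball (0:ℂ) 1, p z ≠ 0 := by
    intro z hz hcon
    have := hplune z hz
    rw [hcon] at this
    simp at this
    linarith
  -- analytic structure
  have hgd : DifferentiableOn ℂ g (ball (0:ℂ) 1) := (differentiableOn_dslope hball).mpr hf
  have hga : AnalyticOnNhd ℂ g (ball (0:ℂ) 1) := hgd.analyticOnNhd hopen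
  have hfa : AnalyticOnNhd ℂ f (ball (0:ℂ) 1) := hf.analyticOnNhd hopen
  have hpa : AnalyticOnNhd ℂ p (ball (0:ℂ) 1) := hfa.deriv.div hga hgne
  have hpd : DifferentiableOn ℂ p (ball (0:ℂ) 1) := hpa.differentiableOn
  have hωd : DifferentiableOn ℂ ω (ball (0:ℂ) 1) := by
    apply DifferentiableOn.div
    · exact (hpd.pow 2).sub_const 1
    · exact (differentiableOn_const _).mul hpd
    · intro z hz
      exact mul_ne_zero two_ne_zero (hpne z hz)
  have hω0 : ω 0 = 0 := by rw [hωdef]; simp [hp0]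
  have hωle : ∀ z ∈ ball (0:ℂ) 1, ‖ω z‖ ≤ 1 := by
    intro z hz
    rw [hωdef]
    simp only
    rw [norm_div, norm_mul, Complex.norm_two]
    have hpos : 0 < 2 * ‖p z‖ := by
      have := hpne z hz
      have : 0 < ‖p z‖ := norm_pos_iff.mpr this
      linarith
    rw [div_le_one hpos]
    exact hplune z hz
  have hmaps : MapsTo ω (ball (0:ℂ) 1) (ball (0:ℂ) 1) := by
    intro z hz
    simp only [mem_ball, dist_zero_right]
    exact aux_lt_one hωd hωle hω0 z hz
  -- Schwarz-Pick
  have key := aux_schwarz_pick hωd hmaps hω0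
  have hωa : AnalyticAt ℂ ω 0 := hωd.analyticAt (hopen.mem_nhds h0mem)
  rw [aux_deriv_dslope hωa] at key
  obtain ⟨hd1, hd2⟩ := aux_omega_derivs hf hf1 hgne
  have hd1' : deriv ω 0 = a₂ := by rw [hωdef, hpdef, hgdef] at *; rw [hd1, ha₂]
  have hd2' : iteratedDeriv 2 ω 0 = 4 * a₃ - 3 * a₂ ^ 2 := by
    rw [hωdef, hpdef, hgdef] at *
    rw [hd2, ha₂, ha₃]
    ring
  rw [hd1', hd2'] at key
  -- numeric conclusion
  set W : ℂ := (4 * a₃ - 3 * a₂ ^ 2) / 2 with hWdef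
  have hΓ₂W : Γ₂ = 3 * a₂ ^ 2 / 8 - W / 4 := by rw [hΓ₂, hWdef]; ring
  set t := ‖a₂‖ with htdef
  set u := ‖W‖ with hudef
  have hkey : u ≤ 1 - t ^ 2 := key
  have hAΓ : 3 * t ^ 2 / 8 - u / 4 ≤ ‖Γ₂‖ := by
    have h1 : ‖3 * a₂ ^ 2 / 8‖ = 3 * t ^ 2 / 8 := by
      rw [norm_div, norm_mul, norm_pow, ← htdef]
      norm_num
    have h2 : ‖W / 4‖ = u / 4 := by
      rw [norm_div, ← hudef]
      norm_num
    have hsub : ‖3 * a₂ ^ 2 / 8‖ - ‖W / 4‖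
        ≤ ‖3 * a₂ ^ 2 / 8 - W / 4‖ := by
      exact norm_sub_norm_le _ _
    rw [← hΓ₂W] at hsub
    linarith
  have hΓ₁abs : ‖Γ₁‖ = t / 2 := by
    rw [hΓ₁, norm_div, norm_neg, ← htdef]
    norm_num
  rw [hΓ₁abs]
  -- real arithmetic
  have hΓ₂nn : 0 ≤ ‖Γ₂‖ := norm_nonneg _
  have htnn : 0 ≤ t := norm_nonneg _
  have hunn : 0 ≤ u := norm_nonneg _
  set r : ℝ := 1 / Real.sqrt 10 with hrdef
  have hs0 : (0:ℝ) < Real.sqrt 10 := Real.sqrt_pos.mpr (by norm_num)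
  have hs2 : Real.sqrt 10 ^ 2 = 10 := Real.sq_sqrt (by norm_num)
  have hs5 : Real.sqrt 10 ≤ 5 := by nlinarith [hs0]
  have hr0 : 0 < r := by positivity
  have hr2 : r ^ 2 = 1 / 10 := by
    rw [hrdef, div_pow, hs2, one_pow]
  have hr5 : 1 / 5 ≤ r := by
    rw [hrdef]
    apply one_div_le_one_div_of_le hs0 hs5
  show ‖Γ₂‖ - t / 2 ≥ -r
  by_cases ht : t ≤ 2 * r
  · linarith
  · push_neg at ht
    have h2 : 0 ≤ 5 * t / 8 + 5 * r / 4 - 1 / 2 := by nlinarith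
    have h3 : 0 ≤ (t - 2 * r) * (5 * t / 8 + 5 * r / 4 - 1 / 2) :=
      mul_nonneg (by linarith) h2
    nlinarith
end

section
/- There exists a function f in the class S*_☾ of starlike functions associated with the lune whose first two inverse logarithmic coefficients Γ₁ = −a₂/2 and Γ₂ = −a₃/2 + 3a₂²/4 satisfy |Γ₂| − |Γ₁| = −1/√10; hence the lower bound |Γ₂| − |Γ₁| ≥ −1/√10 for S*_☾ is sharp. -/
open Complex Metric

noncomputable section
namespace LuneExt

open Set intervalIntegral MeasureTheory Filter

def tc : ℂ := (Real.sqrt (2/5) : ℝ)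

lemma tr_pos : 0 < Real.sqrt (2/5) := Real.sqrt_pos.2 (by norm_num)
lemma tr_lt_one : Real.sqrt (2/5) < 1 := by
  rw [show (1:ℝ) = Real.sqrt 1 by simp]
  exact Real.sqrt_lt_sqrt (by norm_num) (by norm_num)
lemma tc_sq : tc ^ 2 = 2/5 := by
  have : (Real.sqrt (2/5)) ^ 2 = 2/5 := Real.sq_sqrt (by norm_num)
  rw [tc]
  norm_cast
  rw [this]; norm_num
lemma tc_re : tc.re = Real.sqrt (2/5) := rfl
lemma tc_im : tc.im = 0 := rfl
lemma abs_tc : ‖tc‖ = Real.sqrt (2/5) := by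
  rw [tc, Complex.norm_real, Real.norm_eq_abs, abs_of_pos tr_pos]

def MM (z : ℂ) : ℂ := (z + tc) / (1 + tc * z)
def ww (z : ℂ) : ℂ := z * MM z
def PP (z : ℂ) : ℂ := 1 + ww z ^ 2
def SS (z : ℂ) : ℂ := Complex.exp ((1/2 : ℂ) * Complex.log (PP z))
def gg (z : ℂ) : ℂ := MM z * (1 + ww z / (1 + SS z))
def GG (z : ℂ) : ℂ := ∫ s in (0:ℝ)..1, z * gg ((s : ℂ) * z)
def ff (z : ℂ) : ℂ := z * Complex.exp (GG z)
def qq (z : ℂ) : ℂ := 1 + z * gg z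

section basic
variable {z : ℂ} (hz : ‖z‖ < 1)
include hz

lemma den_ne : 1 + tc * z ≠ 0 := by
  intro h
  have h1 : ‖tc * z‖ < 1 := by
    rw [norm_mul, abs_tc]
    calc Real.sqrt (2/5) * ‖z‖ ≤ 1 * ‖z‖ := by
          apply mul_le_mul_of_nonneg_right tr_lt_one.le (norm_nonneg z)
      _ = ‖z‖ := one_mul _
      _ < 1 := hz
  have : ‖tc * z‖ = 1 := by
    have : tc * z = -1 := by linear_combination h
    rw [this]; simp
  linarith
lemma abs_M_le : ‖MM z‖ ≤ 1 := by
  rw [MM, norm_div]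
  rw [div_le_one (by
    have h := den_ne hz
    exact (norm_pos_iff.2 h))]
  -- |z+tc| ≤ |1+tc z|
  have h1 : Complex.normSq (z + tc) ≤ Complex.normSq (1 + tc * z) := by
    simp only [Complex.normSq_apply, Complex.add_re, Complex.add_im, Complex.one_re,
      Complex.one_im, Complex.mul_re, Complex.mul_im, tc_re, tc_im]
    have hz2 : z.re ^ 2 + z.im ^ 2 < 1 := by
      have h1 : Complex.normSq z < 1 := by
        have : ‖z‖ ^ 2 < 1 := pow_lt_one₀ (norm_nonneg z) hz (by norm_num)
        rwa [Complex.sq_norm] at this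
      rw [Complex.normSq_apply] at h1
      nlinarith
    have ht2 : (Real.sqrt (2/5)) ^ 2 = 2/5 := Real.sq_sqrt (by norm_num)
    nlinarith [ht2, hz2, tr_pos]
  have := Real.sqrt_le_sqrt h1
  simpa [Complex.norm_def] using this

lemma abs_w_le : ‖ww z‖ ≤ ‖z‖ := by
  rw [ww, norm_mul]
  calc ‖z‖ * ‖MM z‖ ≤ ‖z‖ * 1 :=
        mul_le_mul_of_nonneg_left (abs_M_le hz) (norm_nonneg z)
    _ = ‖z‖ := mul_one _

lemma abs_w_lt : ‖ww z‖ < 1 := lt_of_le_of_lt (abs_w_le hz) hz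

lemma PP_re_pos : 0 < (PP z).re := by
  have h1 : ‖ww z ^ 2‖ < 1 := by
    rw [norm_pow]
    exact pow_lt_one₀ (norm_nonneg _) (abs_w_lt hz) (by norm_num)
  have h2 : |(ww z ^ 2).re| ≤ ‖ww z ^ 2‖ := Complex.abs_re_le_norm _
  rw [PP, Complex.add_re, Complex.one_re]
  have := abs_le.1 h2
  linarith

lemma PP_ne : PP z ≠ 0 := by
  intro h
  have := PP_re_pos hz
  rw [h] at this; simp at this

lemma SS_sq : SS z ^ 2 = PP z := by
  rw [SS, sq, ← Complex.exp_add]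
  have h : (1/2 : ℂ) * Complex.log (PP z) + (1/2 : ℂ) * Complex.log (PP z) = Complex.log (PP z) := by ring
  rw [h, Complex.exp_log (PP_ne hz)]

lemma SS_re_pos : 0 < (SS z).re := by
  rw [SS, Complex.exp_re]
  apply mul_pos (Real.exp_pos _)
  apply Real.cos_pos_of_mem_Ioo
  have harg : |Complex.arg (PP z)| < Real.pi / 2 :=
    Complex.abs_arg_lt_pi_div_two_iff.2 (Or.inl (PP_re_pos hz))
  have him : ((1/2 : ℂ) * Complex.log (PP z)).im = Complex.arg (PP z) / 2 := by
    simp [Complex.mul_im, Complex.log_im]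
    ring
  rw [him]
  constructor
  · nlinarith [abs_lt.1 harg, Real.pi_pos]
  · nlinarith [abs_lt.1 harg, Real.pi_pos]

lemma SS_ne : SS z ≠ 0 := Complex.exp_ne_zero _
lemma one_add_SS_ne : 1 + SS z ≠ 0 := by
  intro h
  have h2 : (1 + SS z).re = 0 := by rw [h]; rfl
  rw [Complex.add_re, Complex.one_re] at h2
  have := SS_re_pos hz
  linarith

lemma z_mul_gg : z * gg z = ww z + SS z - 1 := by
  have hw2 : ww z ^ 2 = (SS z - 1) * (SS z + 1) := by
    have := SS_sq hz
    rw [PP] at this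
    linear_combination -this
  rw [gg]
  have h1 : z * (MM z * (1 + ww z / (1 + SS z))) = ww z * (1 + ww z / (1 + SS z)) := by
    rw [ww]; ring
  rw [h1]
  have hne := one_add_SS_ne hz
  field_simp
  linear_combination hw2

lemma qq_eq : qq z = ww z + SS z := by
  rw [qq, z_mul_gg hz]; ring

lemma lune_identity : qq z ^ 2 - 1 = 2 * ww z * qq z := by
  rw [qq_eq hz]
  have := SS_sq hz
  rw [PP] at this
  linear_combination this

lemma lune_ineq : ‖qq z ^ 2 - 1‖ ≤ 2 * ‖qq z‖ := by
  rw [lune_identity hz]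
  rw [show (2:ℂ) * ww z * qq z = 2 * (ww z * qq z) by ring]
  rw [norm_mul, norm_mul]
  simp only [Complex.norm_two]
  have h1 : ‖ww z‖ * ‖qq z‖ ≤ 1 * ‖qq z‖ :=
    mul_le_mul_of_nonneg_right (abs_w_lt hz).le (norm_nonneg _)
  nlinarith [norm_nonneg (qq z)]

end basic

def MM' (z : ℂ) : ℂ := (1 - tc ^ 2) / (1 + tc * z) ^ 2
def ww' (z : ℂ) : ℂ := MM z + z * MM' z
def SS' (z : ℂ) : ℂ := SS z * (ww z * ww' z / PP z)
def gg' (z : ℂ) : ℂ :=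
  MM' z * (1 + ww z / (1 + SS z)) +
    MM z * ((ww' z * (1 + SS z) - ww z * SS' z) / (1 + SS z) ^ 2)
def qq' (z : ℂ) : ℂ := gg z + z * gg' z

section derivs
variable {z : ℂ} (hz : ‖z‖ < 1)
include hz

lemma hasDerivAt_MM : HasDerivAt MM (MM' z) z := by
  have h1 : HasDerivAt (fun z : ℂ => z + tc) 1 z := (hasDerivAt_id z).add_const tc
  have h2 : HasDerivAt (fun z : ℂ => 1 + tc * z) tc z := by
    simpa using ((hasDerivAt_id z).const_mul tc).const_add 1
  have := h1.div h2 (den_ne hz)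
  refine this.congr_deriv ?_
  rw [MM']
  field_simp
  ring

lemma hasDerivAt_ww : HasDerivAt ww (ww' z) z := by
  have := (hasDerivAt_id z).mul (hasDerivAt_MM hz)
  exact this.congr_deriv (by simp [ww'])

lemma hasDerivAt_PP : HasDerivAt PP (2 * ww z * ww' z) z := by
  have := ((hasDerivAt_ww hz).pow 2).const_add 1
  exact this.congr_deriv (by simp)

lemma hasDerivAt_SS : HasDerivAt SS (SS' z) z := by
  have hlog : HasDerivAt (fun z => Complex.log (PP z)) ((PP z)⁻¹ * (2 * ww z * ww' z)) z := by
    have h0 : PP z ∈ Complex.slitPlane := Or.inl (PP_re_pos hz)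
    exact (Complex.hasDerivAt_log h0).comp z (hasDerivAt_PP hz)
  have h2 : HasDerivAt (fun z => (1/2 : ℂ) * Complex.log (PP z))
      ((1/2 : ℂ) * ((PP z)⁻¹ * (2 * ww z * ww' z))) z := hlog.const_mul _
  have h3 := (Complex.hasDerivAt_exp _).comp z h2
  refine h3.congr_deriv ?_
  rw [SS', SS]
  field_simp

lemma hasDerivAt_gg : HasDerivAt gg (gg' z) z := by
  have hB : HasDerivAt (fun z => 1 + ww z / (1 + SS z))
      ((ww' z * (1 + SS z) - ww z * SS' z) / (1 + SS z) ^ 2) z := by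
    have hden : HasDerivAt (fun z => 1 + SS z) (SS' z) z := (hasDerivAt_SS hz).const_add 1
    exact ((hasDerivAt_ww hz).div hden (one_add_SS_ne hz)).const_add 1
  have := (hasDerivAt_MM hz).mul hB
  exact this.congr_deriv (by rw [gg'])

lemma hasDerivAt_qq : HasDerivAt qq (qq' z) z := by
  have := ((hasDerivAt_id z).mul (hasDerivAt_gg hz)).const_add 1
  exact this.congr_deriv (by simp [qq'])

-- differentiability of gg' (for third derivative)
lemma diff_gg' : DifferentiableAt ℂ gg' z := by
  have hden : DifferentiableAt ℂ (fun z => 1 + tc * z) z := by fun_prop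
  have hMM : DifferentiableAt ℂ MM z := (hasDerivAt_MM hz).differentiableAt
  have hMM' : DifferentiableAt ℂ MM' z := by
    apply DifferentiableAt.div (by fun_prop) (by fun_prop)
    exact pow_ne_zero 2 (den_ne hz)
  have hww : DifferentiableAt ℂ ww z := (hasDerivAt_ww hz).differentiableAt
  have hww' : DifferentiableAt ℂ ww' z := by
    have : DifferentiableAt ℂ (fun z => MM z + z * MM' z) z := by
      apply hMM.add
      exact (differentiableAt_id).mul hMM'
    exact this
  have hSS : DifferentiableAt ℂ SS z := (hasDerivAt_SS hz).differentiableAt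
  have hPP : DifferentiableAt ℂ PP z := (hasDerivAt_PP hz).differentiableAt
  have hSS' : DifferentiableAt ℂ SS' z := by
    apply hSS.mul
    exact (hww.mul hww').div hPP (PP_ne hz)
  have h1S : DifferentiableAt ℂ (fun z => 1 + SS z) z := hSS.const_add 1
  apply DifferentiableAt.add
  · apply hMM'.mul
    apply DifferentiableAt.const_add
    exact hww.div h1S (one_add_SS_ne hz)
  · apply hMM.mul
    apply DifferentiableAt.div
    · exact (hww'.mul h1S).sub (hww.mul hSS')
    · exact h1S.pow 2
    · exact pow_ne_zero 2 (one_add_SS_ne hz)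

end derivs

section GGderiv

lemma cont_gg_at {u : ℂ} (hu : ‖u‖ < 1) : ContinuousAt gg u :=
  (hasDerivAt_gg hu).differentiableAt.continuousAt
lemma cont_gg'_at {u : ℂ} (hu : ‖u‖ < 1) : ContinuousAt gg' u :=
  (diff_gg' hu).continuousAt

lemma abs_coe_mul {x : ℂ} {t : ℝ} (h0 : 0 ≤ t) (h1 : t ≤ 1) :
    ‖(t:ℂ) * x‖ ≤ ‖x‖ := by
  rw [norm_mul, Complex.norm_real, Real.norm_eq_abs, _root_.abs_of_nonneg h0]
  calc t * ‖x‖ ≤ 1 * ‖x‖ :=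
        mul_le_mul_of_nonneg_right h1 (norm_nonneg x)
    _ = ‖x‖ := one_mul _

lemma contAt_scale {x : ℂ} (t : ℝ) : ContinuousAt (fun t : ℝ => (t:ℂ) * x) t :=
  (Complex.continuous_ofReal.mul continuous_const).continuousAt

lemma contWithin_integrand {x : ℂ} (hx : ‖x‖ < 1) :
    ContinuousOn (fun t : ℝ => gg ((t:ℂ) * x) + x * (gg' ((t:ℂ) * x) * (t:ℂ)))
      (Set.uIcc (0:ℝ) 1) := by
  intro t ht
  rw [Set.uIcc_of_le (by norm_num : (0:ℝ) ≤ 1)] at ht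
  have habs : ‖(t:ℂ) * x‖ < 1 := lt_of_le_of_lt (abs_coe_mul ht.1 ht.2) hx
  apply ContinuousWithinAt.add
  · exact (ContinuousAt.comp (f := fun t : ℝ => (t:ℂ) * x)
      (cont_gg_at habs) (contAt_scale t)).continuousWithinAt
  · exact (continuousAt_const.mul ((ContinuousAt.comp (f := fun t : ℝ => (t:ℂ) * x)
      (cont_gg'_at habs) (contAt_scale t)).mul
        Complex.continuous_ofReal.continuousAt)).continuousWithinAt

lemma contOn_F {x : ℂ} (hx : ‖x‖ < 1) :
    ContinuousOn (fun t : ℝ => x * gg ((t:ℂ) * x)) (Set.uIcc (0:ℝ) 1) := by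
  intro t ht
  rw [Set.uIcc_of_le (by norm_num : (0:ℝ) ≤ 1)] at ht
  have habs : ‖(t:ℂ) * x‖ < 1 := lt_of_le_of_lt (abs_coe_mul ht.1 ht.2) hx
  exact (continuousAt_const.mul (ContinuousAt.comp (f := fun t : ℝ => (t:ℂ) * x)
    (cont_gg_at habs) (contAt_scale t))).continuousWithinAt

lemma uIoc_sub : Set.uIoc (0:ℝ) 1 ⊆ Set.uIcc (0:ℝ) 1 := by
  rw [Set.uIoc_of_le (by norm_num : (0:ℝ) ≤ 1), Set.uIcc_of_le (by norm_num : (0:ℝ) ≤ 1)]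
  exact Set.Ioc_subset_Icc_self

lemma hasDerivAt_GG {z₀ : ℂ} (h : ‖z₀‖ < 1) : HasDerivAt GG (gg z₀) z₀ := by
  set r : ℝ := (1 + ‖z₀‖) / 2 with hr
  have hr1 : r < 1 := by rw [hr]; linarith
  have hr0 : ‖z₀‖ < r := by rw [hr]; linarith [norm_nonneg z₀]
  set ε : ℝ := r - ‖z₀‖ with hε
  have hεpos : 0 < ε := by rw [hε]; linarith
  have hball_sub : ∀ x ∈ ball z₀ ε, ‖x‖ < r := by
    intro x hx
    rw [mem_ball, dist_eq_norm] at hx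
    have h2 := norm_sub_norm_le x z₀
    rw [hε] at hx
    linarith
  have hcompact : IsCompact (closedBall (0:ℂ) r) := isCompact_closedBall _ _
  have hcont_gg : ContinuousOn gg (closedBall (0:ℂ) r) := by
    intro u hu
    rw [mem_closedBall, dist_zero_right] at hu
    exact (cont_gg_at (lt_of_le_of_lt hu hr1)).continuousWithinAt
  have hcont_gg' : ContinuousOn gg' (closedBall (0:ℂ) r) := by
    intro u hu
    rw [mem_closedBall, dist_zero_right] at hu
    exact (cont_gg'_at (lt_of_le_of_lt hu hr1)).continuousWithinAt
  obtain ⟨C1, hC1⟩ := hcompact.exists_bound_of_continuousOn hcont_gg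
  obtain ⟨C2, hC2⟩ := hcompact.exists_bound_of_continuousOn hcont_gg'
  have hmemcb : ∀ (x : ℂ), ‖x‖ < r → ∀ t : ℝ, 0 ≤ t → t ≤ 1 →
      ((t:ℂ) * x) ∈ closedBall (0:ℂ) r := by
    intro x hx t ht0 ht1
    rw [mem_closedBall, dist_zero_right]
    exact le_trans (abs_coe_mul ht0 ht1) hx.le
  -- six hypotheses
  have meas1 : ∀ᶠ (x : ℂ) in nhds z₀,
      AEStronglyMeasurable (fun t : ℝ => x * gg ((t:ℂ) * x))
        (MeasureTheory.volume.restrict (Set.uIoc (0:ℝ) 1)) := by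
    filter_upwards [Metric.ball_mem_nhds z₀ hεpos] with x hx
    exact ((contOn_F (lt_of_lt_of_le (hball_sub x hx) hr1.le)).mono
      uIoc_sub).aestronglyMeasurable measurableSet_uIoc
  have int1 : IntervalIntegrable (fun t : ℝ => z₀ * gg ((t:ℂ) * z₀))
      MeasureTheory.volume 0 1 := (contOn_F h).intervalIntegrable
  have meas2 : AEStronglyMeasurable
      (fun t : ℝ => gg ((t:ℂ) * z₀) + z₀ * (gg' ((t:ℂ) * z₀) * (t:ℂ)))
      (MeasureTheory.volume.restrict (Set.uIoc (0:ℝ) 1)) :=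
    ((contWithin_integrand h).mono uIoc_sub).aestronglyMeasurable measurableSet_uIoc
  have bound1 : ∀ᵐ (t : ℝ) ∂MeasureTheory.volume, t ∈ Set.uIoc (0:ℝ) 1 →
      ∀ x ∈ ball z₀ ε,
        ‖gg ((t:ℂ) * x) + x * (gg' ((t:ℂ) * x) * (t:ℂ))‖ ≤ ‖C1‖ + ‖C2‖ := by
    apply Filter.Eventually.of_forall
    intro t ht x hx
    rw [Set.uIoc_of_le (by norm_num : (0:ℝ) ≤ 1)] at ht
    have ht0 : 0 ≤ t := ht.1.le
    have ht1 : t ≤ 1 := ht.2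
    have hxr := hball_sub x hx
    have hmem := hmemcb x hxr t ht0 ht1
    have hb1 : ‖gg ((t:ℂ) * x)‖ ≤ ‖C1‖ := le_trans (hC1 _ hmem) (le_abs_self _)
    have hb2 : ‖gg' ((t:ℂ) * x)‖ ≤ ‖C2‖ := le_trans (hC2 _ hmem) (le_abs_self _)
    calc ‖gg ((t:ℂ) * x) + x * (gg' ((t:ℂ) * x) * (t:ℂ))‖
        ≤ ‖gg ((t:ℂ) * x)‖ + ‖x * (gg' ((t:ℂ) * x) * (t:ℂ))‖ := norm_add_le _ _
      _ ≤ ‖C1‖ + ‖C2‖ := by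
          apply add_le_add hb1
          rw [norm_mul, norm_mul]
          have hx1 : ‖x‖ ≤ 1 := by
            exact (lt_of_lt_of_le hxr hr1.le).le
          have hT : ‖((t:ℂ))‖ ≤ 1 := by
            rw [Complex.norm_real, Real.norm_eq_abs, _root_.abs_of_nonneg ht0]
            exact ht1
          calc ‖x‖ * (‖gg' ((t:ℂ) * x)‖ * ‖((t:ℂ))‖) ≤ 1 * (‖C2‖ * 1) := by
                apply mul_le_mul hx1 _ (by positivity) (by norm_num)
                exact mul_le_mul hb2 hT (by positivity) (by positivity)
            _ = ‖C2‖ := by ring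
  have bint : IntervalIntegrable (fun _ : ℝ => ‖C1‖ + ‖C2‖)
      MeasureTheory.volume 0 1 := intervalIntegrable_const
  have diff1 : ∀ᵐ (t : ℝ) ∂MeasureTheory.volume, t ∈ Set.uIoc (0:ℝ) 1 →
      ∀ x ∈ ball z₀ ε,
        HasDerivAt (fun x : ℂ => x * gg ((t:ℂ) * x))
          (gg ((t:ℂ) * x) + x * (gg' ((t:ℂ) * x) * (t:ℂ))) x := by
    apply Filter.Eventually.of_forall
    intro t ht x hx
    rw [Set.uIoc_of_le (by norm_num : (0:ℝ) ≤ 1)] at ht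
    have hxr := hball_sub x hx
    have habs : ‖(t:ℂ) * x‖ < 1 :=
      lt_of_le_of_lt (abs_coe_mul ht.1.le ht.2) (lt_of_lt_of_le hxr hr1.le)
    have h1 : HasDerivAt (fun x : ℂ => (t:ℂ) * x) (t:ℂ) x := by
      simpa using ((hasDerivAt_id x).const_mul ((t:ℂ)))
    have h2 : HasDerivAt (fun x : ℂ => gg ((t:ℂ) * x)) (gg' ((t:ℂ) * x) * (t:ℂ)) x :=
      (hasDerivAt_gg habs).comp _ h1
    have := (hasDerivAt_id x).mul h2
    exact this.congr_deriv (by simp)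
  have main := intervalIntegral.hasDerivAt_integral_of_dominated_loc_of_deriv_le
    (F := fun (x : ℂ) (t : ℝ) => x * gg ((t:ℂ) * x))
    (F' := fun (x : ℂ) (t : ℝ) => gg ((t:ℂ) * x) + x * (gg' ((t:ℂ) * x) * (t:ℂ)))
    (Metric.ball_mem_nhds z₀ hεpos) meas1 int1 meas2 bound1 bint diff1
  have hder := main.2
  have hftc : (∫ t in (0:ℝ)..1,
      (gg ((t:ℂ) * z₀) + z₀ * (gg' ((t:ℂ) * z₀) * (t:ℂ)))) = gg z₀ := by
    have heq : ∀ s ∈ Set.uIcc (0:ℝ) 1,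
        HasDerivAt (fun s : ℝ => (s:ℂ) * gg ((s:ℂ) * z₀))
          (gg ((s:ℂ) * z₀) + z₀ * (gg' ((s:ℂ) * z₀) * (s:ℂ))) s := by
      intro s hs
      rw [Set.uIcc_of_le (by norm_num : (0:ℝ) ≤ 1)] at hs
      have habs : ‖(s:ℂ) * z₀‖ < 1 :=
        lt_of_le_of_lt (abs_coe_mul hs.1 hs.2) h
      have hc : HasDerivAt (fun u : ℂ => u * gg (u * z₀))
          (1 * gg ((s:ℂ) * z₀) + (s:ℂ) * (gg' ((s:ℂ) * z₀) * z₀)) (s:ℂ) := by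
        have h1 : HasDerivAt (fun u : ℂ => u * z₀) z₀ (s:ℂ) := by
          simpa using (hasDerivAt_id ((s:ℂ))).mul_const z₀
        have h2a : HasDerivAt (gg ∘ fun u : ℂ => u * z₀) (gg' ((s:ℂ) * z₀) * z₀) (s:ℂ) :=
          (hasDerivAt_gg habs).comp ((s:ℂ)) h1
        have h2 : HasDerivAt (fun u : ℂ => gg (u * z₀)) (gg' ((s:ℂ) * z₀) * z₀) (s:ℂ) := h2a
        exact (hasDerivAt_id ((s:ℂ))).mul h2
      have := hc.comp_ofReal
      convert this using 1
      ring
    have hint2 := ContinuousOn.intervalIntegrable (μ := MeasureTheory.volume) (contWithin_integrand h)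
    have := intervalIntegral.integral_eq_sub_of_hasDerivAt heq hint2
    rw [this]
    push_cast
    simp
  rw [hftc] at hder
  exact hder

end GGderiv

-- values at 0
lemma MM_zero : MM 0 = tc := by rw [MM]; simp
lemma ww_zero : ww 0 = 0 := by rw [ww]; simp
lemma PP_zero : PP 0 = 1 := by rw [PP, ww_zero]; simp
lemma SS_zero : SS 0 = 1 := by rw [SS, PP_zero, Complex.log_one]; simp
lemma gg_zero : gg 0 = tc := by rw [gg, MM_zero, ww_zero, SS_zero]; simp
lemma qq_zero : qq 0 = 1 := by rw [qq]; simp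
lemma GG_zero : GG 0 = 0 := by rw [GG]; simp
lemma MM'_zero : MM' 0 = 1 - tc ^ 2 := by rw [MM']; simp
lemma ww'_zero : ww' 0 = tc := by rw [ww', MM_zero]; simp
lemma SS'_zero : SS' 0 = 0 := by rw [SS', ww_zero]; simp
lemma gg'_zero : gg' 0 = 1 - tc ^ 2 / 2 := by
  rw [gg', MM'_zero, MM_zero, ww_zero, ww'_zero, SS_zero, SS'_zero]
  have : (1 : ℂ) + 1 ≠ 0 := by norm_num
  field_simp
  ring
lemma qq'_zero : qq' 0 = tc := by rw [qq', gg_zero]; simp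

-- derivative of ff
lemma hasDerivAt_ff {z : ℂ} (hz : ‖z‖ < 1) :
    HasDerivAt ff (qq z * Complex.exp (GG z)) z := by
  have hEa : HasDerivAt (Complex.exp ∘ GG) (Complex.exp (GG z) * gg z) z :=
    (Complex.hasDerivAt_exp (GG z)).comp z (hasDerivAt_GG hz)
  have hE : HasDerivAt (fun z => Complex.exp (GG z)) (Complex.exp (GG z) * gg z) z := hEa
  have := (hasDerivAt_id z).mul hE
  refine this.congr_deriv ?_
  rw [qq]
  simp only [id_eq]
  ring

lemma ff_zero : ff 0 = 0 := by rw [ff]; simp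

lemma deriv_ff {z : ℂ} (hz : ‖z‖ < 1) :
    deriv ff z = qq z * Complex.exp (GG z) := (hasDerivAt_ff hz).deriv

-- positivity of Re qq on the ball
lemma qq_re_ne {z : ℂ} (hz : ‖z‖ < 1) : (qq z).re ≠ 0 := by
  intro h0
  set y : ℝ := (qq z).im with hy
  have hqq : qq z = (y : ℂ) * Complex.I := by
    apply Complex.ext <;> simp [h0, hy]
  have habsq : ‖qq z‖ = |y| := by rw [hqq]; simp
  have h1 : qq z ^ 2 - 1 = ((-(y^2+1) : ℝ) : ℂ) := by
    rw [hqq]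
    push_cast
    have : Complex.I ^ 2 = -1 := Complex.I_sq
    rw [mul_pow, this]
    ring
  have h2 : ‖qq z ^ 2 - 1‖ = y ^ 2 + 1 := by
    rw [h1, Complex.norm_real, Real.norm_eq_abs]
    rw [abs_of_nonpos (by nlinarith)]
    ring
  have h3 := lune_identity hz
  have h4 : ‖qq z ^ 2 - 1‖
      = 2 * ‖ww z‖ * ‖qq z‖ := by
    rw [h3]
    rw [norm_mul, norm_mul, Complex.norm_two]
  rw [h2, habsq] at h4
  have h5 : ‖ww z‖ ≤ ‖z‖ := abs_w_le hz
  have h6 : ‖ww z‖ ≥ 0 := norm_nonneg _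
  have h7 : |y| ≥ 0 := abs_nonneg y
  have h8 : y ^ 2 = |y| ^ 2 := (_root_.sq_abs y).symm
  nlinarith [sq_nonneg (|y| - 1)]

lemma qq_re_pos {z : ℂ} (hz : ‖z‖ < 1) : 0 < (qq z).re := by
  set s : Set ℝ := (fun z => (qq z).re) '' (ball (0:ℂ) 1) with hs
  have hcont : ContinuousOn (fun z => (qq z).re) (ball (0:ℂ) 1) := by
    intro u hu
    rw [mem_ball, dist_zero_right] at hu
    exact (Complex.continuous_re.continuousAt.comp
      (hasDerivAt_qq hu).differentiableAt.continuousAt).continuousWithinAt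
  have hpc : IsPreconnected s :=
    ((convex_ball (0:ℂ) 1).isPreconnected).image _ hcont
  have h1 : (1:ℝ) ∈ s := by
    refine ⟨0, by simp, ?_⟩
    show (qq 0).re = 1
    rw [qq_zero]; simp
  have h0 : (0:ℝ) ∉ s := by
    rintro ⟨u, hu, hu0⟩
    rw [mem_ball, dist_zero_right] at hu
    exact qq_re_ne hu hu0
  have hmem : (qq z).re ∈ s := by
    refine ⟨z, ?_, rfl⟩
    rw [mem_ball, dist_zero_right]; exact hz
  by_contra hle
  push_neg at hle
  have : (0:ℝ) ∈ Set.Icc ((qq z).re) 1 := ⟨hle, by norm_num⟩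
  exact h0 (hpc.Icc_subset hmem h1 this)

-- the half-plane lift
def Φ (ζ : ℂ) : ℂ := ζ + GG (Complex.exp ζ)

lemma abs_exp_lt {ζ : ℂ} (h : ζ.re < 0) : ‖Complex.exp ζ‖ < 1 := by
  rw [Complex.norm_exp]
  calc Real.exp ζ.re < Real.exp 0 := Real.exp_lt_exp.2 h
    _ = 1 := Real.exp_zero

lemma hasDerivAt_Φ {ζ : ℂ} (h : ζ.re < 0) :
    HasDerivAt Φ (qq (Complex.exp ζ)) ζ := by
  have h1a : HasDerivAt (GG ∘ Complex.exp) (gg (Complex.exp ζ) * Complex.exp ζ) ζ :=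
    (hasDerivAt_GG (abs_exp_lt h)).comp ζ (Complex.hasDerivAt_exp ζ)
  have h1 : HasDerivAt (fun ζ => GG (Complex.exp ζ))
      (gg (Complex.exp ζ) * Complex.exp ζ) ζ := h1a
  have := (hasDerivAt_id ζ).add h1
  refine this.congr_deriv ?_
  rw [qq]
  ring

lemma inj_Φ {ζ₁ ζ₂ : ℂ} (h₁ : ζ₁.re < 0) (h₂ : ζ₂.re < 0) (heq : Φ ζ₁ = Φ ζ₂) :
    ζ₁ = ζ₂ := by
  by_contra hne
  set d : ℂ := ζ₂ - ζ₁ with hd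
  have hdne : d ≠ 0 := sub_ne_zero.2 (Ne.symm hne)
  have hre : ∀ s : ℝ, 0 ≤ s → s ≤ 1 → (ζ₁ + (s:ℂ) * d).re < 0 := by
    intro s hs0 hs1
    have hcalc : (ζ₁ + (s:ℂ) * d).re = (1 - s) * ζ₁.re + s * ζ₂.re := by
      simp only [hd, Complex.add_re, Complex.mul_re, Complex.ofReal_re, Complex.ofReal_im,
        Complex.sub_re, Complex.sub_im]
      ring
    rw [hcalc]
    have hA : (1 - s) * ζ₁.re ≤ 0 :=
      mul_nonpos_of_nonneg_of_nonpos (by linarith) h₁.le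
    have hB : s * ζ₂.re ≤ 0 := mul_nonpos_of_nonneg_of_nonpos hs0 h₂.le
    rcases eq_or_lt_of_le hs0 with h0 | h0
    · have : (1 - s) * ζ₁.re + s * ζ₂.re = ζ₁.re := by rw [← h0]; ring
      rw [this]; exact h₁
    · have hB' : s * ζ₂.re < 0 := mul_neg_of_pos_of_neg h0 h₂
      linarith
  set k : ℝ → ℂ := fun s => qq (Complex.exp (ζ₁ + (s:ℂ) * d)) with hk
  have hder : ∀ s ∈ Set.uIcc (0:ℝ) 1,
      HasDerivAt (fun s : ℝ => Φ (ζ₁ + (s:ℂ) * d)) (k s * d) s := by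
    intro s hs
    rw [Set.uIcc_of_le (by norm_num : (0:ℝ) ≤ 1)] at hs
    have hrs := hre s hs.1 hs.2
    have h1 : HasDerivAt (fun u : ℂ => ζ₁ + u * d) d (s:ℂ) := by
      simpa using ((hasDerivAt_id ((s:ℂ))).mul_const d).const_add ζ₁
    have h2a : HasDerivAt (Φ ∘ fun u : ℂ => ζ₁ + u * d)
        (qq (Complex.exp (ζ₁ + (s:ℂ) * d)) * d) (s:ℂ) :=
      (hasDerivAt_Φ hrs).comp ((s:ℂ)) h1
    have h2 : HasDerivAt (fun u : ℂ => Φ (ζ₁ + u * d))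
        (qq (Complex.exp (ζ₁ + (s:ℂ) * d)) * d) (s:ℂ) := h2a
    exact h2.comp_ofReal
  have hcontk : ContinuousOn k (Set.uIcc (0:ℝ) 1) := by
    intro s hs
    rw [Set.uIcc_of_le (by norm_num : (0:ℝ) ≤ 1)] at hs
    have hrs := hre s hs.1 hs.2
    have hc0 : ContinuousAt (fun s : ℝ => Complex.exp (ζ₁ + (s:ℂ) * d)) s :=
      (Complex.continuous_exp.comp
        (continuous_const.add (Complex.continuous_ofReal.mul continuous_const))).continuousAt
    have hcq : ContinuousAt qq (Complex.exp (ζ₁ + (s:ℂ) * d)) :=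
      (hasDerivAt_qq (abs_exp_lt hrs)).differentiableAt.continuousAt
    exact (ContinuousAt.comp (f := fun s : ℝ => Complex.exp (ζ₁ + (s:ℂ) * d))
      hcq hc0).continuousWithinAt
  have hint : IntervalIntegrable k MeasureTheory.volume 0 1 :=
    ContinuousOn.intervalIntegrable (μ := MeasureTheory.volume) hcontk
  have hintd : IntervalIntegrable (fun s => k s * d) MeasureTheory.volume 0 1 :=
    hint.mul_const d
  have hftc := intervalIntegral.integral_eq_sub_of_hasDerivAt hder hintd
  have hval : Φ (ζ₁ + ((1:ℝ):ℂ) * d) - Φ (ζ₁ + ((0:ℝ):ℂ) * d) = 0 := by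
    push_cast
    rw [one_mul]
    have e1 : ζ₁ + d = ζ₂ := by rw [hd]; ring
    have e2 : ζ₁ + (0:ℂ) * d = ζ₁ := by ring
    rw [e1, e2, heq, sub_self]
  rw [hval] at hftc
  have hik : (∫ s in (0:ℝ)..1, k s) * d = 0 := by
    rw [← intervalIntegral.integral_mul_const]
    exact hftc
  have hik0 : (∫ s in (0:ℝ)..1, k s) = 0 := by
    rcases mul_eq_zero.1 hik with h | h
    · exact h
    · exact absurd h hdne
  have hre0 : (∫ s in (0:ℝ)..1, (k s).re) = 0 := by
    have := Complex.reCLM.intervalIntegral_comp_comm hint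
    rw [hik0] at this
    simpa using this
  have hpos : 0 < ∫ s in (0:ℝ)..1, (k s).re := by
    apply intervalIntegral.intervalIntegral_pos_of_pos_on
    · exact ContinuousOn.intervalIntegrable (μ := MeasureTheory.volume)
        (Complex.continuous_re.comp_continuousOn hcontk)
    · intro s hs
      have hrs := hre s hs.1.le hs.2.le
      exact qq_re_pos (abs_exp_lt hrs)
    · norm_num
  rw [hre0] at hpos
  exact lt_irrefl 0 hpos

-- injectivity of ff on the ball
lemma ff_ne_zero {z : ℂ} (hz : z ≠ 0) : ff z ≠ 0 :=
  mul_ne_zero hz (Complex.exp_ne_zero _)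

lemma injOn_ff : Set.InjOn ff (ball (0:ℂ) 1) := by
  intro z₁ h₁ z₂ h₂ heq
  rw [mem_ball, dist_zero_right] at h₁ h₂
  rcases eq_or_ne z₁ 0 with rfl | hz₁
  · rcases eq_or_ne z₂ 0 with rfl | hz₂
    · rfl
    · exact absurd heq.symm (by rw [ff_zero]; exact ff_ne_zero hz₂)
  rcases eq_or_ne z₂ 0 with rfl | hz₂
  · exact absurd heq (by rw [ff_zero]; exact ff_ne_zero hz₁)
  -- both nonzero
  set ζ₁ := Complex.log z₁ with hζ₁
  set ζ₂ := Complex.log z₂ with hζ₂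
  have hre₁ : ζ₁.re < 0 := by
    rw [hζ₁, Complex.log_re]
    exact Real.log_neg (norm_pos_iff.2 hz₁) h₁
  have hre₂ : ζ₂.re < 0 := by
    rw [hζ₂, Complex.log_re]
    exact Real.log_neg (norm_pos_iff.2 hz₂) h₂
  have hexp₁ : Complex.exp ζ₁ = z₁ := Complex.exp_log hz₁
  have hexp₂ : Complex.exp ζ₂ = z₂ := Complex.exp_log hz₂
  have hPhiexp : Complex.exp (Φ ζ₁) = Complex.exp (Φ ζ₂) := by
    rw [Φ, Φ, hexp₁, hexp₂, Complex.exp_add, Complex.exp_add, hexp₁, hexp₂]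
    exact heq
  obtain ⟨n, hn⟩ := Complex.exp_eq_exp_iff_exists_int.1 hPhiexp
  have hshift : Φ ζ₂ + (n:ℂ) * (2 * Real.pi * Complex.I)
      = Φ (ζ₂ + (n:ℂ) * (2 * Real.pi * Complex.I)) := by
    rw [Φ, Φ, Complex.exp_add]
    rw [Complex.exp_int_mul_two_pi_mul_I]
    ring_nf
  have hre₂' : (ζ₂ + (n:ℂ) * (2 * Real.pi * Complex.I)).re < 0 := by
    have : ((n:ℂ) * (2 * Real.pi * Complex.I)).re = 0 := by
      simp [Complex.mul_re]
    rw [Complex.add_re, this, add_zero]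
    exact hre₂
  have hEq2 : Φ ζ₁ = Φ (ζ₂ + (n:ℂ) * (2 * Real.pi * Complex.I)) := by
    rw [hn, hshift]
  have := inj_Φ hre₁ hre₂' hEq2
  have hz12 : z₁ = z₂ := by
    rw [← hexp₁, ← hexp₂, this, Complex.exp_add,
      Complex.exp_int_mul_two_pi_mul_I, mul_one]
  exact hz12


section coeffs

def F1 (z : ℂ) : ℂ := qq z * Complex.exp (GG z)
def F2 (z : ℂ) : ℂ := (qq' z + qq z * gg z) * Complex.exp (GG z)

lemma mem_ball_abs {z : ℂ} : z ∈ ball (0:ℂ) 1 ↔ ‖z‖ < 1 := by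
  rw [mem_ball, dist_zero_right]

lemma hball : ball (0:ℂ) 1 ∈ nhds (0:ℂ) :=
  isOpen_ball.mem_nhds (by simp)

lemma hasDerivAt_expGG {z : ℂ} (hz : ‖z‖ < 1) :
    HasDerivAt (fun z => Complex.exp (GG z)) (Complex.exp (GG z) * gg z) z := by
  have hEa : HasDerivAt (Complex.exp ∘ GG) (Complex.exp (GG z) * gg z) z :=
    (Complex.hasDerivAt_exp (GG z)).comp z (hasDerivAt_GG hz)
  exact hEa

lemma hasDerivAt_F1 {z : ℂ} (hz : ‖z‖ < 1) :
    HasDerivAt F1 (F2 z) z := by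
  have := (hasDerivAt_qq hz).mul (hasDerivAt_expGG hz)
  refine this.congr_deriv ?_
  rw [F2]
  ring

lemma ev1 : deriv ff =ᶠ[nhds (0:ℂ)] F1 := by
  filter_upwards [hball] with z hz
  exact (hasDerivAt_ff (mem_ball_abs.1 hz)).deriv

lemma ev2 : deriv F1 =ᶠ[nhds (0:ℂ)] F2 := by
  filter_upwards [hball] with z hz
  exact (hasDerivAt_F1 (mem_ball_abs.1 hz)).deriv

lemma iteratedDeriv_two : iteratedDeriv 2 ff 0 = 2 * tc := by
  have h2 : iteratedDeriv 2 ff 0 = deriv (deriv ff) 0 := by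
    rw [show (2:ℕ) = 1 + 1 by rfl, iteratedDeriv_succ, iteratedDeriv_one]
  rw [h2, ev1.deriv_eq]
  have := (hasDerivAt_F1 (by simp : ‖(0:ℂ)‖ < 1)).deriv
  rw [this, F2, qq'_zero, qq_zero, gg_zero, GG_zero]
  simp
  ring

lemma iteratedDeriv_three : iteratedDeriv 3 ff 0 = 18/5 := by
  have h3 : iteratedDeriv 3 ff 0 = deriv (deriv (deriv ff)) 0 := by
    rw [show (3:ℕ) = 2 + 1 by rfl, iteratedDeriv_succ,
      show (2:ℕ) = 1 + 1 by rfl, iteratedDeriv_succ, iteratedDeriv_one]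
  have hev : deriv (deriv ff) =ᶠ[nhds (0:ℂ)] F2 := (ev1.deriv).trans ev2
  rw [h3, hev.deriv_eq]
  -- compute deriv F2 at 0
  have h0 : ‖(0:ℂ)‖ < 1 := by simp
  have hgg'diff : DifferentiableAt ℂ gg' (0:ℂ) := diff_gg' h0
  have hzgg' : HasDerivAt (fun z : ℂ => z * gg' z)
      (1 * gg' 0 + 0 * deriv gg' 0) 0 :=
    (hasDerivAt_id 0).mul hgg'diff.hasDerivAt
  have hqq' : HasDerivAt qq' (gg' 0 + (1 * gg' 0 + 0 * deriv gg' 0)) 0 := by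
    have := (hasDerivAt_gg h0).add hzgg'
    exact this
  have hA : HasDerivAt (fun z => qq' z + qq z * gg z)
      ((gg' 0 + (1 * gg' 0 + 0 * deriv gg' 0)) + (qq' 0 * gg 0 + qq 0 * gg' 0)) 0 :=
    hqq'.add ((hasDerivAt_qq h0).mul (hasDerivAt_gg h0))
  have hF2 : HasDerivAt F2
      (((gg' 0 + (1 * gg' 0 + 0 * deriv gg' 0)) + (qq' 0 * gg 0 + qq 0 * gg' 0))
          * Complex.exp (GG 0)
        + (qq' 0 + qq 0 * gg 0) * (Complex.exp (GG 0) * gg 0)) 0 :=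
    hA.mul (hasDerivAt_expGG h0)
  rw [hF2.deriv, qq'_zero, qq_zero, gg_zero, gg'_zero, GG_zero]
  simp
  linear_combination (3:ℂ)/2 * tc_sq
end coeffs

-- final numeric lemma
lemma sqrt_formula : Real.sqrt (2/5) / 2 = 1 / Real.sqrt 10 := by
  have h10 : (0:ℝ) < Real.sqrt 10 := Real.sqrt_pos.2 (by norm_num)
  have hmul : Real.sqrt (2/5) * Real.sqrt 10 = 2 := by
    rw [← Real.sqrt_mul (by norm_num : (0:ℝ) ≤ 2/5)]
    rw [show (2/5 : ℝ) * 10 = 4 by norm_num]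
    rw [show (4:ℝ) = 2^2 by norm_num, Real.sqrt_sq (by norm_num : (0:ℝ) ≤ 2)]
  rw [div_eq_div_iff (by norm_num : (2:ℝ) ≠ 0) (ne_of_gt h10)]
  linarith [hmul]


end LuneExt
end

/-- There exists a function `f` in the class `S*_☾` of starlike functions associated with the
lune whose first two inverse logarithmic coefficients `Γ₁ = -a₂/2` and `Γ₂ = -a₃/2 + 3a₂²/4`
satisfy `|Γ₂| - |Γ₁| = -1/√10`; hence the lower bound `|Γ₂| - |Γ₁| ≥ -1/√10` for `S*_☾` is sharp. -/
theorem exists_starlike_lune_abs_Gamma2_sub_abs_Gamma1_eq_neg_inv_sqrt_ten :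
    ∃ f : ℂ → ℂ,
      DifferentiableOn ℂ f (ball (0 : ℂ) 1) ∧
      f 0 = 0 ∧ deriv f 0 = 1 ∧
      Set.InjOn f (ball (0 : ℂ) 1) ∧
      (∀ z ∈ ball (0 : ℂ) 1, z ≠ 0 →
        f z ≠ 0 ∧
        ‖(z * deriv f z / f z) ^ 2 - 1‖
          ≤ 2 * ‖z * deriv f z / f z‖) ∧
      ‖-(iteratedDeriv 3 f 0 / 6) / 2 + 3 * (iteratedDeriv 2 f 0 / 2) ^ 2 / 4‖
        - ‖-(iteratedDeriv 2 f 0 / 2) / 2‖ = -(1 / Real.sqrt 10) := by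
  classical
  refine ⟨LuneExt.ff, ?_, LuneExt.ff_zero, ?_, LuneExt.injOn_ff, ?_, ?_⟩
  · -- differentiable
    intro z hz
    exact ((LuneExt.hasDerivAt_ff (LuneExt.mem_ball_abs.1 hz)).differentiableAt).differentiableWithinAt
  · -- deriv at 0
    have h0 : ‖(0:ℂ)‖ < 1 := by simp
    rw [(LuneExt.hasDerivAt_ff h0).deriv, LuneExt.qq_zero, LuneExt.GG_zero]
    simp
  · -- lune membership
    intro z hz hz0
    have habs : ‖z‖ < 1 := LuneExt.mem_ball_abs.1 hz
    have hq : z * deriv LuneExt.ff z / LuneExt.ff z = LuneExt.qq z := by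
      rw [(LuneExt.hasDerivAt_ff habs).deriv]
      rw [LuneExt.ff]
      rw [div_eq_iff (mul_ne_zero hz0 (Complex.exp_ne_zero _))]
      ring
    refine ⟨LuneExt.ff_ne_zero hz0, ?_⟩
    rw [hq]
    exact LuneExt.lune_ineq habs
  · -- coefficient values
    rw [LuneExt.iteratedDeriv_three, LuneExt.iteratedDeriv_two]
    have e1 : (-(((18:ℂ)/5)/6)/2 + 3 * ((2 * LuneExt.tc)/2)^2/4) = 0 := by
      linear_combination (3:ℂ)/4 * LuneExt.tc_sq
    rw [e1, norm_zero]
    have e2 : (-((2 * LuneExt.tc)/2)/2) = ((-(Real.sqrt (2/5))/2 : ℝ) : ℂ) := by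
      rw [LuneExt.tc]; push_cast; ring
    rw [e2, Complex.norm_real, Real.norm_eq_abs]
    have e3 : |(-(Real.sqrt (2/5))/2 : ℝ)| = Real.sqrt (2/5) / 2 := by
      rw [abs_of_nonpos (by nlinarith [LuneExt.tr_pos])]
      ring
    rw [e3, LuneExt.sqrt_formula]
    ring
end

section
/- If f belongs to the class C_☾ of convex functions associated with the lune, then |Γ₂| − |Γ₁| ≤ 1/12, where Γ₁ = −a₂/2 and Γ₂ = −a₃/2 + 3a₂²/4 are the first two inverse logarithmic coefficients of f. -/
open Complex Metric
open scoped NNReal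

-- Cauchy coefficient estimate
lemma coeff_bound {g : ℂ → ℂ} (hg : DifferentiableOn ℂ g (ball (0:ℂ) 1))
    (hb : ∀ z ∈ ball (0:ℂ) 1, ‖g z‖ ≤ 1) (n : ℕ) :
    ‖iteratedDeriv n g 0‖ ≤ n.factorial := by
  have key : ∀ R : ℝ≥0, 0 < R → (R:ℝ) < 1 →
      ‖iteratedDeriv n g 0‖ ≤ n.factorial * ((R:ℝ)⁻¹) ^ n := by
    intro R hR0 hR1
    have hsub : closedBall (0:ℂ) R ⊆ ball (0:ℂ) 1 :=
      closedBall_subset_ball (by exact_mod_cast hR1)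
    have hps : HasFPowerSeriesOnBall g (cauchyPowerSeries g 0 R) 0 R :=
      (hg.mono hsub).hasFPowerSeriesOnBall hR0
    have h1 : iteratedDeriv n g 0 = n.factorial • (cauchyPowerSeries g 0 R n fun _ => (1:ℂ)) := by
      rw [iteratedDeriv_eq_iteratedFDeriv, ← hps.factorial_smul (1:ℂ) n]
    have h2 : ‖cauchyPowerSeries g 0 R n fun _ => (1:ℂ)‖ ≤ ‖cauchyPowerSeries g 0 R n‖ := by
      simpa using (cauchyPowerSeries g 0 R n).le_opNorm fun _ => (1:ℂ)
    have h3 : ‖cauchyPowerSeries g 0 R n‖ ≤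
        ((2 * Real.pi)⁻¹ * ∫ θ : ℝ in (0)..2 * Real.pi, ‖g (circleMap 0 R θ)‖) * |(R:ℝ)|⁻¹ ^ n :=
      norm_cauchyPowerSeries_le g 0 R n
    have hint : ∫ θ : ℝ in (0)..2 * Real.pi, ‖g (circleMap 0 R θ)‖ ≤ 2 * Real.pi := by
      have hmem : ∀ θ : ℝ, circleMap 0 R θ ∈ ball (0:ℂ) 1 := by
        intro θ
        simp only [mem_ball, dist_zero_right]
        rw [norm_circleMap_zero]
        simpa [_root_.abs_of_nonneg R.coe_nonneg] using hR1
      calc ∫ θ : ℝ in (0)..2 * Real.pi, ‖g (circleMap 0 R θ)‖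
          ≤ ∫ _ : ℝ in (0)..2 * Real.pi, (1:ℝ) := by
            apply intervalIntegral.integral_mono_on Real.two_pi_pos.le
            · apply ContinuousOn.intervalIntegrable
              exact (((hg.continuousOn.mono (ball_subset_ball le_rfl)).comp
                (continuous_circleMap 0 R).continuousOn
                (fun θ _ => hmem θ)).norm)
            · exact intervalIntegrable_const
            · intro θ _; exact hb _ (hmem θ)
        _ = 2 * Real.pi := by simp
    calc ‖iteratedDeriv n g 0‖
        = (n.factorial : ℝ) * ‖cauchyPowerSeries g 0 R n fun _ => (1:ℂ)‖ := by
          rw [h1]; simp [norm_smul]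
      _ ≤ (n.factorial : ℝ) * (((2 * Real.pi)⁻¹ * (2 * Real.pi)) * |(R:ℝ)|⁻¹ ^ n) := by
          gcongr
          exact h2.trans (h3.trans (by gcongr))
      _ ≤ n.factorial * ((R:ℝ)⁻¹) ^ n := by
          rw [inv_mul_cancel₀ Real.two_pi_pos.ne', one_mul, _root_.abs_of_nonneg R.coe_nonneg]
  -- now take limit R → 1
  have htend : Filter.Tendsto (fun r : ℝ => (n.factorial : ℝ) * (r⁻¹) ^ n) (nhdsWithin 1 (Set.Iio 1))
      (nhds ((n.factorial : ℝ))) := by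
    have : Filter.Tendsto (fun r : ℝ => (n.factorial : ℝ) * (r⁻¹) ^ n) (nhds 1) (nhds ((n.factorial : ℝ))) := by
      have := ((continuous_id.tendsto (1:ℝ)).inv₀ one_ne_zero).pow n
      simpa using (this.const_mul (n.factorial : ℝ))
    exact this.mono_left nhdsWithin_le_nhds
  refine ge_of_tendsto htend ?_
  filter_upwards [Ioo_mem_nhdsLT_of_mem (by norm_num : (1:ℝ) ∈ Set.Ioc (1/2) 1)] with r hr
  have hr0 : 0 < r := lt_trans (by norm_num) hr.1
  have := key ⟨r, hr0.le⟩ (by exact_mod_cast hr0) hr.2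
  exact this

lemma key (f : ℂ → ℂ) (hf : DifferentiableOn ℂ f (ball (0:ℂ) 1)) (hf1 : deriv f 0 = 1)
    (hne : ∀ z ∈ ball (0:ℂ) 1, deriv f z ≠ 0)
    (hlune : ∀ z ∈ ball (0:ℂ) 1,
      ‖(1 + z * deriv (deriv f) z / deriv f z) ^ 2 - 1‖
        ≤ 2 * ‖1 + z * deriv (deriv f) z / deriv f z‖) :
    ‖deriv (deriv f) 0‖ ≤ 1 ∧
    ‖2 * deriv (deriv (deriv f)) 0 - 3 * deriv (deriv f) 0 ^ 2‖ ≤ 2 := by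
  have hop : IsOpen (ball (0:ℂ) 1) := isOpen_ball
  have h0m : (0:ℂ) ∈ ball (0:ℂ) 1 := mem_ball_self zero_lt_one
  set f1 := deriv f with hf1d
  set f2 := deriv f1 with hf2d
  set f3 := deriv f2 with hf3d
  have hfa : AnalyticOnNhd ℂ f (ball 0 1) := hf.analyticOnNhd hop
  have hf1a : AnalyticOnNhd ℂ f1 (ball 0 1) := hfa.deriv
  have hf2a : AnalyticOnNhd ℂ f2 (ball 0 1) := hf1a.deriv
  have hf3a : AnalyticOnNhd ℂ f3 (ball 0 1) := hf2a.deriv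
  set p : ℂ → ℂ := fun z => 1 + z * f2 z / f1 z with hpd
  set P1 : ℂ → ℂ := fun z =>
    ((1 * f2 z + z * f3 z) * f1 z - z * f2 z * f2 z) / f1 z ^ 2 with hP1d
  -- derivative of p on the ball
  have hP : ∀ z ∈ ball (0:ℂ) 1, HasDerivAt p (P1 z) z := by
    intro z hz
    have h1 : HasDerivAt f1 (f2 z) z := (hf1a z hz).differentiableAt.hasDerivAt
    have h2 : HasDerivAt f2 (f3 z) z := (hf2a z hz).differentiableAt.hasDerivAt
    have hnum : HasDerivAt (fun w => w * f2 w) (1 * f2 z + z * f3 z) z :=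
      (hasDerivAt_id z).mul h2
    exact (hnum.div h1 (hne z hz)).const_add 1
  have hpne : ∀ z ∈ ball (0:ℂ) 1, p z ≠ 0 := by
    intro z hz h
    have := hlune z hz
    rw [show (1 + z * deriv (deriv f) z / deriv f z) = p z from rfl] at this
    rw [h] at this
    norm_num at this
  set g : ℂ → ℂ := fun z => (p z ^ 2 - 1) / (2 * p z) with hgd
  have hgderiv : ∀ z ∈ ball (0:ℂ) 1, deriv g z = P1 z * (p z ^ 2 + 1) / (2 * p z ^ 2) := by
    intro z hz
    have h := ((((hP z hz).pow 2).sub_const 1).div ((hP z hz).const_mul 2)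
      (mul_ne_zero two_ne_zero (hpne z hz))).deriv
    rw [hgd]
    rw [show (fun z => (p z ^ 2 - 1) / (2 * p z)) = ((fun x => (p ^ 2) x - 1) / fun y => 2 * p y) from rfl, h]
    simp only [Pi.pow_apply]
    have hpz := hpne z hz
    field_simp
    ring
  have hp0 : p 0 = 1 := by simp [hpd]
  have hP10 : P1 0 = f2 0 := by simp [hP1d, hf1]
  have hdg0 : deriv g 0 = f2 0 := by
    rw [hgderiv 0 h0m, hp0, hP10]; norm_num
  -- second derivative
  have h1 : HasDerivAt f1 (f2 0) 0 := (hf1a 0 h0m).differentiableAt.hasDerivAt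
  have h2 : HasDerivAt f2 (f3 0) 0 := (hf2a 0 h0m).differentiableAt.hasDerivAt
  have h3 : HasDerivAt f3 (deriv f3 0) 0 := (hf3a 0 h0m).differentiableAt.hasDerivAt
  have hP1at := ((((h2.const_mul 1).add ((hasDerivAt_id (0:ℂ)).mul h3)).mul h1).sub
      (((hasDerivAt_id (0:ℂ)).mul h2).mul h2)).div (h1.pow 2)
      (by rw [Pi.pow_apply, hf1]; norm_num)
  have hP1v : HasDerivAt P1 (2 * f3 0 - 2 * f2 0 ^ 2) 0 := by
    rw [hP1d]
    refine hP1at.congr_deriv ?_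
    simp only [Pi.pow_apply, Pi.add_apply, Pi.sub_apply, Pi.mul_apply, hf1]
    simp only [id_eq]
    push_cast
    ring
  have hpat : HasDerivAt p (f2 0) 0 := by
    have := hP 0 h0m; rwa [hP10] at this
  have hG1at := (hP1v.mul ((hpat.pow 2).add_const 1)).div ((hpat.pow 2).const_mul 2)
      (by rw [Pi.pow_apply, hp0]; norm_num)
  have heq : deriv g =ᶠ[nhds (0:ℂ)] (fun z => P1 z * (p z ^ 2 + 1) / (2 * p z ^ 2)) :=
    Filter.eventuallyEq_of_mem (hop.mem_nhds h0m) (fun z hz => hgderiv z hz)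
  have hdg2 : deriv (deriv g) 0 = 2 * f3 0 - 3 * f2 0 ^ 2 := by
    rw [heq.deriv_eq, show (fun z => P1 z * (p z ^ 2 + 1) / (2 * p z ^ 2)) = ((P1 * fun x => (p ^ 2) x + 1) / fun y => 2 * (p ^ 2) y) from rfl, hG1at.deriv]
    simp only [Pi.pow_apply, Pi.mul_apply, hp0, hP10]
    push_cast
    ring
  have hpa : AnalyticOnNhd ℂ p (ball (0:ℂ) 1) :=
    analyticOnNhd_const.add ((analyticOnNhd_id.mul hf2a).div hf1a hne)
  have hga : AnalyticOnNhd ℂ g (ball (0:ℂ) 1) :=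
    ((hpa.pow 2).sub analyticOnNhd_const).div (analyticOnNhd_const.mul hpa)
      (fun z hz => mul_ne_zero two_ne_zero (hpne z hz))
  have hgb : ∀ z ∈ ball (0:ℂ) 1, ‖g z‖ ≤ 1 := by
    intro z hz
    have h2p : (0:ℝ) < ‖2 * p z‖ :=
      norm_pos_iff.mpr (mul_ne_zero two_ne_zero (hpne z hz))
    rw [hgd]
    rw [norm_div, div_le_one h2p, norm_mul, Complex.norm_two]
    exact hlune z hz
  constructor
  · have := coeff_bound hga.differentiableOn hgb 1
    rw [iteratedDeriv_one, hdg0] at this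
    simpa using this
  · have := coeff_bound hga.differentiableOn hgb 2
    rw [iteratedDeriv_succ, iteratedDeriv_one, hdg2] at this
    simpa using this

/-- If `f` belongs to the class `C_☾` of convex functions associated with the lune, then
`|Γ₂| - |Γ₁| ≤ 1/12`, where `Γ₁ = -a₂/2` and `Γ₂ = -a₃/2 + 3a₂²/4` are the first two inverse
logarithmic coefficients of `f`. -/
theorem abs_Gamma2_sub_abs_Gamma1_le_of_convex_lune
    (f : ℂ → ℂ)
    (hf : DifferentiableOn ℂ f (ball (0 : ℂ) 1))
    (hf0 : f 0 = 0) (hf1 : deriv f 0 = 1)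
    (hinj : Set.InjOn f (ball (0 : ℂ) 1))
    (hlune : ∀ z ∈ ball (0 : ℂ) 1,
      deriv f z ≠ 0 ∧
      ‖(1 + z * deriv (deriv f) z / deriv f z) ^ 2 - 1‖
        ≤ 2 * ‖1 + z * deriv (deriv f) z / deriv f z‖)
    (a₂ a₃ Γ₁ Γ₂ : ℂ)
    (ha₂ : a₂ = iteratedDeriv 2 f 0 / 2)
    (ha₃ : a₃ = iteratedDeriv 3 f 0 / 6)
    (hΓ₁ : Γ₁ = -a₂ / 2)
    (hΓ₂ : Γ₂ = -a₃ / 2 + 3 * a₂ ^ 2 / 4) :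
    ‖Γ₂‖ - ‖Γ₁‖ ≤ 1 / 12 := by
  obtain ⟨hb1, hb2⟩ := key f hf hf1 (fun z hz => (hlune z hz).1) (fun z hz => (hlune z hz).2)
  set c2 := deriv (deriv f) 0 with hc2
  set c3 := deriv (deriv (deriv f)) 0 with hc3
  have e2 : iteratedDeriv 2 f 0 = c2 := by
    simp [iteratedDeriv_succ, iteratedDeriv_one, hc2]
  have e3 : iteratedDeriv 3 f 0 = c3 := by
    simp [iteratedDeriv_succ, iteratedDeriv_one, hc3]
  have hΓ₂' : Γ₂ = -(2 * c3 - 3 * c2 ^ 2) / 24 + c2 ^ 2 / 16 := by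
    rw [hΓ₂, ha₃, ha₂, e2, e3]; ring
  have hΓ₁' : Γ₁ = -c2 / 4 := by rw [hΓ₁, ha₂, e2]; ring
  have hA1 : ‖Γ₁‖ = ‖c2‖ / 4 := by
    rw [hΓ₁', neg_div, norm_neg, norm_div]
    norm_num
  have hA2 : ‖Γ₂‖ ≤ ‖2 * c3 - 3 * c2 ^ 2‖ / 24 + ‖c2‖ ^ 2 / 16 := by
    rw [hΓ₂']
    refine (norm_add_le _ _).trans ?_
    rw [neg_div, norm_neg, norm_div, norm_div, norm_pow]
    norm_num
  have hsq : ‖c2‖ ^ 2 ≤ ‖c2‖ := by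
    nlinarith [norm_nonneg c2]
  rw [hA1]
  nlinarith [norm_nonneg (2 * c3 - 3 * c2 ^ 2)]
end

section
/- If f belongs to the class C_☾ of convex functions associated with the lune, then |Γ₂| − |Γ₁| ≥ −4/21, where Γ₁ = −a₂/2 and Γ₂ = −a₃/2 + 3a₂²/4 are the first two inverse logarithmic coefficients of f. -/
open Complex Metric
open Set Filter Topology


/-- dslope bound for maps of the disk to the closed disk. -/
lemma dslope_le_one {g : ℂ → ℂ} (hd : DifferentiableOn ℂ g (ball (0:ℂ) 1))
    (h0 : g 0 = 0) (hb : ∀ z ∈ ball (0:ℂ) 1, ‖g z‖ ≤ 1) :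
    ∀ z ∈ ball (0:ℂ) 1, ‖dslope g 0 z‖ ≤ 1 := by
  intro z hz
  refine le_of_forall_gt_imp_ge_of_dense fun r hr => ?_
  have hmaps : MapsTo g (ball (0:ℂ) 1) (ball (g 0) r) := by
    intro w hw
    rw [h0, mem_ball, dist_zero_right]
    exact lt_of_le_of_lt (hb w hw) hr
  simpa using Complex.norm_dslope_le_div_of_mapsTo_ball hd (hmaps.mono_right ball_subset_closedBall) hz


/-- Key Möbius inequality. -/
lemma mobius_ineq {w a : ℂ} (hw : ‖w‖ ≤ 1) (ha : ‖a‖ < 1) :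
    ‖w - a‖ ≤ ‖1 - (starRingEnd ℂ) a * w‖ := by
  have hw' : Complex.normSq w ≤ 1 := by
    rw [Complex.normSq_eq_norm_sq]; nlinarith [norm_nonneg w]
  have ha' : Complex.normSq a ≤ 1 := by
    rw [Complex.normSq_eq_norm_sq]; nlinarith [norm_nonneg a]
  have h1 : Complex.normSq (w - a) ≤ Complex.normSq (1 - (starRingEnd ℂ) a * w) := by
    have e : Complex.normSq (1 - (starRingEnd ℂ) a * w) - Complex.normSq (w - a)
        = (1 - Complex.normSq a) * (1 - Complex.normSq w) := by
      simp only [Complex.normSq_apply, Complex.sub_re, Complex.sub_im, Complex.mul_re,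
        Complex.mul_im, Complex.one_re, Complex.one_im, Complex.conj_re, Complex.conj_im]
      ring
    nlinarith
  rw [Complex.norm_def, Complex.norm_def]
  exact Real.sqrt_le_sqrt h1

lemma sp_core {ω : ℂ → ℂ} (hd : DifferentiableOn ℂ ω (ball (0:ℂ) 1)) (h0 : ω 0 = 0)
    (hb : ∀ z ∈ ball (0:ℂ) 1, ‖ω z‖ ≤ 1)
    (hlt : ‖deriv ω 0‖ < 1) :
    ‖deriv (deriv ω) 0‖ ≤ 2 * (1 - ‖deriv ω 0‖ ^ 2) := by
  have hmem : (0:ℂ) ∈ ball (0:ℂ) 1 := mem_ball_self one_pos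
  have hnb : ball (0:ℂ) 1 ∈ 𝓝 (0:ℂ) := isOpen_ball.mem_nhds hmem
  set φ := dslope ω 0 with hφdef
  have hφd : DifferentiableOn ℂ φ (ball (0:ℂ) 1) := (differentiableOn_dslope hnb).mpr hd
  have hφb : ∀ z ∈ ball (0:ℂ) 1, ‖φ z‖ ≤ 1 := dslope_le_one hd h0 hb
  have hφa : AnalyticOnNhd ℂ φ (ball (0:ℂ) 1) := hφd.analyticOnNhd isOpen_ball
  set a := φ 0 with hadef
  have haω : a = deriv ω 0 := dslope_same ω 0
  have hlt' : ‖a‖ < 1 := by rw [haω]; exact hlt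
  set d := deriv φ 0 with hddef
  have hφ0 : HasDerivAt φ d 0 := (hφd.differentiableAt hnb).hasDerivAt
  have hden : ∀ z ∈ ball (0:ℂ) 1, (1 : ℂ) - (starRingEnd ℂ) a * φ z ≠ 0 := by
    intro z hz h
    have h1 : (starRingEnd ℂ) a * φ z = 1 := by linear_combination -h
    have := congrArg (‖·‖) h1
    rw [norm_mul, norm_one, Complex.norm_conj] at this
    nlinarith [hφb z hz, norm_nonneg a, norm_nonneg (φ z)]
  set ψ : ℂ → ℂ := fun z => (φ z - a) / (1 - (starRingEnd ℂ) a * φ z) with hψdef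
  have hψd : DifferentiableOn ℂ ψ (ball (0:ℂ) 1) := by
    intro z hz
    exact ((hφd z hz).sub (differentiableWithinAt_const a)).div
      ((differentiableWithinAt_const 1).sub ((hφd z hz).const_mul _)) (hden z hz)
  have hψ0 : ψ 0 = 0 := by simp [hψdef, ← hadef]
  have hψb : ∀ z ∈ ball (0:ℂ) 1, ‖ψ z‖ ≤ 1 := by
    intro z hz
    rw [hψdef]
    simp only [norm_div]
    rw [div_le_one (norm_pos_iff.mpr (hden z hz))]
    exact mobius_ineq (hφb z hz) hlt'
  -- derivative of ψ at 0
  have hnum : HasDerivAt (fun z => φ z - a) d 0 := hφ0.sub_const a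
  have hden0 : HasDerivAt (fun z => (1:ℂ) - (starRingEnd ℂ) a * φ z)
      (-((starRingEnd ℂ) a * d)) 0 := by
    simpa using ((hφ0.const_mul ((starRingEnd ℂ) a)).const_sub 1)
  have hψder := hnum.div hden0 (hden 0 hmem)
  have hAne : (1:ℂ) - (starRingEnd ℂ) a * a ≠ 0 := by
    have := hden 0 hmem; rwa [← hadef] at this
  have hψd0 : deriv ψ 0 = d / (1 - (starRingEnd ℂ) a * a) := by
    rw [show deriv ψ 0 = _ from hψder.deriv, ← hadef]
    field_simp [hAne]
    ring
  have hψb0 : ‖deriv ψ 0‖ ≤ 1 := by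
    have := dslope_le_one hψd hψ0 hψb 0 hmem
    rwa [dslope_same] at this
  have habsA : ‖1 - (starRingEnd ℂ) a * a‖ = 1 - ‖a‖ ^ 2 := by
    have : (starRingEnd ℂ) a * a = ((Complex.normSq a : ℝ) : ℂ) := by
      rw [mul_comm, Complex.mul_conj]
    rw [this, ← Complex.ofReal_one, ← Complex.ofReal_sub, Complex.norm_real, Real.norm_eq_abs,
      Complex.normSq_eq_norm_sq, _root_.abs_of_nonneg (by nlinarith [norm_nonneg a])]
  have hdb : ‖d‖ ≤ 1 - ‖a‖ ^ 2 := by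
    rw [hψd0, norm_div, habsA, div_le_one (by nlinarith [norm_nonneg a])] at hψb0
    exact hψb0
  -- second derivative of ω equals 2 d
  have hωφ : ω = fun z => z * φ z := by
    funext z
    have := sub_smul_dslope ω 0 z
    simp only [sub_zero, smul_eq_mul, h0] at this
    rw [← this, ← hφdef]
  have hderω : ∀ z ∈ ball (0:ℂ) 1, deriv ω z = φ z + z * deriv φ z := by
    intro z hz
    have hφz : HasDerivAt φ (deriv φ z) z :=
      (hφd.differentiableAt (isOpen_ball.mem_nhds hz)).hasDerivAt
    have h : HasDerivAt (fun w => w * φ w) (1 * φ z + z * deriv φ z) z :=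
      (hasDerivAt_id' z).mul hφz
    rw [hωφ]
    rw [h.deriv]
    ring
  have heq : deriv ω =ᶠ[𝓝 (0:ℂ)] fun z => φ z + z * deriv φ z :=
    Filter.eventually_of_mem hnb hderω
  have hφ'a : AnalyticOnNhd ℂ (deriv φ) (ball (0:ℂ) 1) := hφa.deriv
  have hφ'd : HasDerivAt (deriv φ) (deriv (deriv φ) 0) 0 :=
    ((hφ'a 0 hmem).differentiableAt).hasDerivAt
  have h2 : HasDerivAt (fun z => φ z + z * deriv φ z) (d + d) 0 := by
    have h : HasDerivAt (fun w => w * deriv φ w) (1 * deriv φ 0 + 0 * deriv (deriv φ) 0) 0 :=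
      (hasDerivAt_id' 0).mul hφ'd
    have := hφ0.add h
    have e : d + (1 * deriv φ 0 + 0 * deriv (deriv φ) 0) = d + d := by rw [← hddef]; ring
    rw [e] at this
    exact this
  have hωdd : deriv (deriv ω) 0 = 2 * d := by
    rw [heq.deriv_eq, h2.deriv]; ring
  rw [hωdd, ← haω]
  rw [norm_mul]
  simp only [Complex.norm_two]
  nlinarith [hdb]

lemma sp {ω : ℂ → ℂ} (hd : DifferentiableOn ℂ ω (ball (0:ℂ) 1)) (h0 : ω 0 = 0)
    (hb : ∀ z ∈ ball (0:ℂ) 1, ‖ω z‖ ≤ 1) :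
    ‖deriv ω 0‖ ≤ 1 ∧
      ‖deriv (deriv ω) 0‖ ≤ 2 * (1 - ‖deriv ω 0‖ ^ 2) := by
  have hmem : (0:ℂ) ∈ ball (0:ℂ) 1 := mem_ball_self one_pos
  have hC : ‖deriv ω 0‖ ≤ 1 := by
    have := dslope_le_one hd h0 hb 0 hmem
    rwa [dslope_same] at this
  refine ⟨hC, ?_⟩
  have hωa : AnalyticOnNhd ℂ ω (ball (0:ℂ) 1) := hd.analyticOnNhd isOpen_ball
  have hω'a : AnalyticOnNhd ℂ (deriv ω) (ball (0:ℂ) 1) := hωa.deriv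
  -- scaled version
  have key : ∀ r : ℝ, 0 < r → r < 1 →
      r ^ 2 * ‖deriv (deriv ω) 0‖
        ≤ 2 * (1 - r ^ 2 * ‖deriv ω 0‖ ^ 2) := by
    intro r hr0 hr1
    set ωr : ℂ → ℂ := fun z => ω ((r:ℂ) * z) with hωrdef
    have hc : ∀ z ∈ ball (0:ℂ) 1, (r:ℂ) * z ∈ ball (0:ℂ) 1 := by
      intro z hz
      rw [mem_ball_zero_iff] at hz ⊢
      rw [norm_mul]
      have : ‖(r:ℂ)‖ = r := by
        rw [Complex.norm_real, Real.norm_eq_abs, _root_.abs_of_pos hr0]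
      rw [this]
      nlinarith [norm_nonneg z]
    have hder : ∀ z ∈ ball (0:ℂ) 1,
        HasDerivAt ωr (deriv ω ((r:ℂ) * z) * (r:ℂ)) z := by
      intro z hz
      have hω' : HasDerivAt ω (deriv ω ((r:ℂ) * z)) ((r:ℂ) * z) :=
        (hd.differentiableAt (isOpen_ball.mem_nhds (hc z hz))).hasDerivAt
      have hmul : HasDerivAt (fun z : ℂ => (r:ℂ) * z) ((r:ℂ)) z := by
        simpa using (hasDerivAt_id' z).const_mul (r:ℂ)
      exact HasDerivAt.comp z hω' hmul
    have hdr : DifferentiableOn ℂ ωr (ball (0:ℂ) 1) :=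
      fun z hz => ((hder z hz).differentiableAt).differentiableWithinAt
    have h0r : ωr 0 = 0 := by simp [hωrdef, h0]
    have hbr : ∀ z ∈ ball (0:ℂ) 1, ‖ωr z‖ ≤ 1 :=
      fun z hz => hb _ (hc z hz)
    have hd1 : deriv ωr 0 = (r:ℂ) * deriv ω 0 := by
      rw [(hder 0 hmem).deriv]
      rw [mul_zero]; ring
    have habs1 : ‖deriv ωr 0‖ = r * ‖deriv ω 0‖ := by
      rw [hd1, norm_mul, Complex.norm_real, Real.norm_eq_abs, _root_.abs_of_pos hr0]
    have hlt : ‖deriv ωr 0‖ < 1 := by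
      rw [habs1]
      nlinarith [hC, norm_nonneg (deriv ω 0)]
    have hcore := sp_core hdr h0r hbr hlt
    have heq : deriv ωr =ᶠ[𝓝 (0:ℂ)] fun z => deriv ω ((r:ℂ) * z) * (r:ℂ) :=
      Filter.eventually_of_mem (isOpen_ball.mem_nhds hmem)
        (fun z hz => (hder z hz).deriv)
    have hdd : HasDerivAt (fun z => deriv ω ((r:ℂ) * z) * (r:ℂ))
        (deriv (deriv ω) 0 * (r:ℂ) * (r:ℂ)) 0 := by
      have h1 : HasDerivAt (deriv ω) (deriv (deriv ω) 0) ((r:ℂ) * 0) := by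
        rw [mul_zero]
        exact ((hω'a 0 hmem).differentiableAt).hasDerivAt
      have hmul : HasDerivAt (fun z : ℂ => (r:ℂ) * z) ((r:ℂ)) 0 := by
        simpa using (hasDerivAt_id' 0).const_mul (r:ℂ)
      exact (HasDerivAt.comp 0 h1 hmul).mul_const (r:ℂ)
    have hdd2 : deriv (deriv ωr) 0 = deriv (deriv ω) 0 * (r:ℂ) * (r:ℂ) := by
      rw [heq.deriv_eq, hdd.deriv]
    rw [hdd2] at hcore
    rw [habs1, norm_mul, norm_mul, Complex.norm_real, Real.norm_eq_abs, _root_.abs_of_pos hr0] at hcore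
    nlinarith [hcore]
  refine le_of_forall_gt_imp_ge_of_dense fun y hy => ?_
  set C := ‖deriv ω 0‖
  have hC0 : 0 ≤ C := norm_nonneg _
  have hy2 : 2 < y + 2 * C ^ 2 := by nlinarith
  set r := Real.sqrt (2 / (y + 2 * C ^ 2)) with hrdef
  have hpos : 0 < 2 / (y + 2 * C ^ 2) := by positivity
  have hr0 : 0 < r := Real.sqrt_pos.mpr hpos
  have hr1 : r < 1 := by
    rw [hrdef]
    rw [show (1:ℝ) = Real.sqrt 1 by simp]
    apply Real.sqrt_lt_sqrt hpos.le
    rw [div_lt_one (by linarith)]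
    linarith
  have hr2 : r ^ 2 = 2 / (y + 2 * C ^ 2) := Real.sq_sqrt hpos.le
  have := key r hr0 hr1
  have hrne : r ^ 2 * (y + 2 * C ^ 2) = 2 := by
    rw [hr2]; field_simp
  nlinarith [this, sq_nonneg r, norm_nonneg (deriv (deriv ω) 0)]

/-- If `f` belongs to the class `C_☾` of convex functions associated with the lune, then
`|Γ₂| - |Γ₁| ≥ -4/21`, where `Γ₁ = -a₂/2` and `Γ₂ = -a₃/2 + 3a₂²/4` are the first two inverse
logarithmic coefficients of `f`. -/
theorem abs_Gamma2_sub_abs_Gamma1_ge_of_convex_lune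
    (f : ℂ → ℂ)
    (hf : DifferentiableOn ℂ f (ball (0 : ℂ) 1))
    (hf0 : f 0 = 0) (hf1 : deriv f 0 = 1)
    (hinj : Set.InjOn f (ball (0 : ℂ) 1))
    (hlune : ∀ z ∈ ball (0 : ℂ) 1,
      deriv f z ≠ 0 ∧
      ‖(1 + z * deriv (deriv f) z / deriv f z) ^ 2 - 1‖
        ≤ 2 * ‖1 + z * deriv (deriv f) z / deriv f z‖)
    (a₂ a₃ Γ₁ Γ₂ : ℂ)
    (ha₂ : a₂ = iteratedDeriv 2 f 0 / 2)
    (ha₃ : a₃ = iteratedDeriv 3 f 0 / 6)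
    (hΓ₁ : Γ₁ = -a₂ / 2)
    (hΓ₂ : Γ₂ = -a₃ / 2 + 3 * a₂ ^ 2 / 4) :
    ‖Γ₂‖ - ‖Γ₁‖ ≥ -(4 / 21) := by
  have hmem : (0:ℂ) ∈ ball (0:ℂ) 1 := mem_ball_self one_pos
  have hnb : ball (0:ℂ) 1 ∈ 𝓝 (0:ℂ) := isOpen_ball.mem_nhds hmem
  have hne : ∀ z ∈ ball (0:ℂ) 1, deriv f z ≠ 0 := fun z hz => (hlune z hz).1
  have hfa := hf.analyticOnNhd isOpen_ball
  have h1 : AnalyticOnNhd ℂ (deriv f) (ball (0:ℂ) 1) := hfa.deriv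
  have h2 : AnalyticOnNhd ℂ (deriv (deriv f)) (ball (0:ℂ) 1) := h1.deriv
  have h3 : AnalyticOnNhd ℂ (deriv (deriv (deriv f))) (ball (0:ℂ) 1) := h2.deriv
  set q : ℂ → ℂ := fun z => deriv (deriv f) z / deriv f z with hqdef
  set q' : ℂ → ℂ := fun z =>
    (deriv (deriv (deriv f)) z * deriv f z - deriv (deriv f) z * deriv (deriv f) z)
      / (deriv f z) ^ 2 with hq'def
  have hqa : AnalyticOnNhd ℂ q (ball (0:ℂ) 1) :=
    fun z hz => ((h2 z hz).div (h1 z hz) (hne z hz))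
  have hq'a : AnalyticOnNhd ℂ q' (ball (0:ℂ) 1) := fun z hz =>
    (((h3 z hz).mul (h1 z hz)).sub ((h2 z hz).mul (h2 z hz))).div
      ((h1 z hz).pow 2) (pow_ne_zero 2 (hne z hz))
  have hq' : ∀ z ∈ ball (0:ℂ) 1, HasDerivAt q (q' z) z := by
    intro z hz
    have hd2 : HasDerivAt (deriv (deriv f)) (deriv (deriv (deriv f)) z) z :=
      ((h2 z hz).differentiableAt).hasDerivAt
    have hd1 : HasDerivAt (deriv f) (deriv (deriv f) z) z :=
      ((h1 z hz).differentiableAt).hasDerivAt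
    exact hd2.div hd1 (hne z hz)
  set p : ℂ → ℂ := fun z => 1 + z * q z with hpdef
  have hpeq : ∀ z, p z = 1 + z * deriv (deriv f) z / deriv f z := by
    intro z; rw [hpdef]; simp only [hqdef, mul_div_assoc]
  set P' : ℂ → ℂ := fun z => q z + z * q' z with hP'def
  have hp' : ∀ z ∈ ball (0:ℂ) 1, HasDerivAt p (P' z) z := by
    intro z hz
    have h := (hasDerivAt_id' z).mul (hq' z hz)
    have := (HasDerivAt.const_add (1:ℂ) h)
    simpa [hP'def, hpdef] using this
  have hp0 : p 0 = 1 := by simp [hpdef]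
  have hq'0v : q' 0 = deriv (deriv (deriv f)) 0 - deriv (deriv f) 0 ^ 2 := by
    rw [hq'def]; simp only [hf1]; ring
  have hq0v : q 0 = deriv (deriv f) 0 := by rw [hqdef]; simp only [hf1]; exact div_one _
  have hP'0 : P' 0 = q 0 := by simp [hP'def]
  have hpne : ∀ z ∈ ball (0:ℂ) 1, p z ≠ 0 := by
    intro z hz h
    have habs := (hlune z hz).2
    rw [← hpeq z] at habs
    rw [h] at habs
    norm_num at habs
  set ω : ℂ → ℂ := fun z => (p z ^ 2 - 1) / (2 * p z) with hωdef
  have hω0 : ω 0 = 0 := by simp [hωdef, hp0]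
  have hωb : ∀ z ∈ ball (0:ℂ) 1, ‖ω z‖ ≤ 1 := by
    intro z hz
    have habs := (hlune z hz).2
    rw [← hpeq z] at habs
    rw [hωdef]
    simp only [norm_div]
    have h2p : ‖2 * p z‖ = 2 * ‖p z‖ := by
      rw [norm_mul, Complex.norm_two]
    rw [h2p]
    rw [div_le_one (by have := norm_pos_iff.mpr (hpne z hz); linarith)]
    exact habs
  set W' : ℂ → ℂ := fun z => P' z * (p z ^ 2 + 1) / (2 * p z ^ 2) with hW'def
  have hω' : ∀ z ∈ ball (0:ℂ) 1, HasDerivAt ω (W' z) z := by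
    intro z hz
    have hnum : HasDerivAt (fun z => p z ^ 2 - 1) (2 * p z * P' z) z := by
      have := ((hp' z hz).pow 2).sub_const 1
      norm_num at this
      exact this.sub_const 1
    have hden : HasDerivAt (fun z => 2 * p z) (2 * P' z) z := (hp' z hz).const_mul 2
    have h2pne : (2 : ℂ) * p z ≠ 0 := by
      simp [hpne z hz]
    have h := hnum.div hden h2pne
    refine h.congr_deriv ?_
    rw [hW'def]
    field_simp [hpne z hz]
    ring
  have hωd : DifferentiableOn ℂ ω (ball (0:ℂ) 1) :=
    fun z hz => ((hω' z hz).differentiableAt).differentiableWithinAt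
  have hω1 : deriv ω 0 = deriv (deriv f) 0 := by
    rw [(hω' 0 hmem).deriv, hW'def]
    simp only [hp0, hP'0, hq0v]
    norm_num
  -- second derivative of ω at 0
  have hq'0 : HasDerivAt q' (deriv q' 0) 0 := ((hq'a 0 hmem).differentiableAt).hasDerivAt
  have hP'0d : HasDerivAt P' (2 * q' 0) 0 := by
    have h := (hq' 0 hmem).add ((hasDerivAt_id' 0).mul hq'0)
    have e : q' 0 + (1 * q' 0 + 0 * deriv q' 0) = 2 * q' 0 := by ring
    rw [e] at h
    exact h
  have htop : HasDerivAt (fun z => P' z * (p z ^ 2 + 1))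
      (2 * q' 0 * (p 0 ^ 2 + 1) + P' 0 * (2 * p 0 * P' 0)) 0 := by
    have hsq : HasDerivAt (fun z => p z ^ 2 + 1) (2 * p 0 * P' 0) 0 := by
      have := ((hp' 0 hmem).pow 2).add_const 1
      norm_num at this
      exact this.add_const 1
    exact hP'0d.mul hsq
  have hbot : HasDerivAt (fun z => 2 * p z ^ 2) (2 * (2 * p 0 * P' 0)) 0 := by
    have := ((hp' 0 hmem).pow 2).const_mul 2
    norm_num at this
    convert this using 1 <;> ring
  have hbotne : (2:ℂ) * p 0 ^ 2 ≠ 0 := by rw [hp0]; norm_num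
  have hW'd := htop.div hbot hbotne
  have heq : deriv ω =ᶠ[𝓝 (0:ℂ)] W' :=
    Filter.eventually_of_mem hnb (fun z hz => (hω' z hz).deriv)
  have hω2 : deriv (deriv ω) 0 = 2 * q' 0 - q 0 ^ 2 := by
    rw [heq.deriv_eq, show deriv W' 0 = _ from hW'd.deriv]
    rw [hp0, hP'0]
    field_simp
    ring
  -- assemble
  obtain ⟨hu, hv⟩ := sp hωd hω0 hωb
  have hit2 : iteratedDeriv 2 f 0 = deriv (deriv f) 0 := by
    rw [iteratedDeriv_succ, iteratedDeriv_one]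
  have hit3 : iteratedDeriv 3 f 0 = deriv (deriv (deriv f)) 0 := by
    rw [iteratedDeriv_succ, iteratedDeriv_succ, iteratedDeriv_one]
  have ha2 : deriv (deriv f) 0 = 2 * a₂ := by rw [ha₂, hit2]; ring
  have ha3 : deriv (deriv (deriv f)) 0 = 6 * a₃ := by rw [ha₃, hit3]; ring
  have hc1 : deriv ω 0 = 2 * a₂ := by rw [hω1, ha2]
  have hc2 : deriv (deriv ω) 0 = 12 * a₃ - 12 * a₂ ^ 2 := by
    rw [hω2, hq'0v, hq0v, ha2, ha3]; ring
  rw [hc1] at hu hv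
  rw [hc2] at hv
  -- numeric part
  set u := ‖a₂‖ with hudef
  have hu' : 2 * u ≤ 1 := by
    rw [hudef]
    calc 2 * ‖a₂‖ = ‖2 * a₂‖ := by rw [norm_mul, Complex.norm_two]
    _ ≤ 1 := hu
  have hG1 : ‖Γ₁‖ = u / 2 := by
    rw [hΓ₁, hudef, neg_div, norm_neg, norm_div, Complex.norm_two]
  have habs2a : ‖2 * a₂‖ = 2 * u := by rw [norm_mul, Complex.norm_two, hudef]
  rw [habs2a] at hv
  have hG2lb : ‖Γ₂‖ ≥ u ^ 2 / 4 - ‖12 * a₃ - 12 * a₂ ^ 2‖ / 24 := by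
    have hid : Γ₂ = a₂ ^ 2 / 4 - (12 * a₃ - 12 * a₂ ^ 2) / 24 := by rw [hΓ₂]; ring
    have htri := norm_add_le (Γ₂) ((12 * a₃ - 12 * a₂ ^ 2) / 24)
    have he : Γ₂ + (12 * a₃ - 12 * a₂ ^ 2) / 24 = a₂ ^ 2 / 4 := by rw [hid]; ring
    rw [he] at htri
    have h1 : ‖a₂ ^ 2 / 4‖ = u ^ 2 / 4 := by
      rw [norm_div, norm_pow, hudef]
      norm_num
    have h2 : ‖(12 * a₃ - 12 * a₂ ^ 2) / 24‖
        = ‖12 * a₃ - 12 * a₂ ^ 2‖ / 24 := by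
      rw [norm_div]
      norm_num
    rw [h1, h2] at htri
    linarith
  have hun : 0 ≤ u := norm_nonneg a₂
  have hvn : 0 ≤ ‖12 * a₃ - 12 * a₂ ^ 2‖ := norm_nonneg _
  rw [hG1]
  nlinarith [hG2lb, hv, hu', sq_nonneg (u - 6/14), sq_nonneg u]
end

section
/- There exists a function f in the class C_☾ of convex functions associated with the lune whose first two inverse logarithmic coefficients Γ₁ = −a₂/2 and Γ₂ = −a₃/2 + 3a₂²/4 satisfy |Γ₂| − |Γ₁| = 1/12; hence the upper bound |Γ₂| − |Γ₁| ≤ 1/12 for C_☾ is sharp. -/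
open Complex Metric intervalIntegral

noncomputable def Complex.abs : AbsoluteValue ℂ ℝ where
  toFun := fun z => ‖z‖
  map_mul' := norm_mul
  nonneg' := norm_nonneg
  eq_zero' := fun _ => norm_eq_zero
  add_le' := norm_add_le

@[simp] lemma Complex.norm_eq_abs (z : ℂ) : ‖z‖ = Complex.abs z := rfl

@[simp] lemma Complex.abs_ofReal (r : ℝ) : Complex.abs r = |r| := Complex.norm_real r

@[simp] lemma Complex.abs_two : Complex.abs 2 = 2 := Complex.norm_two

noncomputable def sq1 (z : ℂ) : ℂ := Complex.exp (Complex.log (1 + z^4) / 2)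

lemma re_pos_aux {z : ℂ} (hz : z ∈ ball (0:ℂ) 1) : 0 < (1 + z^4).re := by
  have h1 : Complex.abs (z^4) < 1 := by
    have : Complex.abs z < 1 := by simpa using hz
    calc Complex.abs (z^4) = (Complex.abs z)^4 := by simp
    _ < 1 := by have h0 := Complex.abs.nonneg z; nlinarith [pow_lt_one₀ h0 this (by norm_num : (4:ℕ) ≠ 0)]
  have h2 : |(z^4).re| ≤ Complex.abs (z^4) := Complex.abs_re_le_norm _
  have : (1 + z^4).re = 1 + (z^4).re := by simp
  rw [this]
  cases' abs_le.mp h2 with hl hr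
  linarith

lemma ne_zero_aux {z : ℂ} (hz : z ∈ ball (0:ℂ) 1) : 1 + z^4 ≠ 0 := by
  intro h
  have := re_pos_aux hz
  rw [h] at this; simp at this

lemma sq1_sq {z : ℂ} (hz : z ∈ ball (0:ℂ) 1) : sq1 z ^ 2 = 1 + z^4 := by
  rw [sq1, ← Complex.exp_nat_mul]
  rw [show (2:ℕ) * (Complex.log (1 + z^4) / 2) = Complex.log (1 + z^4) by push_cast; ring]
  exact Complex.exp_log (ne_zero_aux hz)

lemma sq1_re_pos {z : ℂ} (hz : z ∈ ball (0:ℂ) 1) : 0 < (sq1 z).re := by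
  rw [sq1, Complex.exp_re]
  have harg : |Complex.arg (1 + z^4)| < Real.pi / 2 :=
    Complex.abs_arg_lt_pi_div_two_iff.mpr (Or.inl (re_pos_aux hz))
  have him : (Complex.log (1 + z^4) / 2).im = Complex.arg (1 + z^4) / 2 := by
    rw [Complex.div_im]; simp [Complex.log_im]; ring
  rw [him]
  have : |Complex.arg (1 + z^4) / 2| < Real.pi / 2 := by
    rw [abs_div]; norm_num
    have hpi := Real.pi_pos
    have := abs_nonneg (Complex.arg (1 + z^4))
    linarith
  have hcos : 0 < Real.cos (Complex.arg (1 + z^4) / 2) :=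
    Real.cos_pos_of_mem_Ioo (abs_lt.mp this |> fun h => ⟨h.1, h.2⟩)
  positivity

lemma sq1_zero : sq1 0 = 1 := by simp [sq1]

lemma sq1_diffAt {z : ℂ} (hz : z ∈ ball (0:ℂ) 1) : DifferentiableAt ℂ sq1 z := by
  apply DifferentiableAt.cexp
  apply DifferentiableAt.div_const
  exact (Complex.differentiableAt_log (by
    exact Complex.mem_slitPlane_iff.mpr (Or.inl (re_pos_aux hz)))).comp z
    (by fun_prop)

noncomputable def gfun (z : ℂ) : ℂ := z + z^3 / (1 + sq1 z)

lemma den_abs_ge {z : ℂ} (hz : z ∈ ball (0:ℂ) 1) : 1 ≤ Complex.abs (1 + sq1 z) := by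
  have h1 : (1:ℝ) ≤ (1 + sq1 z).re := by
    have := sq1_re_pos hz
    simp only [Complex.add_re, Complex.one_re]
    linarith
  calc (1:ℝ) ≤ (1 + sq1 z).re := h1
  _ ≤ |(1 + sq1 z).re| := le_abs_self _
  _ ≤ Complex.abs (1 + sq1 z) := Complex.abs_re_le_norm _

lemma den_ne {z : ℂ} (hz : z ∈ ball (0:ℂ) 1) : (1 + sq1 z) ≠ 0 := by
  intro h
  have := den_abs_ge hz
  rw [h] at this; simp at this; linarith

lemma gfun_zero : gfun 0 = 0 := by simp [gfun, sq1_zero]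

lemma gfun_diffAt {z : ℂ} (hz : z ∈ ball (0:ℂ) 1) : DifferentiableAt ℂ gfun z := by
  apply DifferentiableAt.add differentiableAt_id
  exact DifferentiableAt.div (by fun_prop) ((differentiableAt_const _).add (sq1_diffAt hz))
    (den_ne hz)

lemma gfun_bound {z : ℂ} (hz : z ∈ ball (0:ℂ) 1) :
    Complex.abs (gfun z) ≤ Complex.abs z + (Complex.abs z)^3 := by
  have h1 : Complex.abs (z^3 / (1 + sq1 z)) ≤ (Complex.abs z)^3 := by
    rw [map_div₀, map_pow]
    have := den_abs_ge hz
    rw [div_le_iff₀ (by linarith)]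
    nlinarith [pow_nonneg (Complex.abs.nonneg z) 3]
  calc Complex.abs (gfun z) ≤ Complex.abs z + Complex.abs (z^3 / (1 + sq1 z)) := by
        rw [gfun]; exact Complex.abs.add_le _ _
  _ ≤ Complex.abs z + (Complex.abs z)^3 := by linarith

lemma one_add_z_gfun {z : ℂ} (hz : z ∈ ball (0:ℂ) 1) : 1 + z * gfun z = z^2 + sq1 z := by
  have hd := den_ne hz
  have hs := sq1_sq hz
  have hfac : z^4 = (sq1 z - 1) * (1 + sq1 z) := by linear_combination -1 * hs
  rw [gfun]
  calc 1 + z * (z + z^3/(1 + sq1 z)) = 1 + z^2 + z^4/(1 + sq1 z) := by ring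
  _ = 1 + z^2 + ((sq1 z - 1)*(1 + sq1 z))/(1 + sq1 z) := by rw [hfac]
  _ = z^2 + sq1 z := by rw [mul_div_cancel_right₀ _ hd]; ring

noncomputable def P (φ : ℂ → ℂ) (z : ℂ) : ℂ := ∫ t in (0:ℝ)..1, z * φ ((t:ℂ) * z)

lemma P_zero (φ : ℂ → ℂ) : P φ 0 = 0 := by simp [P]

lemma hasDerivAt_P (φ : ℂ → ℂ) (hφ : DifferentiableOn ℂ φ (ball 0 1))
    {z : ℂ} (hz : z ∈ ball (0:ℂ) 1) : HasDerivAt (P φ) (φ z) z := by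
  have hφc : ContinuousOn φ (ball 0 1) := hφ.continuousOn
  have hφ' : DifferentiableOn ℂ (deriv φ) (ball 0 1) :=
    ((hφ.analyticOnNhd isOpen_ball).deriv).differentiableOn
  have hφ'c : ContinuousOn (deriv φ) (ball 0 1) := hφ'.continuousOn
  set r : ℝ := (1 + Complex.abs z) / 2 with hr
  have hzr : Complex.abs z < 1 := by simpa using hz
  have hr1 : r < 1 := by rw [hr]; linarith
  have hrz : Complex.abs z < r := by rw [hr]; linarith
  have hrpos : 0 < r := by positivity
  have hsub : closedBall (0:ℂ) r ⊆ ball 0 1 := closedBall_subset_ball hr1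
  -- bounds
  obtain ⟨C₁, hC₁⟩ := (isCompact_closedBall (0:ℂ) r).exists_bound_of_continuousOn
    (hφc.mono hsub)
  obtain ⟨C₂, hC₂⟩ := (isCompact_closedBall (0:ℂ) r).exists_bound_of_continuousOn
    (hφ'c.mono hsub)
  set ε : ℝ := r - Complex.abs z with hε
  have hεpos : 0 < ε := by rw [hε]; linarith
  have hmem : ∀ x ∈ ball z ε, ∀ t : ℝ, t ∈ Set.uIcc (0:ℝ) 1 → (t:ℂ) * x ∈ closedBall (0:ℂ) r := by
    intro x hx t ht
    have hd : Complex.abs (x - z) < ε := by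
      have := mem_ball.mp hx
      rwa [Complex.dist_eq] at this
    have hxr : Complex.abs x ≤ r := by
      have h1 := Complex.abs.add_le z (x - z)
      rw [show z + (x - z) = x by ring] at h1
      have : ε = r - Complex.abs z := rfl
      linarith
    rw [Set.uIcc_of_le (by norm_num : (0:ℝ) ≤ 1)] at ht
    have ht1 : Complex.abs (t:ℂ) ≤ 1 := by
      rw [Complex.abs_ofReal, abs_le]; exact ⟨by linarith [ht.1], ht.2⟩
    simp only [mem_closedBall, dist_zero_right, Complex.norm_eq_abs, map_mul]
    nlinarith [Complex.abs.nonneg (t:ℂ), Complex.abs.nonneg x]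
  have hmemI : ∀ x ∈ ball z ε, ∀ t : ℝ, t ∈ Set.uIoc (0:ℝ) 1 → (t:ℂ) * x ∈ closedBall (0:ℂ) r := by
    intro x hx t ht
    apply hmem x hx t
    rw [Set.uIoc_of_le (by norm_num : (0:ℝ) ≤ 1)] at ht
    rw [Set.uIcc_of_le (by norm_num : (0:ℝ) ≤ 1)]
    exact ⟨le_of_lt ht.1, ht.2⟩
  -- the result
  have key := intervalIntegral.hasDerivAt_integral_of_dominated_loc_of_deriv_le
    (F := fun x t => x * φ ((t:ℂ) * x))
    (F' := fun x t => 1 * φ ((t:ℂ) * x) + x * (deriv φ ((t:ℂ) * x) * (t:ℂ)))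
    (x₀ := z) (a := 0) (b := 1) (μ := MeasureTheory.volume)
    (bound := fun _ => |C₁| + (|C₁| + |C₂|)) (ball_mem_nhds z hεpos)
    ?_ ?_ ?_ ?_ ?_ ?_
  · have h2 : (∫ t in (0:ℝ)..1, (1 * φ ((t:ℂ) * z) + z * (deriv φ ((t:ℂ) * z) * (t:ℂ)))) = φ z := by
      have hder : ∀ t ∈ Set.uIcc (0:ℝ) 1,
          HasDerivAt (fun t : ℝ => (t:ℂ) * φ ((t:ℂ) * z))
            (1 * φ ((t:ℂ) * z) + z * (deriv φ ((t:ℂ) * z) * (t:ℂ))) t := by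
        intro t ht
        have htz : (t:ℂ) * z ∈ ball (0:ℂ) 1 := hsub (hmem z (mem_ball_self hεpos) t ht)
        have hout : HasDerivAt φ (deriv φ ((t:ℂ) * z)) ((t:ℂ) * z) :=
          (hφ.differentiableAt (isOpen_ball.mem_nhds htz)).hasDerivAt
        have hin : HasDerivAt (fun t : ℝ => (t:ℂ) * z) z t := by
          simpa using (Complex.ofRealCLM.hasDerivAt (x := t)).mul_const z
        have hB : HasDerivAt (fun t : ℝ => φ ((t:ℂ) * z)) (z • deriv φ ((t:ℂ) * z)) t :=
          HasDerivAt.scomp t hout hin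
        have hA : HasDerivAt (fun t : ℝ => ((t:ℝ):ℂ)) 1 t := by
          simpa using (hasDerivAt_id t).ofReal_comp
        have := hA.mul hB
        refine this.congr_deriv ?_
        simp [smul_eq_mul]
        ring
      have hint : IntervalIntegrable
          (fun t : ℝ => 1 * φ ((t:ℂ) * z) + z * (deriv φ ((t:ℂ) * z) * (t:ℂ)))
          MeasureTheory.volume 0 1 := by
        apply ContinuousOn.intervalIntegrable
        apply ContinuousOn.add
        · apply ContinuousOn.mul continuousOn_const
          apply hφc.comp (by fun_prop)
          intro t ht
          exact hsub (hmem z (mem_ball_self hεpos) t ht)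
        · apply ContinuousOn.mul continuousOn_const
          apply ContinuousOn.mul _ (by fun_prop)
          apply hφ'c.comp (by fun_prop)
          intro t ht
          exact hsub (hmem z (mem_ball_self hεpos) t ht)
      rw [intervalIntegral.integral_eq_sub_of_hasDerivAt hder hint]
      simp
    show HasDerivAt (fun w => ∫ t in (0:ℝ)..1, w * φ ((t:ℂ) * w)) (φ z) z
    rw [← h2]
    exact key.2
  · -- hF_meas
    filter_upwards [isOpen_ball.mem_nhds (mem_ball_self hεpos)] with x hx
    apply ContinuousOn.aestronglyMeasurable _ measurableSet_uIoc
    apply ContinuousOn.mul continuousOn_const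
    apply hφc.comp (by fun_prop)
    intro t ht
    exact hsub (hmemI x hx t ht)
  · -- hF_int
    apply ContinuousOn.intervalIntegrable
    apply ContinuousOn.mul continuousOn_const
    apply hφc.comp (by fun_prop)
    intro t ht
    exact hsub (hmem z (mem_ball_self hεpos) t ht)
  · -- hF'_meas
    apply ContinuousOn.aestronglyMeasurable _ measurableSet_uIoc
    apply ContinuousOn.add
    · apply ContinuousOn.mul continuousOn_const
      apply hφc.comp (by fun_prop)
      intro t ht
      exact hsub (hmemI z (mem_ball_self hεpos) t ht)
    · apply ContinuousOn.mul continuousOn_const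
      apply ContinuousOn.mul _ (by fun_prop)
      apply hφ'c.comp (by fun_prop)
      intro t ht
      exact hsub (hmemI z (mem_ball_self hεpos) t ht)
  · -- h_bound
    apply Filter.Eventually.of_forall
    intro t ht x hx
    have hmem1 : (t:ℂ) * x ∈ closedBall (0:ℂ) r := hmemI x hx t ht
    have ht1 : Complex.abs (t:ℂ) ≤ 1 := by
      rw [Set.uIoc_of_le (by norm_num : (0:ℝ) ≤ 1)] at ht
      rw [Complex.abs_ofReal, abs_le]; exact ⟨by linarith [ht.1.le], ht.2⟩
    have hx1 : Complex.abs x ≤ 1 := by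
      have := hsub (hmem x hx 1 (by simp))
      simp only [mem_ball, dist_zero_right, Complex.norm_eq_abs] at this
      simpa using this.le
    have hb1 : Complex.abs (φ ((t:ℂ) * x)) ≤ |C₁| := le_trans (hC₁ _ hmem1) (le_abs_self _)
    have hb2 : Complex.abs (deriv φ ((t:ℂ) * x)) ≤ |C₂| := le_trans (hC₂ _ hmem1) (le_abs_self _)
    simp only [norm_add_le, Complex.norm_eq_abs]
    calc Complex.abs (1 * φ ((t:ℂ) * x) + x * (deriv φ ((t:ℂ) * x) * (t:ℂ)))
        ≤ Complex.abs (1 * φ ((t:ℂ) * x)) + Complex.abs (x * (deriv φ ((t:ℂ) * x) * (t:ℂ))) :=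
          Complex.abs.add_le _ _
    _ ≤ |C₁| + (|C₁| + |C₂|) := by
        rw [map_mul, map_mul, map_mul, map_one, one_mul]
        have h0 := Complex.abs.nonneg (deriv φ ((t:ℂ) * x))
        have h0' := Complex.abs.nonneg x
        have h0'' := Complex.abs.nonneg ((t:ℂ))
        have hstep : Complex.abs x * (Complex.abs (deriv φ ((t:ℂ) * x)) * Complex.abs ((t:ℂ))) ≤ |C₂| := by
          have h1 : Complex.abs (deriv φ ((t:ℂ) * x)) * Complex.abs ((t:ℂ)) ≤ |C₂| * 1 :=
            mul_le_mul hb2 ht1 h0'' (abs_nonneg C₂)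
          have h2 : Complex.abs x * (Complex.abs (deriv φ ((t:ℂ) * x)) * Complex.abs ((t:ℂ))) ≤ 1 * (|C₂| * 1) :=
            mul_le_mul hx1 (by linarith) (mul_nonneg h0 h0'') zero_le_one
          linarith
        have := Complex.abs.nonneg (φ ((t:ℂ) * x))
        nlinarith [abs_nonneg C₁, abs_nonneg C₂]
  · -- bound integrable
    exact _root_.intervalIntegrable_const
  · -- h_diff
    apply Filter.Eventually.of_forall
    intro t ht x hx
    have htx : (t:ℂ) * x ∈ ball (0:ℂ) 1 := hsub (hmemI x hx t ht)
    have hout : HasDerivAt φ (deriv φ ((t:ℂ) * x)) ((t:ℂ) * x) :=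
      (hφ.differentiableAt (isOpen_ball.mem_nhds htx)).hasDerivAt
    have hin : HasDerivAt (fun y : ℂ => (t:ℂ) * y) (t:ℂ) x := by
      simpa using (hasDerivAt_id x).const_mul (t:ℂ)
    have hcomp : HasDerivAt (fun y : ℂ => φ ((t:ℂ) * y)) (deriv φ ((t:ℂ) * x) * (t:ℂ)) x :=
      HasDerivAt.comp x hout hin
    exact (hasDerivAt_id x).mul hcomp

noncomputable def Gf : ℂ → ℂ := P gfun

lemma gfun_diffOn : DifferentiableOn ℂ gfun (ball 0 1) :=
  fun z hz => (gfun_diffAt hz).differentiableWithinAt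

lemma Gf_hasDerivAt {z : ℂ} (hz : z ∈ ball (0:ℂ) 1) : HasDerivAt Gf (gfun z) z :=
  hasDerivAt_P gfun gfun_diffOn hz

lemma Gf_zero : Gf 0 = 0 := P_zero gfun

lemma ball_mul_mem {z : ℂ} (hz : z ∈ ball (0:ℂ) 1) {t : ℝ} (h0 : 0 ≤ t) (h1 : t ≤ 1) :
    (t:ℂ) * z ∈ ball (0:ℂ) 1 := by
  simp only [mem_ball, dist_zero_right, Complex.norm_eq_abs, map_mul, Complex.abs_ofReal] at *
  calc |t| * Complex.abs z ≤ 1 * Complex.abs z := by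
        apply mul_le_mul_of_nonneg_right _ (Complex.abs.nonneg z)
        rw [abs_le]; exact ⟨by linarith, h1⟩
  _ < 1 := by linarith

lemma Gf_bound {z : ℂ} (hz : z ∈ ball (0:ℂ) 1) : Complex.abs (Gf z) ≤ 3/4 := by
  have hz1 : Complex.abs z < 1 := by simpa using hz
  have h := intervalIntegral.norm_integral_le_of_norm_le
    (f := fun t : ℝ => z * gfun ((t:ℂ) * z)) (g := fun t : ℝ => t + t^3)
    (μ := MeasureTheory.volume) (a := 0) (b := 1) (by norm_num)
    ?_ ?_
  · have hval : (∫ t in (0:ℝ)..1, (t + t^3)) = 3/4 := by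
      rw [intervalIntegral.integral_add (by apply ContinuousOn.intervalIntegrable; fun_prop)
        (by apply ContinuousOn.intervalIntegrable; fun_prop)]
      simp [integral_pow]
      norm_num
    rw [hval] at h
    exact h
  · apply Filter.Eventually.of_forall
    intro t ht
    have h0 : 0 ≤ t := ht.1.le
    have h1 : t ≤ 1 := ht.2
    have hmem := ball_mul_mem hz h0 h1
    have hb := gfun_bound hmem
    have habs : Complex.abs ((t:ℂ) * z) = t * Complex.abs z := by
      rw [map_mul, Complex.abs_ofReal, _root_.abs_of_nonneg h0]
    rw [habs] at hb
    simp only [Complex.norm_eq_abs, map_mul]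
    have h2 := Complex.abs.nonneg z
    calc Complex.abs z * Complex.abs (gfun ((t:ℂ) * z))
        ≤ Complex.abs z * (t * Complex.abs z + (t * Complex.abs z)^3) :=
          mul_le_mul_of_nonneg_left hb h2
    _ ≤ t + t^3 := by
        have e1 : (Complex.abs z)^2 ≤ 1 := pow_le_one₀ h2 hz1.le
        have e2 : (Complex.abs z)^4 ≤ 1 := pow_le_one₀ h2 hz1.le
        have e3 : t * (Complex.abs z)^2 ≤ t := by nlinarith
        have e4 : t^3 * (Complex.abs z)^4 ≤ t^3 := by nlinarith [pow_nonneg h0 3]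
        nlinarith
  · apply ContinuousOn.intervalIntegrable; fun_prop

noncomputable def ff : ℂ → ℂ := P (fun z => Complex.exp (Gf z))

lemma expG_diffOn : DifferentiableOn ℂ (fun z => Complex.exp (Gf z)) (ball 0 1) :=
  fun z hz => ((Gf_hasDerivAt hz).cexp).differentiableAt.differentiableWithinAt

lemma ff_hasDerivAt {z : ℂ} (hz : z ∈ ball (0:ℂ) 1) :
    HasDerivAt ff (Complex.exp (Gf z)) z :=
  hasDerivAt_P _ expG_diffOn hz

lemma ff_zero : ff 0 = 0 := P_zero _

lemma ff_deriv {z : ℂ} (hz : z ∈ ball (0:ℂ) 1) : deriv ff z = Complex.exp (Gf z) :=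
  (ff_hasDerivAt hz).deriv

lemma ff_deriv_zero : deriv ff 0 = 1 := by
  rw [ff_deriv (mem_ball_self (by norm_num)), Gf_zero, Complex.exp_zero]

lemma exp_re_lower {w : ℂ} (hw : Complex.abs w ≤ 3/4) :
    Real.exp (-(3/4)) * Real.cos (3/4) ≤ (Complex.exp w).re := by
  rw [Complex.exp_re]
  have hre : |w.re| ≤ 3/4 := le_trans (Complex.abs_re_le_norm w) hw
  have him : |w.im| ≤ 3/4 := le_trans (Complex.abs_im_le_norm w) hw
  have h1 : Real.exp (-(3/4)) ≤ Real.exp w.re := by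
    apply Real.exp_le_exp.mpr
    cases' abs_le.mp hre with h _
    linarith
  have hpi : (3:ℝ)/4 ≤ Real.pi := by linarith [Real.pi_gt_three]
  have h2 : Real.cos (3/4) ≤ Real.cos w.im := by
    rw [← Real.cos_abs w.im]
    exact Real.cos_le_cos_of_nonneg_of_le_pi (abs_nonneg _) hpi him
  have hcpos : 0 < Real.cos (3/4) := by
    apply Real.cos_pos_of_mem_Ioo
    constructor
    · nlinarith [Real.pi_gt_three]
    · nlinarith [Real.pi_gt_three]
  have hepos : 0 < Real.exp (-(3/4)) := Real.exp_pos _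
  nlinarith [Real.exp_pos w.re]

lemma exp_re_pos {z : ℂ} (hz : z ∈ ball (0:ℂ) 1) : 0 < (Complex.exp (Gf z)).re := by
  have := exp_re_lower (Gf_bound hz)
  have hcpos : 0 < Real.cos (3/4) := by
    apply Real.cos_pos_of_mem_Ioo
    constructor
    · nlinarith [Real.pi_gt_three]
    · nlinarith [Real.pi_gt_three]
  nlinarith [Real.exp_pos (-(3/4):ℝ)]

lemma ff_injOn : Set.InjOn ff (ball (0:ℂ) 1) := by
  intro z₁ h₁ z₂ h₂ heq
  by_contra hne
  set seg : ℝ → ℂ := fun t => z₁ + (t:ℂ) * (z₂ - z₁) with hseg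
  have hsegmem : ∀ t ∈ Set.uIcc (0:ℝ) 1, seg t ∈ ball (0:ℂ) 1 := by
    intro t ht
    rw [Set.uIcc_of_le (by norm_num : (0:ℝ) ≤ 1)] at ht
    have hmem := (convex_ball (0:ℂ) 1) h₁ h₂ (by linarith [ht.2] : (0:ℝ) ≤ 1 - t) ht.1 (by ring)
    have heqv : seg t = (1 - t) • z₁ + t • z₂ := by
      rw [hseg]
      simp only [Complex.real_smul]
      push_cast
      ring
    rw [heqv]
    exact hmem
  have hder : ∀ t ∈ Set.uIcc (0:ℝ) 1,
      HasDerivAt (fun t : ℝ => ff (seg t)) ((z₂ - z₁) • Complex.exp (Gf (seg t))) t := by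
    intro t ht
    have hout : HasDerivAt ff (Complex.exp (Gf (seg t))) (seg t) :=
      ff_hasDerivAt (hsegmem t ht)
    have hin : HasDerivAt seg (z₂ - z₁) t := by
      rw [hseg]
      simpa using ((Complex.ofRealCLM.hasDerivAt (x := t)).mul_const (z₂ - z₁)).const_add z₁
    exact HasDerivAt.scomp t hout hin
  have hGcont : ContinuousOn Gf (ball (0:ℂ) 1) :=
    fun z hz => ((Gf_hasDerivAt hz).differentiableAt.continuousAt).continuousWithinAt
  have hsegcont : Continuous seg := by rw [hseg]; fun_prop
  have hcont : ContinuousOn (fun t : ℝ => Complex.exp (Gf (seg t))) (Set.uIcc (0:ℝ) 1) := by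
    apply Continuous.comp_continuousOn Complex.continuous_exp
    exact hGcont.comp hsegcont.continuousOn hsegmem
  have hint : IntervalIntegrable (fun t : ℝ => (z₂ - z₁) • Complex.exp (Gf (seg t)))
      MeasureTheory.volume 0 1 :=
    (hcont.const_smul (z₂ - z₁)).intervalIntegrable
  have hftc := intervalIntegral.integral_eq_sub_of_hasDerivAt hder hint
  have hseg1 : seg 1 = z₂ := by rw [hseg]; simp
  have hseg0 : seg 0 = z₁ := by rw [hseg]; simp
  rw [hseg1, hseg0, heq, sub_self] at hftc
  rw [intervalIntegral.integral_smul] at hftc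
  have hz12 : z₂ - z₁ ≠ 0 := sub_ne_zero.mpr (fun h => hne h.symm)
  have hI : (∫ t in (0:ℝ)..1, Complex.exp (Gf (seg t))) = 0 := by
    rcases smul_eq_zero.mp hftc with h | h
    · exact absurd h hz12
    · exact h
  -- real part
  have hintexp : IntervalIntegrable (fun t : ℝ => Complex.exp (Gf (seg t)))
      MeasureTheory.volume 0 1 := hcont.intervalIntegrable
  have hre : (∫ t in (0:ℝ)..1, (Complex.exp (Gf (seg t))).re)
      = (∫ t in (0:ℝ)..1, Complex.exp (Gf (seg t))).re := by
    rw [intervalIntegral.integral_of_le (by norm_num : (0:ℝ) ≤ 1),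
      intervalIntegral.integral_of_le (by norm_num : (0:ℝ) ≤ 1)]
    simpa [RCLike.re_to_complex] using integral_re hintexp.1
  have hlow : Real.exp (-(3/4)) * Real.cos (3/4) ≤ ∫ t in (0:ℝ)..1, (Complex.exp (Gf (seg t))).re := by
    have := intervalIntegral.integral_mono_on (a := (0:ℝ)) (b := 1)
      (μ := MeasureTheory.volume)
      (f := fun _ : ℝ => Real.exp (-(3/4)) * Real.cos (3/4))
      (g := fun t : ℝ => (Complex.exp (Gf (seg t))).re)
      (by norm_num) intervalIntegrable_const
      (by
        apply ContinuousOn.intervalIntegrable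
        exact (Complex.continuous_re.comp_continuousOn
          (Complex.continuous_exp.comp_continuousOn
            (hGcont.comp hsegcont.continuousOn hsegmem)))
        )
      (by
        intro t ht
        apply exp_re_lower
        apply Gf_bound
        apply hsegmem
        rw [Set.uIcc_of_le (by norm_num : (0:ℝ) ≤ 1)]
        exact ht)
    simpa using this
  rw [hre, hI] at hlow
  simp at hlow
  have hcpos : 0 < Real.cos (3/4) := by
    apply Real.cos_pos_of_mem_Ioo
    constructor
    · nlinarith [Real.pi_gt_three]
    · nlinarith [Real.pi_gt_three]
  nlinarith [Real.exp_pos (-(3/4):ℝ)]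

lemma zero_mem : (0:ℂ) ∈ ball (0:ℂ) 1 := mem_ball_self (by norm_num)

lemma ff_deriv2 {z : ℂ} (hz : z ∈ ball (0:ℂ) 1) :
    deriv (deriv ff) z = Complex.exp (Gf z) * gfun z := by
  have hev : deriv ff =ᶠ[nhds z] fun w => Complex.exp (Gf w) :=
    Filter.eventuallyEq_of_mem (isOpen_ball.mem_nhds hz) (fun w hw => ff_deriv hw)
  rw [hev.deriv_eq]
  exact ((Gf_hasDerivAt hz).cexp).deriv

lemma gfun_hasDerivAt_zero : HasDerivAt gfun 1 0 := by
  have h1 : HasDerivAt (fun z : ℂ => z) 1 0 := hasDerivAt_id 0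
  have hden : DifferentiableAt ℂ (fun z : ℂ => 1 + sq1 z) 0 :=
    (differentiableAt_const _).add (sq1_diffAt zero_mem)
  have h2 : HasDerivAt (fun z : ℂ => z^3 / (1 + sq1 z))
      ((3 * 0^2 * (1 + sq1 0) - 0^3 * deriv (fun z : ℂ => 1 + sq1 z) 0) / (1 + sq1 0)^2) 0 := by
    exact HasDerivAt.div (by simpa using hasDerivAt_pow 3 (0:ℂ)) hden.hasDerivAt (den_ne zero_mem)
  have h3 := h1.add h2
  refine h3.congr_deriv ?_
  simp [sq1_zero]

lemma ff_iteratedDeriv2 : iteratedDeriv 2 ff 0 = 0 := by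
  rw [show (2:ℕ) = 1 + 1 by rfl, iteratedDeriv_succ, iteratedDeriv_one]
  rw [ff_deriv2 zero_mem, gfun_zero, mul_zero]

lemma ff_iteratedDeriv3 : iteratedDeriv 3 ff 0 = 1 := by
  rw [show (3:ℕ) = 2 + 1 by rfl, iteratedDeriv_succ,
    show (2:ℕ) = 1 + 1 by rfl, iteratedDeriv_succ, iteratedDeriv_one]
  have hev : deriv (deriv ff) =ᶠ[nhds 0] fun w => Complex.exp (Gf w) * gfun w :=
    Filter.eventuallyEq_of_mem (isOpen_ball.mem_nhds zero_mem) (fun w hw => ff_deriv2 hw)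
  rw [hev.deriv_eq]
  have h := ((Gf_hasDerivAt zero_mem).cexp).mul gfun_hasDerivAt_zero
  rw [show (fun w => Complex.exp (Gf w) * gfun w) = (fun x => Complex.exp (Gf x)) * gfun from rfl, h.deriv]
  simp [gfun_zero, Gf_zero]

/-- There exists a function `f` in the class `C_☾` of convex functions associated with the
lune whose first two inverse logarithmic coefficients `Γ₁ = -a₂/2` and `Γ₂ = -a₃/2 + 3a₂²/4`
satisfy `|Γ₂| - |Γ₁| = 1/12`; hence the upper bound `|Γ₂| - |Γ₁| ≤ 1/12` for `C_☾` is
sharp. -/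
theorem exists_convex_lune_abs_Gamma2_sub_abs_Gamma1_eq_one_twelfth :
    ∃ f : ℂ → ℂ,
      DifferentiableOn ℂ f (ball (0 : ℂ) 1) ∧
      f 0 = 0 ∧ deriv f 0 = 1 ∧
      Set.InjOn f (ball (0 : ℂ) 1) ∧
      (∀ z ∈ ball (0 : ℂ) 1,
        deriv f z ≠ 0 ∧
        ‖(1 + z * deriv (deriv f) z / deriv f z) ^ 2 - 1‖
          ≤ 2 * ‖1 + z * deriv (deriv f) z / deriv f z‖) ∧
      ‖-(iteratedDeriv 3 f 0 / 6) / 2 + 3 * (iteratedDeriv 2 f 0 / 2) ^ 2 / 4‖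
        - ‖-(iteratedDeriv 2 f 0 / 2) / 2‖ = 1 / 12 := by
  refine ⟨ff, ?_, ff_zero, ff_deriv_zero, ff_injOn, ?_, ?_⟩
  · exact fun z hz => (ff_hasDerivAt hz).differentiableAt.differentiableWithinAt
  · intro z hz
    have hde : deriv ff z = Complex.exp (Gf z) := ff_deriv hz
    have hne : deriv ff z ≠ 0 := by rw [hde]; exact Complex.exp_ne_zero _
    refine ⟨hne, ?_⟩
    have hw : 1 + z * deriv (deriv ff) z / deriv ff z = z^2 + sq1 z := by
      rw [ff_deriv2 hz, hde, mul_comm (Complex.exp (Gf z)) (gfun z),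
        mul_div_assoc, mul_div_assoc, div_self (Complex.exp_ne_zero _), mul_one,
        one_add_z_gfun hz]
    rw [hw]
    have hsq : (z^2 + sq1 z)^2 - 1 = 2 * z^2 * (z^2 + sq1 z) := by
      linear_combination sq1_sq hz
    rw [hsq]
    rw [Complex.norm_eq_abs, Complex.norm_eq_abs, map_mul, map_mul, map_pow, Complex.abs_two]
    have hz1 : Complex.abs z < 1 := by simpa using hz
    have h2 : (Complex.abs z)^2 ≤ 1 := pow_le_one₀ (Complex.abs.nonneg z) hz1.le
    have h3 := Complex.abs.nonneg (z^2 + sq1 z)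
    nlinarith
  · rw [ff_iteratedDeriv2, ff_iteratedDeriv3]
    have h : (-((1:ℂ)/6)/2 + 3 * ((0:ℂ)/2)^2/4) = ((-(1/12:ℝ)):ℂ) := by norm_num
    have h2 : (-((0:ℂ)/2)/2) = ((0:ℝ):ℂ) := by norm_num
    rw [h, h2, ← Complex.ofReal_neg, Complex.norm_real, Complex.norm_real]
    norm_num
end
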